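/- arXiv:1409.6739 — 13 statements merged into one kernel-verified Lean document; each statement's English description precedes it below -/
import Mathlib

section
/- Let (k, u, F, C, d) be a hard uniform capacitated k-median instance with |C| ≤ u·|F|, and let C₀ be the minimum connection cost of the instance when all facilities in F are open, i.e., the minimum of Σ_{j∈C} d(j, τ(j)) over all assignments τ : C → F with |τ⁻¹(i)| ≤ u for every i ∈ F. Suppose there is a solution of cost C' to the soft uniform capacitated k-median instance (k, u, C, C, d): a multiset S of at most k facility locations chosen from C together with an assignment of each client to an open facility so that each open facility serves at most u clients, with total connection cost C'. Then there exists a set F' ⊆ F with |F'| ≤ k and an assignment σ : C → F' with |σ⁻¹(i)| ≤ u for every i ∈ F' whose cost Σ_{j∈C} d(j, σ(j)) is at most C₀ + 2C'. -/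
/-!
Let `τ` be an optimal assignment of the clients to `F`, and let client `j` sit at the soft
location `σs j`. Reassigning the clients to `F` so that `j` goes to `ρ j` costs at most
`d(j, σs j) + d(σs j, ρ j)` per client, so it suffices to find a capacity-feasible `ρ` with
`∑ d(σs j, ρ j) ≤ ∑ d(σs j, τ j) ≤ C' + C₀` that uses at most `∑ opn` facilities.

Take `ρ` of minimal cost `∑ d(σs j, ρ j)` and, among those, of maximal `∑ load²`. Join two
facilities when they serve clients of a common soft location. Along a path between two
facilities `f ≠ g` one can move a client from `f` towards `g`, or from `g` towards `f`, with
opposite changes of cost, while `∑ load²` grows by `4` in total. So no component contains two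
facilities with free capacity, and a component whose clients come from the locations `S` has
at most `∑_{i ∈ S} opn i` facilities, since these locations hold at most `u * ∑_{i ∈ S} opn i`
clients.
-/

open Finset Function

lemma card_filter_coe_sort {X : Type*} (C : Finset X) (p : X → Prop) [DecidablePred p] :
    #{j : C | p j} = #(C.filter p) := by
  rw [card_filter, card_filter, sum_coe_sort C fun j => if p j then 1 else 0]

lemma sum_dist_le_of_sum_dist_le {ι X : Type*} [Fintype ι] [PseudoMetricSpace X]
    {p s ρ τ : ι → X} (h : ∑ j, dist (s j) (ρ j) ≤ ∑ j, dist (s j) (τ j)) :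
    ∑ j, dist (p j) (ρ j) ≤ ∑ j, dist (p j) (τ j) + 2 * ∑ j, dist (p j) (s j) := by
  have hρ : ∑ j, dist (p j) (ρ j) ≤ ∑ j, dist (p j) (s j) + ∑ j, dist (s j) (ρ j) := by
    rw [← sum_add_distrib]
    exact sum_le_sum fun j _ => dist_triangle _ _ _
  have hτ : ∑ j, dist (s j) (τ j) ≤ ∑ j, dist (p j) (s j) + ∑ j, dist (p j) (τ j) := by
    rw [← sum_add_distrib]
    exact sum_le_sum fun j _ => dist_triangle_left _ _ _
  linarith

namespace UniformCKM

variable {ι R X : Type*}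

def shareGraph (loc : ι → R) (ρ : ι → X) : SimpleGraph X :=
  SimpleGraph.fromRel fun f g => ∃ j j', loc j = loc j' ∧ ρ j = f ∧ ρ j' = g

lemma exists_of_shareGraph_adj {loc : ι → R} {ρ : ι → X} {f g : X}
    (h : (shareGraph loc ρ).Adj f g) : ∃ j j', loc j = loc j' ∧ ρ j = f ∧ ρ j' = g := by
  obtain ⟨-, ⟨j, j', hloc, hj, hj'⟩ | ⟨j, j', hloc, hj, hj'⟩⟩ :=
    (SimpleGraph.fromRel_adj _ _ _).1 h
  · exact ⟨j, j', hloc, hj, hj'⟩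
  · exact ⟨j', j, hloc.symm, hj', hj⟩

lemma shareGraph_reachable_of_loc_eq {loc : ι → R} (ρ : ι → X) {j j' : ι} (h : loc j = loc j') :
    (shareGraph loc ρ).Reachable (ρ j) (ρ j') := by
  rcases eq_or_ne (ρ j) (ρ j') with hρ | hρ
  · exact hρ ▸ SimpleGraph.Reachable.refl _
  · exact ((SimpleGraph.fromRel_adj _ _ _).2 ⟨hρ, Or.inl ⟨j, j', h, rfl, rfl⟩⟩).reachable

lemma card_eq_sum_card_fiber_of_saturated {Y : Type*} [Fintype ι] [DecidableEq Y] {φ : ι → Y}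
    {T : Finset ι} (hT : ∀ j ∈ T, ∀ j', φ j' = φ j → j' ∈ T) :
    #T = ∑ y ∈ T.image φ, #{j | φ j = y} := by
  rw [card_eq_sum_card_fiberwise fun j hj => mem_image_of_mem φ hj]
  refine sum_congr rfl fun y hy => congr_arg card ?_
  obtain ⟨j₀, hj₀, rfl⟩ := mem_image.1 hy
  ext j
  simp only [mem_filter, mem_univ, true_and, and_iff_right_iff_imp]
  exact fun hj => hT j₀ hj₀ j hj

lemma mul_card_sub_one_add_one_le_sum {α : Type*} {s : Finset α} {ℓ : α → ℕ} {u : ℕ}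
    (hs : s.Nonempty) (hpos : ∀ x ∈ s, 0 < ℓ x)
    (hfull : ∀ x ∈ s, ∀ y ∈ s, ℓ x < u → ℓ y < u → x = y) :
    u * (#s - 1) + 1 ≤ ∑ x ∈ s, ℓ x := by
  classical
  obtain ⟨x₀, hx₀, hrest⟩ : ∃ x₀ ∈ s, ∀ y ∈ s.erase x₀, u ≤ ℓ y := by
    by_cases h : ∃ x ∈ s, ℓ x < u
    · obtain ⟨x₀, hx₀, hlt⟩ := h
      refine ⟨x₀, hx₀, fun y hy => not_lt.1 fun hy' => ?_⟩
      exact ne_of_mem_erase hy (hfull y (mem_of_mem_erase hy) x₀ hx₀ hy' hlt)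
    · push Not at h
      obtain ⟨x₀, hx₀⟩ := hs
      exact ⟨x₀, hx₀, fun y hy => h y (mem_of_mem_erase hy)⟩
  have hbulk : (#s - 1) * u ≤ ∑ y ∈ s.erase x₀, ℓ y := by
    simpa [card_erase_of_mem hx₀] using card_nsmul_le_sum _ _ _ hrest
  rw [← add_sum_erase s ℓ hx₀, mul_comm]
  have := hpos x₀ hx₀
  omega

variable [Fintype ι]

def cost (c : R → X → ℝ) (loc : ι → R) (ρ : ι → X) : ℝ := ∑ j, c (loc j) (ρ j)

lemma cost_update [DecidableEq ι] (c : R → X → ℝ) (loc : ι → R) (ρ : ι → X) (j : ι) (y : X) :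
    cost c loc (update ρ j y) = cost c loc ρ + (c (loc j) y - c (loc j) (ρ j)) := by
  simp only [cost]
  rw [← add_sum_erase _ _ (mem_univ j), ← add_sum_erase _ _ (mem_univ j), update_self,
    sum_congr rfl fun k hk => by rw [update_of_ne (ne_of_mem_erase hk)]]
  ring

variable [DecidableEq X]

def load (ρ : ι → X) (x : X) : ℕ := #{j | ρ j = x}

def IsFeasible (F : Finset X) (u : ℕ) (ρ : ι → X) : Prop :=
  (∀ j, ρ j ∈ F) ∧ ∀ x ∈ F, load ρ x ≤ u

def energy (F : Finset X) (ρ : ι → X) : ℕ := ∑ x ∈ F, load ρ x ^ 2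

-- Stated additively to avoid truncated subtraction in `ℕ`.
def MovesUnit (ρ ρ' : ι → X) (f g : X) : Prop :=
  ∀ x, load ρ' x + (if f = x then 1 else 0) = load ρ x + (if g = x then 1 else 0)

lemma movesUnit_update [DecidableEq ι] (ρ : ι → X) (j : ι) (y : X) :
    MovesUnit ρ (update ρ j y) (ρ j) y := by
  intro x
  simp only [load, card_filter]
  rw [← add_sum_erase _ _ (mem_univ j), ← add_sum_erase _ _ (mem_univ j), update_self,
    sum_congr rfl fun k hk => by rw [update_of_ne (ne_of_mem_erase hk)]]
  ring

lemma MovesUnit.trans {ρ ρ₁ ρ₂ : ι → X} {f g h : X} (h₁ : MovesUnit ρ ρ₁ f g)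
    (h₂ : MovesUnit ρ₁ ρ₂ g h) : MovesUnit ρ ρ₂ f h := by
  intro x
  have := h₁ x
  have := h₂ x
  omega

lemma MovesUnit.isFeasible {F : Finset X} {u : ℕ} {ρ ρ' : ι → X} {f g : X}
    (h : MovesUnit ρ ρ' f g) (hρ : IsFeasible F u ρ) (hg : g ∈ F) (hgu : load ρ g < u) :
    IsFeasible F u ρ' := by
  refine ⟨fun j => ?_, fun x hx => ?_⟩
  · have hpos : 0 < load ρ' (ρ' j) := card_pos.2 ⟨j, by simp⟩
    have hj := h (ρ' j)
    by_cases hgj : g = ρ' j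
    · exact hgj ▸ hg
    · rw [if_neg hgj] at hj
      obtain ⟨k, hk⟩ := card_pos.1 (show 0 < load ρ (ρ' j) by omega)
      exact (mem_filter.1 hk).2 ▸ hρ.1 k
  · have hx' := h x
    have := hρ.2 x hx
    split_ifs at hx' <;> subst_vars <;> omega

lemma energy_add_energy {F : Finset X} {ρ ρ₁ ρ₂ : ι → X} {f g : X} (h₁ : MovesUnit ρ ρ₁ f g)
    (h₂ : MovesUnit ρ ρ₂ g f) (hfg : f ≠ g) (hf : f ∈ F) (hg : g ∈ F) :
    energy F ρ₁ + energy F ρ₂ = 2 * energy F ρ + 4 := by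
  have hpt : ∀ x, load ρ₁ x ^ 2 + load ρ₂ x ^ 2
      = 2 * load ρ x ^ 2 + 2 * ((if f = x then 1 else 0) + (if g = x then 1 else 0)) := by
    intro x
    have e₁ := h₁ x
    have e₂ := h₂ x
    split_ifs at * <;> subst_vars <;> first | exact absurd rfl hfg | nlinarith
  simp only [energy]
  rw [← sum_add_distrib, sum_congr rfl fun x _ => hpt x, sum_add_distrib, ← mul_sum, ← mul_sum,
    sum_add_distrib, sum_ite_eq, sum_ite_eq, if_pos hf, if_pos hg]
  ring

lemma exists_shift_of_isPath [DecidableEq ι] (c : R → X → ℝ) (loc : ι → R) (ρ : ι → X)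
    {f g : X} (w : (shareGraph loc ρ).Walk f g) (hw : w.IsPath) :
    ∃ ρ₁ ρ₂ : ι → X, MovesUnit ρ ρ₁ f g ∧ MovesUnit ρ ρ₂ g f ∧
      cost c loc ρ₁ + cost c loc ρ₂ = 2 * cost c loc ρ ∧
      -- invariants of the induction: the clients witnessing the next edge have not moved yet
      (∀ j, ρ j ∉ w.support → ρ₁ j = ρ j ∧ ρ₂ j = ρ j) ∧ ∀ j, ρ j = f → ρ₂ j = f := by
  induction w with
  | nil => exact ⟨ρ, ρ, fun _ => rfl, fun _ => rfl, by ring, fun _ _ => ⟨rfl, rfl⟩, fun _ h => h⟩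
  | @cons f h g hadj w ih =>
    obtain ⟨hw, hfw⟩ := (SimpleGraph.Walk.cons_isPath_iff hadj w).1 hw
    obtain ⟨ρ₁, ρ₂, h₁, h₂, hcost, hoff, hstart⟩ := ih hw
    obtain ⟨j, j', hloc, hj, hj'⟩ := exists_of_shareGraph_adj hadj
    have hρ₁j : ρ₁ j = f := ((hoff j (hj ▸ hfw)).1).trans hj
    have hρ₂j' : ρ₂ j' = h := hstart j' hj'
    refine ⟨update ρ₁ j h, update ρ₂ j' f, ?_, ?_, ?_, fun k hk => ?_, fun k hk => ?_⟩
    · intro x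
      have := h₁ x
      have := hρ₁j ▸ movesUnit_update ρ₁ j h x
      omega
    · exact h₂.trans (hρ₂j' ▸ movesUnit_update ρ₂ j' f)
    · rw [cost_update, cost_update, hρ₁j, hρ₂j', ← hloc]
      linarith
    · rw [SimpleGraph.Walk.support_cons, List.mem_cons, not_or] at hk
      have hkj : k ≠ j := by rintro rfl; exact hk.1 hj
      have hkj' : k ≠ j' := by rintro rfl; exact hk.2 (hj' ▸ w.start_mem_support)
      rw [update_of_ne hkj, update_of_ne hkj']
      exact hoff k hk.2
    · by_cases hkj' : k = j'
      · rw [hkj', update_self]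
      · rw [update_of_ne hkj', (hoff k (hk ▸ hfw)).2, hk]

def rank (c : R → X → ℝ) (loc : ι → R) (F : Finset X) (ρ : ι → X) : ℝ ×ₗ ℤ :=
  toLex (cost c loc ρ, -(energy F ρ : ℤ))

lemma exists_isFeasible_rank_le (c : R → X → ℝ) (loc : ι → R) {F : Finset X} {u : ℕ}
    {τ : ι → X} (hτ : IsFeasible F u τ) :
    ∃ ρ, IsFeasible F u ρ ∧ ∀ ρ', IsFeasible F u ρ' → rank c loc F ρ ≤ rank c loc F ρ' := by
  classical
  have hmem : ∀ ρ', IsFeasible F u ρ' →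
      ρ' ∈ (Fintype.piFinset fun _ : ι => F).filter (IsFeasible F u) :=
    fun ρ' h => mem_filter.2 ⟨Fintype.mem_piFinset.2 h.1, h⟩
  obtain ⟨ρ, hρ, hmin⟩ := exists_min_image _ (rank c loc F) ⟨τ, hmem τ hτ⟩
  exact ⟨ρ, (mem_filter.1 hρ).2, fun ρ' h => hmin ρ' (hmem ρ' h)⟩

lemma eq_of_shareGraph_reachable {c : R → X → ℝ} {loc : ι → R} {F : Finset X} {u : ℕ}
    {ρ : ι → X} (hρ : IsFeasible F u ρ)
    (hmin : ∀ ρ', IsFeasible F u ρ' → rank c loc F ρ ≤ rank c loc F ρ') {f g : X}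
    (hf : f ∈ F) (hg : g ∈ F) (hreach : (shareGraph loc ρ).Reachable f g)
    (hfu : load ρ f < u) (hgu : load ρ g < u) : f = g := by
  classical
  by_contra hfg
  obtain ⟨w, hw⟩ := hreach.exists_isPath
  obtain ⟨ρ₁, ρ₂, h₁, h₂, hcost, -⟩ := exists_shift_of_isPath c loc ρ w hw
  have hr₁ := hmin ρ₁ (h₁.isFeasible hρ hg hgu)
  have hr₂ := hmin ρ₂ (h₂.isFeasible hρ hf hfu)
  have hc₁ := Prod.Lex.monotone_fst _ _ hr₁
  have hc₂ := Prod.Lex.monotone_fst _ _ hr₂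
  have henergy := energy_add_energy h₁ h₂ hfg hf hg
  -- both shifts tie with `ρ` in cost, so neither may raise the energy, yet together they do
  simp only [rank, ofLex_toLex] at hc₁ hc₂
  rw [rank, rank, Prod.Lex.toLex_le_toLex] at hr₁ hr₂
  rcases hr₁ with hr₁ | ⟨-, hr₁⟩
  · linarith
  rcases hr₂ with hr₂ | ⟨-, hr₂⟩
  · linarith
  simp only at hr₁ hr₂
  omega

lemma card_image_le_sum_of_saturated {loc : ι → R} [DecidableEq R] {ρ : ι → X} {u : ℕ}
    (m : R → ℕ) (T : Finset ι) (hTρ : ∀ j ∈ T, ∀ j', ρ j' = ρ j → j' ∈ T)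
    (hTloc : ∀ j ∈ T, ∀ j', loc j' = loc j → j' ∈ T)
    (hm : ∀ r ∈ T.image loc, #{j | loc j = r} ≤ u * m r)
    (hfull : ∀ j ∈ T, ∀ j' ∈ T, load ρ (ρ j) < u → load ρ (ρ j') < u → ρ j = ρ j') :
    #(T.image ρ) ≤ ∑ r ∈ T.image loc, m r := by
  rcases T.eq_empty_or_nonempty with rfl | hT
  · simp
  have hlower : u * (#(T.image ρ) - 1) + 1 ≤ #T := by
    rw [card_eq_sum_card_fiber_of_saturated hTρ]
    refine mul_card_sub_one_add_one_le_sum (hT.image ρ) ?_ ?_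
    · simp only [mem_image]
      rintro _ ⟨j, -, rfl⟩
      exact card_pos.2 ⟨j, by simp⟩
    · simp only [mem_image]
      rintro _ ⟨j, hj, rfl⟩ _ ⟨j', hj', rfl⟩
      exact hfull j hj j' hj'
  have hupper : #T ≤ u * ∑ r ∈ T.image loc, m r := by
    rw [card_eq_sum_card_fiber_of_saturated hTloc, mul_sum]
    exact sum_le_sum hm
  have hlt : #(T.image ρ) - 1 < ∑ r ∈ T.image loc, m r :=
    Nat.lt_of_mul_lt_mul_left (a := u) (by omega)
  have := (hT.image ρ).card_pos
  omega

lemma card_image_le_sum {loc : ι → R} [DecidableEq R] {ρ : ι → X} {u : ℕ} (m : R → ℕ)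
    (hm : ∀ r ∈ univ.image loc, #{j | loc j = r} ≤ u * m r)
    (hfull : ∀ j j', (shareGraph loc ρ).Reachable (ρ j) (ρ j') →
      load ρ (ρ j) < u → load ρ (ρ j') < u → ρ j = ρ j') :
    #(univ.image ρ) ≤ ∑ r ∈ univ.image loc, m r := by
  classical
  set comp : ι → (shareGraph loc ρ).ConnectedComponent :=
    fun j => (shareGraph loc ρ).connectedComponentMk (ρ j)
  set T : (shareGraph loc ρ).ConnectedComponent → Finset ι := fun κ => {j | comp j = κ}
  have huniv : (univ : Finset ι) = (univ.image comp).biUnion T := by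
    ext j
    simp [T]
  have hdisj : (univ.image comp : Set _).PairwiseDisjoint fun κ => (T κ).image loc := by
    intro κ _ κ' _ hne
    simp only [onFun, disjoint_left, mem_image]
    rintro _ ⟨j, hj, rfl⟩ ⟨j', hj', hloc⟩
    simp only [T, mem_filter, mem_univ, true_and] at hj hj'
    exact hne (hj.symm.trans (hj'.symm.trans
      (SimpleGraph.ConnectedComponent.eq.2 (shareGraph_reachable_of_loc_eq ρ hloc))).symm)
  calc #(univ.image ρ) = #((univ.image comp).biUnion fun κ => (T κ).image ρ) := by
        rw [← biUnion_image, ← huniv]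
    _ ≤ ∑ κ ∈ univ.image comp, #((T κ).image ρ) := card_biUnion_le
    _ ≤ ∑ κ ∈ univ.image comp, ∑ r ∈ (T κ).image loc, m r := by
        refine sum_le_sum fun κ _ => card_image_le_sum_of_saturated m (T κ) ?_ ?_
          (fun r hr => hm r (image_subset_image (subset_univ _) hr)) ?_
        · intro j hj j' hρ
          simpa [T, comp, hρ] using hj
        · intro j hj j' hloc
          simp only [T, mem_filter, mem_univ, true_and] at hj ⊢
          rw [← hj]
          exact SimpleGraph.ConnectedComponent.eq.2 (shareGraph_reachable_of_loc_eq ρ hloc)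
        · intro j hj j' hj'
          simp only [T, mem_filter, mem_univ, true_and] at hj hj'
          exact hfull j j' (SimpleGraph.ConnectedComponent.eq.1 (hj.trans hj'.symm))
    _ = ∑ r ∈ univ.image loc, m r := by
        rw [← sum_biUnion hdisj, ← biUnion_image, ← huniv]

theorem exists_isFeasible_cost_le_card_image_le [DecidableEq R] (c : R → X → ℝ) (loc : ι → R)
    {F : Finset X} {u : ℕ} (m : R → ℕ) (hm : ∀ r ∈ univ.image loc, #{j | loc j = r} ≤ u * m r)
    {τ : ι → X} (hτ : IsFeasible F u τ) :
    ∃ ρ, IsFeasible F u ρ ∧ cost c loc ρ ≤ cost c loc τ ∧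
      #(univ.image ρ) ≤ ∑ r ∈ univ.image loc, m r := by
  obtain ⟨ρ, hρ, hmin⟩ := exists_isFeasible_rank_le c loc hτ
  refine ⟨ρ, hρ, Prod.Lex.monotone_fst _ _ (hmin τ hτ), card_image_le_sum m hm ?_⟩
  intro j j' hreach hju hj'u
  exact eq_of_shareGraph_reachable hρ hmin (hρ.1 j) (hρ.1 j') hreach hju hj'u

end UniformCKM

open UniformCKM

theorem stmt1_general (X : Type) [PseudoMetricSpace X] [DecidableEq X]
    (F C : Finset X) (k u : ℕ)
    (C₀ C' : ℝ)
    (hC₀ : IsLeast { t : ℝ | ∃ τ : X → X,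
        (∀ j ∈ C, τ j ∈ F) ∧
        (∀ i ∈ F, (C.filter (fun j => τ j = i)).card ≤ u) ∧
        t = ∑ j ∈ C, dist j (τ j) } C₀)
    (opn : X → ℕ) (σs : X → X)
    (hopk : ∑ i ∈ C, opn i ≤ k)
    (hσs : ∀ j ∈ C, σs j ∈ C ∧ opn (σs j) ≠ 0)
    (hcap : ∀ i ∈ C, (C.filter (fun j => σs j = i)).card ≤ u * opn i)
    (hC' : C' = ∑ j ∈ C, dist j (σs j)) :
    ∃ (F' : Finset X) (σ : X → X), F' ⊆ F ∧ F'.card ≤ k ∧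
      (∀ j ∈ C, σ j ∈ F') ∧
      (∀ i ∈ F', (C.filter (fun j => σ j = i)).card ≤ u) ∧
      ∑ j ∈ C, dist j (σ j) ≤ C₀ + 2 * C' := by
  obtain ⟨⟨τ, hτF, hτcap, rfl⟩, -⟩ := hC₀
  subst hC'
  have hlocC : univ.image (fun j : C => σs j) ⊆ C := by
    simp only [subset_iff, mem_image, mem_univ, true_and]
    rintro _ ⟨j, rfl⟩
    exact (hσs j j.2).1
  have hτ : IsFeasible F u fun j : C => τ j :=
    ⟨fun j => hτF j j.2, fun f hf => (card_filter_coe_sort C _).trans_le (hτcap f hf)⟩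
  obtain ⟨ρ, ⟨hρF, hρcap⟩, hcost, hcard⟩ := exists_isFeasible_cost_le_card_image_le dist
    (fun j : C => σs j) opn (fun r hr => (card_filter_coe_sort C _).trans_le (hcap r (hlocC hr))) hτ
  have hF' : univ.image ρ ⊆ F := image_subset_iff.2 fun j _ => hρF j
  have hσ : ∀ j : C, (if h : (j : X) ∈ C then ρ ⟨j, h⟩ else j) = ρ j := fun j => dif_pos j.2
  refine ⟨univ.image ρ, fun j => if h : j ∈ C then ρ ⟨j, h⟩ else j, hF',
    hcard.trans ((sum_le_sum_of_subset hlocC).trans hopk), fun j hj => by simp [hj], ?_, ?_⟩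
  · intro f hf
    rw [← card_filter_coe_sort]
    simpa only [hσ, load] using hρcap f (hF' hf)
  · simp only [← sum_coe_sort C, hσ]
    linarith [sum_dist_le_of_sum_dist_le (p := ((↑) : C → X)) hcost]

/-- **Theorem 2.** Let `(k, u, F, C, d)` be a hard uniform CKM instance with `|C| ≤ u·|F|`,
and let `C₀` be the minimum connection cost when all facilities of `F` are open.
Given a solution of cost `C'` to the soft uniform CKM instance `(k, u, C, C, d)`
(a multiset of at most `k` open facilities at locations of `C`, described by the
multiplicity function `opn`, together with an assignment `σs` of the clients such that
each location `i` serves at most `u · opn i` clients), there is a solution to the hard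
instance `(k, u, F, C, d)` of cost at most `C₀ + 2C'`. -/
theorem stmt1 (X : Type) [PseudoMetricSpace X] [DecidableEq X]
    (F C : Finset X) (k u : ℕ) (hk : 0 < k) (hu : 0 < u)
    (hCF : C.card ≤ u * F.card)
    (C₀ C' : ℝ)
    (hC₀ : IsLeast { t : ℝ | ∃ τ : X → X,
        (∀ j ∈ C, τ j ∈ F) ∧
        (∀ i ∈ F, (C.filter (fun j => τ j = i)).card ≤ u) ∧
        t = ∑ j ∈ C, dist j (τ j) } C₀)
    (opn : X → ℕ) (σs : X → X)
    (hsupp : ∀ i : X, opn i ≠ 0 → i ∈ C)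
    (hopk : ∑ i ∈ C, opn i ≤ k)
    (hσs : ∀ j ∈ C, σs j ∈ C ∧ opn (σs j) ≠ 0)
    (hcap : ∀ i ∈ C, (C.filter (fun j => σs j = i)).card ≤ u * opn i)
    (hC' : C' = ∑ j ∈ C, dist j (σs j)) :
    ∃ (F' : Finset X) (σ : X → X), F' ⊆ F ∧ F'.card ≤ k ∧
      (∀ j ∈ C, σ j ∈ F') ∧
      (∀ i ∈ F', (C.filter (fun j => σ j = i)).card ≤ u) ∧
      ∑ j ∈ C, dist j (σ j) ≤ C₀ + 2 * C' :=
  stmt1_general X F C k u C₀ C' hC₀ opn σs hopk hσs hcap hC'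
end

section
/- Let (X, d) be a metric space, let F and S be finite sets of points of X, let u be a positive integer, and let w : F × S → ℤ≥0 satisfy Σ_{s∈S} w(i, s) ≤ u for every i ∈ F and Σ_{i∈F} w(i, s) = t_s for every s ∈ S, where t_s ≤ u. Then there exists w' : F × S → ℤ≥0 such that: Σ_{s∈S} w'(i, s) ≤ u for every i ∈ F; Σ_{i∈F} w'(i, s) = t_s for every s ∈ S; Σ_{i∈F, s∈S} w'(i, s)·d(i, s) ≤ Σ_{i∈F, s∈S} w(i, s)·d(i, s); and the number of i ∈ F with Σ_{s∈S} w'(i, s) > 0 is at most |S|. -/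
/-!
Call a row partial when its mass lies strictly between `0` and `u`, and link two rows when they
carry weight in a common column. If two distinct partial rows are linked by a chain, take a
shortest one: its columns are distinct, so shifting `δ` units along it (off each cell
`(ρ j, σ j)` onto `(ρ (j + 1), σ j)`, or the other way round, whichever does not raise the cost)
preserves every constraint. With `δ` maximal, either a support cell is emptied or the receiving
row fills up, so `#support + #partial rows` drops. At a minimum of this potential every linked
block `K` of matched rows has at most one row that is not full; its columns carry at most `u`
each, so `u (|K| - 1) < mass K ≤ u · #columns K`, i.e. `|K| ≤ #columns K`, and summing over the
blocks gives `|S|`.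
-/

open Finset

namespace MatchingThinning

variable {X : Type*}

section Counting

def linkGraph (P S : Finset X) (w : X → X → ℕ) : SimpleGraph X where
  Adj a b := a ≠ b ∧ a ∈ P ∧ b ∈ P ∧ ∃ s ∈ S, w a s ≠ 0 ∧ w b s ≠ 0
  symm := ⟨fun _ _ ⟨hab, ha, hb, s, hs, has, hbs⟩ => ⟨hab.symm, hb, ha, s, hs, hbs, has⟩⟩
  loopless := ⟨fun _ h => h.1 rfl⟩

@[simp]
theorem linkGraph_adj {P S : Finset X} {w : X → X → ℕ} {a b : X} :
    (linkGraph P S w).Adj a b ↔ a ≠ b ∧ a ∈ P ∧ b ∈ P ∧ ∃ s ∈ S, w a s ≠ 0 ∧ w b s ≠ 0 :=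
  Iff.rfl

theorem linkGraph_mono {P P' : Finset X} (S : Finset X) (w : X → X → ℕ) (h : P' ⊆ P) :
    linkGraph P' S w ≤ linkGraph P S w :=
  fun _ _ ⟨hab, ha, hb, hs⟩ => linkGraph_adj.2 ⟨hab, h ha, h hb, hs⟩

def usedColumns (P S : Finset X) (w : X → X → ℕ) : Finset X :=
  S.filter fun s => ∃ i ∈ P, w i s ≠ 0

theorem usedColumns_mono {P P' : Finset X} (S : Finset X) (w : X → X → ℕ) (h : P' ⊆ P) :
    usedColumns P' S w ⊆ usedColumns P S w :=
  monotone_filter_right S fun _ _ ⟨i, hi, hw⟩ => ⟨i, h hi, hw⟩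

variable {P S : Finset X} {w : X → X → ℕ}

theorem sum_sum_le_mul_card_usedColumns {u : ℕ} (hcol : ∀ s ∈ S, ∑ i ∈ P, w i s ≤ u) :
    ∑ i ∈ P, ∑ s ∈ S, w i s ≤ u * (usedColumns P S w).card := by
  rw [sum_comm, usedColumns, ← sum_filter_of_ne fun s _ h => exists_ne_zero_of_sum_ne_zero h,
    mul_comm, ← smul_eq_mul]
  exact sum_le_card_nsmul _ _ _ fun s hs => hcol s (mem_filter.1 hs).1

theorem card_le_card_usedColumns_of_subsingleton_nonfull {u : ℕ}
    (hpos : ∀ i ∈ P, ∃ s ∈ S, w i s ≠ 0) (hcol : ∀ s ∈ S, ∑ i ∈ P, w i s ≤ u)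
    (hnonfull : ∀ a ∈ P, ∀ b ∈ P, ∑ s ∈ S, w a s < u → ∑ s ∈ S, w b s < u → a = b) :
    P.card ≤ (usedColumns P S w).card := by
  classical
  rcases P.eq_empty_or_nonempty with rfl | hP
  · simp
  obtain ⟨i₀, hi₀, hfull⟩ : ∃ i₀ ∈ P, ∀ i ∈ P, i ≠ i₀ → u ≤ ∑ s ∈ S, w i s := by
    by_cases h : ∃ i₀ ∈ P, ∑ s ∈ S, w i₀ s < u
    · obtain ⟨i₀, hi₀, hlt⟩ := h
      exact ⟨i₀, hi₀, fun i hi hne => not_lt.1 fun h' => hne (hnonfull i hi i₀ hi₀ h' hlt)⟩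
    · push Not at h
      obtain ⟨i₀, hi₀⟩ := hP
      exact ⟨i₀, hi₀, fun i hi _ => h i hi⟩
  have hpos₀ : 0 < ∑ s ∈ S, w i₀ s := by
    obtain ⟨s, hs, hne⟩ := hpos i₀ hi₀
    exact (Nat.pos_of_ne_zero hne).trans_le (single_le_sum (fun _ _ => Nat.zero_le _) hs)
  have hlower : u * (P.card - 1) < ∑ i ∈ P, ∑ s ∈ S, w i s := by
    rw [← add_sum_erase P _ hi₀, ← card_erase_of_mem hi₀, mul_comm, ← smul_eq_mul]
    have := card_nsmul_le_sum (P.erase i₀) (fun i => ∑ s ∈ S, w i s) u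
      fun i hi => hfull i (mem_of_mem_erase hi) (ne_of_mem_erase hi)
    omega
  have := Nat.lt_of_mul_lt_mul_left (hlower.trans_le (sum_sum_le_mul_card_usedColumns hcol))
  omega

theorem card_le_card_usedColumns {u : ℕ}
    (hpos : ∀ i ∈ P, ∃ s ∈ S, w i s ≠ 0) (hcol : ∀ s ∈ S, ∑ i ∈ P, w i s ≤ u)
    (hsep : ∀ a ∈ P, ∀ b ∈ P, ∑ s ∈ S, w a s < u → ∑ s ∈ S, w b s < u →
      (linkGraph P S w).Reachable a b → a = b) :
    P.card ≤ (usedColumns P S w).card := by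
  classical
  induction P using Finset.strongInduction with
  | H P ih =>
  rcases P.eq_empty_or_nonempty with rfl | ⟨i₀, hi₀⟩
  · simp
  set K := P.filter ((linkGraph P S w).Reachable i₀)
  have hKP : K ⊆ P := filter_subset _ _
  have hi₀K : i₀ ∈ K := mem_filter.2 ⟨hi₀, .refl _⟩
  have hK : K.card ≤ (usedColumns K S w).card := by
    refine card_le_card_usedColumns_of_subsingleton_nonfull (fun i hi => hpos i (hKP hi))
      (fun s hs => (sum_le_sum_of_subset hKP).trans (hcol s hs)) fun a ha b hb hwa hwb => ?_
    exact hsep a (hKP ha) b (hKP hb) hwa hwb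
      ((mem_filter.1 ha).2.symm.trans (mem_filter.1 hb).2)
  have hrest : (P \ K).card ≤ (usedColumns (P \ K) S w).card := by
    refine ih _ (sdiff_ssubset hKP ⟨i₀, hi₀K⟩) (fun i hi => hpos i (mem_sdiff.1 hi).1)
      (fun s hs => (sum_le_sum_of_subset sdiff_subset).trans (hcol s hs))
      fun a ha b hb hwa hwb hab => hsep a (mem_sdiff.1 ha).1 b (mem_sdiff.1 hb).1 hwa hwb
        (hab.mono (linkGraph_mono S w sdiff_subset))
  have hdisj : Disjoint (usedColumns K S w) (usedColumns (P \ K) S w) := by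
    refine disjoint_left.2 fun s hsK hsR => ?_
    obtain ⟨hs, k, hk, hks⟩ := mem_filter.1 hsK
    obtain ⟨-, i, hi, his⟩ := mem_filter.1 hsR
    obtain ⟨hiP, hiK⟩ := mem_sdiff.1 hi
    have hki : k ≠ i := fun h => hiK (h ▸ hk)
    exact hiK (mem_filter.2 ⟨hiP, (mem_filter.1 hk).2.trans
      (SimpleGraph.Adj.reachable <| linkGraph_adj.2 ⟨hki, hKP hk, hiP, s, hs, hks, his⟩)⟩)
  have hsub : usedColumns K S w ∪ usedColumns (P \ K) S w ⊆ usedColumns P S w :=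
    union_subset (usedColumns_mono S w hKP) (usedColumns_mono S w sdiff_subset)
  calc P.card = K.card + (P \ K).card := by rw [add_comm, card_sdiff_add_card_eq_card hKP]
    _ ≤ (usedColumns K S w).card + (usedColumns (P \ K) S w).card := add_le_add hK hrest
    _ = (usedColumns K S w ∪ usedColumns (P \ K) S w).card := (card_union_of_disjoint hdisj).symm
    _ ≤ (usedColumns P S w).card := card_le_card hsub

end Counting

section Path

open SimpleGraph Walk

variable {P S : Finset X} {w : X → X → ℕ}

/-- A shortest path in `linkGraph` visits each column at most once: a repeated column would
give a shortcut. -/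
theorem exists_path_injOn_columns {a b : X} (hb : b ∈ P) (h : (linkGraph P S w).Reachable a b) :
    ∃ (N : ℕ) (ρ σ : ℕ → X), ρ 0 = a ∧ ρ N = b ∧ (∀ j ≤ N, ρ j ∈ P) ∧
      (∀ j < N, σ j ∈ S ∧ w (ρ j) (σ j) ≠ 0 ∧ w (ρ (j + 1)) (σ j) ≠ 0) ∧
      Set.InjOn σ (Set.Iio N) := by
  obtain ⟨W, hW⟩ := h.exists_walk_length_eq_dist
  have hstep : ∀ j, ∃ s, j < W.length →
      s ∈ S ∧ w (W.getVert j) s ≠ 0 ∧ w (W.getVert (j + 1)) s ≠ 0 := fun j => by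
    by_cases hj : j < W.length
    · obtain ⟨-, -, -, s, hs⟩ := linkGraph_adj.1 (W.adj_getVert_succ hj)
      exact ⟨s, fun _ => hs⟩
    · exact ⟨a, fun h => absurd h hj⟩
  choose σ hσ using hstep
  have hρP : ∀ j ≤ W.length, W.getVert j ∈ P := fun j hj => by
    rcases hj.lt_or_eq with hj | rfl
    · exact (linkGraph_adj.1 (W.adj_getVert_succ hj)).2.1
    · rwa [W.getVert_length]
  refine ⟨W.length, W.getVert, σ, W.getVert_zero, W.getVert_length, hρP, hσ, ?_⟩
  intro p hp q hq hpq
  wlog hlt : p < q generalizing p q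
  · rcases (not_lt.1 hlt).lt_or_eq with hlt | rfl
    · exact (this hq hp hpq.symm hlt).symm
    · rfl
  simp only [Set.mem_Iio] at hp hq
  have hshort : (linkGraph P S w).dist a b ≤ p + 1 + (W.length - (q + 1)) := by
    by_cases heq : W.getVert p = W.getVert (q + 1)
    · calc _ ≤ ((W.take p).append ((W.drop (q + 1)).copy heq.symm rfl)).length := dist_le _
        _ ≤ _ := by simp only [length_append, length_copy, take_length, drop_length]; omega
    · have hadj : (linkGraph P S w).Adj (W.getVert p) (W.getVert (q + 1)) :=
        ⟨heq, hρP p (by omega), hρP (q + 1) hq, σ p, (hσ p hp).1, (hσ p hp).2.1,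
          hpq ▸ (hσ q hq).2.2⟩
      calc _ ≤ ((W.take p).append (.cons hadj (W.drop (q + 1)))).length := dist_le _
        _ = _ := by
          simp only [length_append, length_cons, take_length, drop_length]; omega
  omega

end Path

section Transfer

variable [DecidableEq X]

/-- `w + δ • D` moves `δ` units of row mass from `a` to `b` and keeps the column sums; it stays
nonnegative while `δ` is at most the weight of every cell where `D = -1`. -/
structure IsTransfer (F S : Finset X) (w : X → X → ℕ) (a b : X) (D : X → X → ℤ) : Prop where
  neg_one_le : ∀ i s, -1 ≤ D i s
  weight_ne_zero : ∀ i s, D i s ≠ 0 → w i s ≠ 0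
  sum_col : ∀ s ∈ S, ∑ i ∈ F, D i s = 0
  sum_row : ∀ i ∈ F, ∑ s ∈ S, D i s = (if i = b then 1 else 0) - (if i = a then 1 else 0)

def pathShift (ρ σ : ℕ → X) (N : ℕ) (i s : X) : ℤ :=
  ∑ j ∈ range N,
    ((if ρ (j + 1) = i ∧ σ j = s then 1 else 0) - (if ρ j = i ∧ σ j = s then 1 else 0))

variable {ρ σ : ℕ → X} {N : ℕ}

theorem sum_sum_pathShift_mul {R : Type*} [CommRing R] {F S : Finset X}
    (hρ : ∀ j ≤ N, ρ j ∈ F) (hσ : ∀ j < N, σ j ∈ S) (g : X → X → R) :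
    ∑ i ∈ F, ∑ s ∈ S, (pathShift ρ σ N i s : R) * g i s =
      ∑ j ∈ range N, (g (ρ (j + 1)) (σ j) - g (ρ j) (σ j)) := by
  have hcell : ∀ x ∈ F, ∀ y ∈ S,
      ∑ i ∈ F, ∑ s ∈ S, (if x = i ∧ y = s then g i s else 0) = g x y := by
    intro x hx y hy
    simp [ite_and, hx, hy]
  simp only [pathShift, Int.cast_sum, Int.cast_sub, Int.cast_ite, Int.cast_one, Int.cast_zero,
    sum_mul, sub_mul, ite_mul, one_mul, zero_mul]
  rw [sum_congr rfl fun i _ => sum_comm, sum_comm]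
  refine sum_congr rfl fun j hj => ?_
  have hj := mem_range.1 hj
  simp only [sum_sub_distrib, hcell _ (hρ _ hj) _ (hσ _ hj), hcell _ (hρ _ hj.le) _ (hσ _ hj)]

theorem abs_pathShift_le_one (hσ : Set.InjOn σ (Set.Iio N)) (i s : X) :
    |pathShift ρ σ N i s| ≤ 1 := by
  by_cases h : ∃ j < N, σ j = s
  · obtain ⟨j, hj, rfl⟩ := h
    rw [pathShift, sum_eq_single j (fun k hk hkj => ?_) (fun hj' => (hj' (mem_range.2 hj)).elim)]
    · split_ifs <;> norm_num
    · have : σ k ≠ σ j := fun h => hkj (hσ (mem_range.1 hk) hj h)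
      simp [this]
  · push Not at h
    rw [pathShift, sum_eq_zero fun j hj => by simp [h j (mem_range.1 hj)], abs_zero]
    exact zero_le_one

theorem exists_of_pathShift_ne_zero {i s : X} (h : pathShift ρ σ N i s ≠ 0) :
    ∃ j < N, σ j = s ∧ (ρ j = i ∨ ρ (j + 1) = i) := by
  obtain ⟨j, hj, hne⟩ := exists_ne_zero_of_sum_ne_zero h
  refine ⟨j, mem_range.1 hj, ?_⟩
  split_ifs at hne with h₁ h₂ h₂ <;> tauto

variable {F S : Finset X} {w : X → X → ℕ} {a b : X} {D : X → X → ℤ}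

theorem IsTransfer.neg (hD : IsTransfer F S w a b D) (hD₁ : ∀ i s, D i s ≤ 1) :
    IsTransfer F S w b a (-D) where
  neg_one_le i s := neg_le_neg (hD₁ i s)
  weight_ne_zero i s h := hD.weight_ne_zero i s (neg_ne_zero.1 h)
  sum_col s hs := by simp only [Pi.neg_apply, sum_neg_distrib, hD.sum_col s hs, neg_zero]
  sum_row i hi := by simp only [Pi.neg_apply, sum_neg_distrib, hD.sum_row i hi, neg_sub]

theorem isTransfer_pathShift (hρ : ∀ j ≤ N, ρ j ∈ F)
    (hstep : ∀ j < N, σ j ∈ S ∧ w (ρ j) (σ j) ≠ 0 ∧ w (ρ (j + 1)) (σ j) ≠ 0)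
    (hσ : Set.InjOn σ (Set.Iio N)) : IsTransfer F S w (ρ 0) (ρ N) (pathShift ρ σ N) where
  neg_one_le i s := (abs_le.1 (abs_pathShift_le_one hσ i s)).1
  weight_ne_zero i s h := by
    obtain ⟨j, hj, rfl, rfl | rfl⟩ := exists_of_pathShift_ne_zero h
    exacts [(hstep j hj).2.1, (hstep j hj).2.2]
  sum_col s hs := by
    simpa [hs] using sum_sum_pathShift_mul hρ (fun j hj => (hstep j hj).1)
      (fun _ y => if y = s then (1 : ℤ) else 0)
  sum_row i hi := by
    simpa [hi, sum_range_sub (fun j => if i = ρ j then (1 : ℤ) else 0)] using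
      sum_sum_pathShift_mul hρ (fun j hj => (hstep j hj).1)
        (fun x _ => if i = x then (1 : ℤ) else 0)

def shift (w : X → X → ℕ) (D : X → X → ℤ) (δ : ℕ) (i s : X) : ℕ :=
  (w i s + δ * D i s).toNat

def cost (F S : Finset X) (c : X → X → ℝ) (w : X → X → ℕ) : ℝ :=
  ∑ i ∈ F, ∑ s ∈ S, (w i s : ℝ) * c i s

def supportCells (F S : Finset X) (w : X → X → ℕ) : Finset (X × X) :=
  (F ×ˢ S).filter fun p => w p.1 p.2 ≠ 0

def partialRows (F S : Finset X) (u : ℕ) (w : X → X → ℕ) : Finset X :=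
  F.filter fun i => 0 < ∑ s ∈ S, w i s ∧ ∑ s ∈ S, w i s < u

def potential (F S : Finset X) (u : ℕ) (w : X → X → ℕ) : ℕ :=
  (supportCells F S w).card + (partialRows F S u w).card

theorem IsTransfer.sum_pos_target (hD : IsTransfer F S w a b D) (hb : b ∈ F) (hab : a ≠ b) :
    0 < ∑ s ∈ S, w b s := by
  obtain ⟨s, hs, hpos⟩ : ∃ s ∈ S, (0 : ℤ) < D b s :=
    exists_lt_of_sum_lt (by simp [hD.sum_row b hb, hab.symm])
  exact (Nat.pos_of_ne_zero (hD.weight_ne_zero b s hpos.ne')).trans_le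
    (single_le_sum (fun _ _ => Nat.zero_le _) hs)

variable {δ : ℕ}

theorem IsTransfer.coe_shift (hD : IsTransfer F S w a b D)
    (hδ : ∀ i ∈ F, ∀ s ∈ S, D i s < 0 → δ ≤ w i s) {i s : X} (hi : i ∈ F) (hs : s ∈ S) :
    (shift w D δ i s : ℤ) = w i s + δ * D i s := by
  refine Int.toNat_of_nonneg ?_
  rcases lt_or_ge (D i s) 0 with hneg | hnonneg
  · have hD₁ : D i s = -1 := le_antisymm (by omega) (hD.neg_one_le i s)
    have := hδ i hi s hs hneg
    rw [hD₁]
    omega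
  · positivity

theorem IsTransfer.sum_shift_col (hD : IsTransfer F S w a b D)
    (hδ : ∀ i ∈ F, ∀ s ∈ S, D i s < 0 → δ ≤ w i s) :
    ∀ s ∈ S, ∑ i ∈ F, shift w D δ i s = ∑ i ∈ F, w i s := fun s hs => by
  zify
  rw [sum_congr rfl fun i hi => hD.coe_shift hδ hi hs, sum_add_distrib, ← mul_sum,
    hD.sum_col s hs, mul_zero, add_zero]

theorem IsTransfer.sum_shift_row (hD : IsTransfer F S w a b D)
    (hδ : ∀ i ∈ F, ∀ s ∈ S, D i s < 0 → δ ≤ w i s) {i : X} (hi : i ∈ F) :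
    ((∑ s ∈ S, shift w D δ i s : ℕ) : ℤ) =
      ∑ s ∈ S, w i s + δ * ((if i = b then 1 else 0) - (if i = a then 1 else 0)) := by
  push_cast
  rw [sum_congr rfl fun s hs => hD.coe_shift hδ hi hs, sum_add_distrib, ← mul_sum,
    hD.sum_row i hi]

theorem IsTransfer.cost_shift (hD : IsTransfer F S w a b D)
    (hδ : ∀ i ∈ F, ∀ s ∈ S, D i s < 0 → δ ≤ w i s) (c : X → X → ℝ) :
    cost F S c (shift w D δ) = cost F S c w + δ * ∑ i ∈ F, ∑ s ∈ S, (D i s : ℝ) * c i s := by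
  have hcell : ∀ i ∈ F, ∀ s ∈ S, (shift w D δ i s : ℝ) = w i s + δ * D i s := fun i hi s hs => by
    exact_mod_cast hD.coe_shift hδ hi hs
  simp only [cost, mul_sum, ← sum_add_distrib]
  refine sum_congr rfl fun i hi => sum_congr rfl fun s hs => ?_
  rw [hcell i hi s hs]
  ring

theorem IsTransfer.supportCells_shift_subset (hD : IsTransfer F S w a b D) :
    supportCells F S (shift w D δ) ⊆ supportCells F S w :=
  monotone_filter_right _ fun p _ h hw => h <| by
    have hD₀ : D p.1 p.2 = 0 := not_not.1 fun hD₀ => hD.weight_ne_zero _ _ hD₀ hw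
    simp [shift, hw, hD₀]

theorem IsTransfer.partialRows_shift_subset {u : ℕ} (hD : IsTransfer F S w a b D)
    (hδ : ∀ i ∈ F, ∀ s ∈ S, D i s < 0 → δ ≤ w i s) (hb : b ∈ F) (hab : a ≠ b)
    (hwa : ∑ s ∈ S, w a s < u) (hwb : ∑ s ∈ S, w b s < u) :
    partialRows F S u (shift w D δ) ⊆ partialRows F S u w := by
  intro i hi
  obtain ⟨hiF, hpos, hlt⟩ := mem_filter.1 hi
  have hrow := hD.sum_shift_row hδ hiF
  refine mem_filter.2 ⟨hiF, ?_⟩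
  by_cases hib : i = b
  · subst hib
    exact ⟨hD.sum_pos_target hiF hab, hwb⟩
  by_cases hia : i = a
  · subst hia
    simp only [hib, if_false, if_true] at hrow
    omega
  · simp only [hib, hia, if_false] at hrow
    omega

theorem IsTransfer.potential_shift_lt {u : ℕ} (hD : IsTransfer F S w a b D)
    (hδ : ∀ i ∈ F, ∀ s ∈ S, D i s < 0 → δ ≤ w i s) (hb : b ∈ F) (hab : a ≠ b)
    (hwa : ∑ s ∈ S, w a s < u) (hwb : ∑ s ∈ S, w b s < u)
    (hδ_eq : (∃ i ∈ F, ∃ s ∈ S, D i s < 0 ∧ w i s = δ) ∨ ∑ s ∈ S, w b s + δ = u) :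
    potential F S u (shift w D δ) < potential F S u w := by
  have hsupp := hD.supportCells_shift_subset (δ := δ)
  have hpart := hD.partialRows_shift_subset hδ hb hab hwa hwb
  have := card_le_card hsupp
  have := card_le_card hpart
  unfold potential
  rcases hδ_eq with ⟨i, hi, s, hs, hneg, hwδ⟩ | hfull
  · have hcell : shift w D δ i s = 0 := by
      have := hD.coe_shift hδ hi hs
      rw [le_antisymm (by omega) (hD.neg_one_le i s)] at this
      omega
    have := card_lt_card ((ssubset_iff_of_subset hsupp).2 ⟨(i, s),
      mem_filter.2 ⟨mem_product.2 ⟨hi, hs⟩, hD.weight_ne_zero _ _ hneg.ne⟩,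
      fun h => (mem_filter.1 h).2 hcell⟩)
    omega
  · have hrowb := hD.sum_shift_row hδ hb
    simp only [if_true, hab.symm, if_false, sub_zero, mul_one] at hrowb
    have := card_lt_card ((ssubset_iff_of_subset hpart).2
      ⟨b, mem_filter.2 ⟨hb, hD.sum_pos_target hb hab, hwb⟩, fun h => by
        have := (mem_filter.1 h).2.2
        omega⟩)
    omega

theorem IsTransfer.exists_potential_lt {u : ℕ} (hD : IsTransfer F S w a b D) (ha : a ∈ F)
    (hb : b ∈ F) (hab : a ≠ b) (hwa : ∑ s ∈ S, w a s < u) (hwb : ∑ s ∈ S, w b s < u)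
    (hrow : ∀ i ∈ F, ∑ s ∈ S, w i s ≤ u) {c : X → X → ℝ}
    (hc : ∑ i ∈ F, ∑ s ∈ S, (D i s : ℝ) * c i s ≤ 0) :
    ∃ w₁ : X → X → ℕ, (∀ i ∈ F, ∑ s ∈ S, w₁ i s ≤ u) ∧
      (∀ s ∈ S, ∑ i ∈ F, w₁ i s = ∑ i ∈ F, w i s) ∧
      cost F S c w₁ ≤ cost F S c w ∧ potential F S u w₁ < potential F S u w := by
  obtain ⟨s₀, hs₀, hneg⟩ : ∃ s ∈ S, D a s < 0 :=
    exists_lt_of_sum_lt (by simp [hD.sum_row a ha, hab])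
  obtain ⟨p, hp, hmin⟩ := exists_min_image ((F ×ˢ S).filter fun p => D p.1 p.2 < 0)
    (fun p => w p.1 p.2) ⟨(a, s₀), mem_filter.2 ⟨mem_product.2 ⟨ha, hs₀⟩, hneg⟩⟩
  obtain ⟨hpFS, hpneg⟩ := mem_filter.1 hp
  set δ := min (w p.1 p.2) (u - ∑ s ∈ S, w b s)
  have hδ : ∀ i ∈ F, ∀ s ∈ S, D i s < 0 → δ ≤ w i s := fun i hi s hs h =>
    (min_le_left _ _).trans (hmin (i, s) (mem_filter.2 ⟨mem_product.2 ⟨hi, hs⟩, h⟩))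
  refine ⟨shift w D δ, fun i hi => ?_, hD.sum_shift_col hδ, ?_,
    hD.potential_shift_lt hδ hb hab hwa hwb ?_⟩
  · have hrowi := hD.sum_shift_row hδ hi
    have := hrow i hi
    have : δ ≤ u - ∑ s ∈ S, w b s := min_le_right _ _
    split_ifs at hrowi with hib hia <;> subst_vars <;> omega
  · rw [hD.cost_shift hδ]
    exact add_le_of_nonpos_right (mul_nonpos_of_nonneg_of_nonpos (Nat.cast_nonneg _) hc)
  · rcases min_choice (w p.1 p.2) (u - ∑ s ∈ S, w b s) with h | h
    · exact .inl ⟨p.1, (mem_product.1 hpFS).1, p.2, (mem_product.1 hpFS).2, hpneg, h.symm⟩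
    · exact .inr (by omega)

theorem exists_potential_lt_of_card_lt {F S : Finset X} {u : ℕ} {w : X → X → ℕ}
    (c : X → X → ℝ) (hrow : ∀ i ∈ F, ∑ s ∈ S, w i s ≤ u)
    (hcol : ∀ s ∈ S, ∑ i ∈ F, w i s ≤ u)
    (hcard : S.card < (F.filter fun i => 0 < ∑ s ∈ S, w i s).card) :
    ∃ w₁ : X → X → ℕ, (∀ i ∈ F, ∑ s ∈ S, w₁ i s ≤ u) ∧
      (∀ s ∈ S, ∑ i ∈ F, w₁ i s = ∑ i ∈ F, w i s) ∧
      cost F S c w₁ ≤ cost F S c w ∧ potential F S u w₁ < potential F S u w := by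
  set P := F.filter fun i => 0 < ∑ s ∈ S, w i s
  have hPF : P ⊆ F := filter_subset _ _
  obtain ⟨a, ha, b, hb, hwa, hwb, hreach, hab⟩ : ∃ a ∈ P, ∃ b ∈ P, ∑ s ∈ S, w a s < u ∧
      ∑ s ∈ S, w b s < u ∧ (linkGraph P S w).Reachable a b ∧ a ≠ b := by
    by_contra! hsep
    refine hcard.not_ge <| (card_le_card_usedColumns (fun i hi => ?_)
      (fun s hs => (sum_le_sum_of_subset hPF).trans (hcol s hs)) hsep).trans
        (card_le_card (filter_subset _ _))
    exact exists_ne_zero_of_sum_ne_zero (mem_filter.1 hi).2.ne'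
  obtain ⟨N, ρ, σ, rfl, rfl, hρ, hstep, hσ⟩ := exists_path_injOn_columns hb hreach
  have hD := isTransfer_pathShift (F := F) (fun j hj => hPF (hρ j hj)) hstep hσ
  rcases le_total (∑ i ∈ F, ∑ s ∈ S, (pathShift ρ σ N i s : ℝ) * c i s) 0 with hc | hc
  · exact hD.exists_potential_lt (hPF ha) (hPF hb) hab hwa hwb hrow hc
  · refine (hD.neg fun i s => (abs_le.1 (abs_pathShift_le_one hσ i s)).2).exists_potential_lt
      (hPF hb) (hPF ha) hab.symm hwb hwa hrow ?_
    simpa only [Pi.neg_apply, Int.cast_neg, neg_mul, sum_neg_distrib, neg_nonpos] using hc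

end Transfer

end MatchingThinning

open MatchingThinning

theorem stmt2_general (X : Type) [PseudoMetricSpace X] [DecidableEq X]
    (F S : Finset X) (u : ℕ)
    (t : X → ℕ) (ht : ∀ s ∈ S, t s ≤ u)
    (w : X → X → ℕ)
    (hrow : ∀ i ∈ F, ∑ s ∈ S, w i s ≤ u)
    (hcol : ∀ s ∈ S, ∑ i ∈ F, w i s = t s) :
    ∃ w' : X → X → ℕ,
      (∀ i ∈ F, ∑ s ∈ S, w' i s ≤ u) ∧
      (∀ s ∈ S, ∑ i ∈ F, w' i s = t s) ∧
      (∑ i ∈ F, ∑ s ∈ S, (w' i s : ℝ) * dist i s ≤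
        ∑ i ∈ F, ∑ s ∈ S, (w i s : ℝ) * dist i s) ∧
      (F.filter (fun i => 0 < ∑ s ∈ S, w' i s)).card ≤ S.card := by
  obtain ⟨w', ⟨hrow', hcol', hcost'⟩, hmin⟩ := (measure (potential F S u)).wf.has_min
    {w' | (∀ i ∈ F, ∑ s ∈ S, w' i s ≤ u) ∧ (∀ s ∈ S, ∑ i ∈ F, w' i s = t s) ∧
      cost F S dist w' ≤ cost F S dist w} ⟨w, hrow, hcol, le_rfl⟩
  refine ⟨w', hrow', hcol', hcost', not_lt.1 fun hcard => ?_⟩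
  obtain ⟨w₁, hrow₁, hcol₁, hcost₁, hlt⟩ :=
    exists_potential_lt_of_card_lt dist hrow' (fun s hs => (hcol' s hs).trans_le (ht s hs)) hcard
  exact hmin w₁ ⟨hrow₁, fun s hs => (hcol₁ s hs).trans (hcol' s hs), hcost₁.trans hcost'⟩ hlt

/-- **Matching-thinning lemma** (key step of Theorem 2). Given a capacitated integral
matching `w : F × S → ℤ≥0` in a metric space in which every `i ∈ F` is matched at most
`u` times and every `s ∈ S` is matched exactly `t s ≤ u` times, there is a matching `w'`
with the same row/column constraints, no larger cost, in which at most `|S|` points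
of `F` are matched. -/
theorem stmt2 (X : Type) [PseudoMetricSpace X] [DecidableEq X]
    (F S : Finset X) (u : ℕ) (hu : 0 < u)
    (t : X → ℕ) (ht : ∀ s ∈ S, t s ≤ u)
    (w : X → X → ℕ)
    (hrow : ∀ i ∈ F, ∑ s ∈ S, w i s ≤ u)
    (hcol : ∀ s ∈ S, ∑ i ∈ F, w i s = t s) :
    ∃ w' : X → X → ℕ,
      (∀ i ∈ F, ∑ s ∈ S, w' i s ≤ u) ∧
      (∀ s ∈ S, ∑ i ∈ F, w' i s = t s) ∧
      (∑ i ∈ F, ∑ s ∈ S, (w' i s : ℝ) * dist i s ≤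
        ∑ i ∈ F, ∑ s ∈ S, (w i s : ℝ) * dist i s) ∧
      (F.filter (fun i => 0 < ∑ s ∈ S, w' i s)).card ≤ S.card :=
  stmt2_general X F S u t ht w hrow hcol
end

section
/- Fix an integer capacity u ≥ 1 and fix q ∈ ℝ≥0. The function p ↦ f(p, q) is concave on ℤ≥0: for every integer p ≥ 1, 2·f(p, q) ≥ f(p−1, q) + f(p+1, q). -/
/-- The function `f(p, q)` from Section 3 of the paper, for capacity `u`:
`f(p,q) = qu` if `q ≤ ⌊p/u⌋`;
`f(p,q) = u⌊p/u⌋ + u·{p/u}·(q − ⌊p/u⌋)` if `⌊p/u⌋ < q < ⌈p/u⌉`;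
`f(p,q) = p` if `q ≥ ⌈p/u⌉`. -/
noncomputable def f (u : ℕ) (p : ℕ) (q : ℝ) : ℝ :=
  if q ≤ (⌊(p : ℝ) / (u : ℝ)⌋ : ℝ) then q * u
  else if q < (⌈(p : ℝ) / (u : ℝ)⌉ : ℝ) then
    (u : ℝ) * (⌊(p : ℝ) / (u : ℝ)⌋ : ℝ)
      + (u : ℝ) * Int.fract ((p : ℝ) / (u : ℝ)) * (q - (⌊(p : ℝ) / (u : ℝ)⌋ : ℝ))
  else (p : ℝ)

/-- As a function of `p`, `f` is the minimum of three affine functions. -/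
theorem f_eq_min (u : ℕ) (hu : 1 ≤ u) (p : ℕ) (q : ℝ) :
    f u p q = min (p : ℝ)
      (min (q * u) ((u : ℝ) * (⌊q⌋ : ℝ) + Int.fract q * ((p : ℝ) - (u : ℝ) * (⌊q⌋ : ℝ)))) := by
  have hu' : (0 : ℝ) < u := by exact_mod_cast hu
  unfold f
  set x : ℝ := (p : ℝ) / (u : ℝ) with hxdef
  have hux : (u : ℝ) * x = p := by
    rw [hxdef, mul_comm]
    exact div_mul_cancel₀ _ (ne_of_gt hu')
  have hk : (⌊x⌋ : ℝ) ≤ x := Int.floor_le x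
  have hc : x ≤ (⌈x⌉ : ℝ) := Int.le_ceil x
  have hm : (⌊q⌋ : ℝ) ≤ q := Int.floor_le q
  have hfq : Int.fract q = q - (⌊q⌋ : ℝ) := rfl
  have hpk : (u : ℝ) * (⌊x⌋ : ℝ) ≤ p := by
    have := mul_le_mul_of_nonneg_left hk hu'.le
    linarith
  split_ifs with h1 h2
  · -- q ≤ ⌊x⌋, value q*u
    have hq_le : q * u ≤ (p : ℝ) := by
      have := mul_le_mul_of_nonneg_right (h1.trans hk) hu'.le
      nlinarith
    have hq_le_g : q * u ≤ (u : ℝ) * (⌊q⌋ : ℝ) + Int.fract q * ((p : ℝ) - (u : ℝ) * (⌊q⌋ : ℝ)) := by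
      rw [hfq]
      rcases eq_or_lt_of_le (Int.fract_nonneg q) with h0 | h0
      · rw [hfq] at h0
        have hqe : q = (⌊q⌋ : ℝ) := by linarith
        rw [show q - (⌊q⌋ : ℝ) = 0 from by linarith]
        have hqu : q * u = (u : ℝ) * (⌊q⌋ : ℝ) := by linear_combination (u : ℝ) * h0.symm
        linarith
      · rw [hfq] at h0
        have hne : (⌊q⌋ : ℝ) < q := by linarith
        have hmk : (⌊q⌋ : ℤ) + 1 ≤ ⌊x⌋ := by
          have : (⌊q⌋ : ℤ) < ⌊x⌋ := by exact_mod_cast lt_of_lt_of_le hne h1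
          omega
        have hmk' : ((⌊q⌋ : ℝ) + 1) ≤ (⌊x⌋ : ℝ) := by exact_mod_cast hmk
        have hup : (u : ℝ) * ((⌊q⌋ : ℝ) + 1) ≤ p := by
          have := mul_le_mul_of_nonneg_left hmk' hu'.le
          linarith
        nlinarith [mul_nonneg h0.le (by nlinarith : (0 : ℝ) ≤ (p : ℝ) - (u : ℝ) * (⌊q⌋ : ℝ) - u)]
    rw [min_eq_left hq_le_g, min_eq_right hq_le]
  · -- ⌊x⌋ < q < ⌈x⌉
    push_neg at h1
    have hck : (⌈x⌉ : ℤ) = ⌊x⌋ + 1 := by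
      have h₁ : (⌊x⌋ : ℤ) < ⌈x⌉ := by exact_mod_cast lt_trans h1 h2
      have h₂ := Int.ceil_le_floor_add_one x
      omega
    have hck' : (⌈x⌉ : ℝ) = (⌊x⌋ : ℝ) + 1 := by exact_mod_cast hck
    have hq_floor : ⌊q⌋ = ⌊x⌋ := by
      rw [Int.floor_eq_iff]
      exact ⟨le_of_lt h1, by rw [← hck']; exact h2⟩
    have hfr : Int.fract q = q - (⌊x⌋ : ℝ) := by rw [hfq, hq_floor]
    have hfx : (u : ℝ) * Int.fract x = (p : ℝ) - (u : ℝ) * (⌊x⌋ : ℝ) := by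
      rw [Int.fract]; linear_combination hux
    have hple : (p : ℝ) ≤ (u : ℝ) * ((⌊x⌋ : ℝ) + 1) := by
      have hx1 : x ≤ (⌊x⌋ : ℝ) + 1 := by rw [← hck']; exact hc
      have := mul_le_mul_of_nonneg_left hx1 hu'.le
      linarith
    have hklt : q < (⌊x⌋ : ℝ) + 1 := by rw [← hck']; exact h2
    have hg_le_p :
        (u : ℝ) * (⌊x⌋ : ℝ) + (q - (⌊x⌋ : ℝ)) * ((p : ℝ) - (u : ℝ) * (⌊x⌋ : ℝ)) ≤ (p : ℝ) := by
      have := mul_le_mul_of_nonneg_right (by linarith : q - (⌊x⌋ : ℝ) ≤ 1)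
        (by linarith : (0 : ℝ) ≤ (p : ℝ) - (u : ℝ) * (⌊x⌋ : ℝ))
      linarith
    have hg_le_q :
        (u : ℝ) * (⌊x⌋ : ℝ) + (q - (⌊x⌋ : ℝ)) * ((p : ℝ) - (u : ℝ) * (⌊x⌋ : ℝ)) ≤ q * u := by
      have := mul_le_mul_of_nonneg_left
        (by linarith : (p : ℝ) - (u : ℝ) * (⌊x⌋ : ℝ) ≤ (u : ℝ))
        (by linarith : (0 : ℝ) ≤ q - (⌊x⌋ : ℝ))
      nlinarith
    rw [hq_floor, hfr, min_eq_right hg_le_q, min_eq_right hg_le_p, hfx]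
    ring
  · -- ⌈x⌉ ≤ q
    push_neg at h1 h2
    have hcm : (⌈x⌉ : ℤ) ≤ ⌊q⌋ := Int.le_floor.mpr h2
    have hcm' : ((⌈x⌉ : ℝ)) ≤ (⌊q⌋ : ℝ) := by exact_mod_cast hcm
    have hpm : (p : ℝ) ≤ (u : ℝ) * (⌊q⌋ : ℝ) := by
      have := mul_le_mul_of_nonneg_left (hc.trans hcm') hu'.le
      linarith
    have hpq : (p : ℝ) ≤ q * u := by
      have := mul_le_mul_of_nonneg_right (hc.trans h2) hu'.le
      nlinarith
    have hpg : (p : ℝ) ≤ (u : ℝ) * (⌊q⌋ : ℝ) + Int.fract q * ((p : ℝ) - (u : ℝ) * (⌊q⌋ : ℝ)) := by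
      nlinarith [mul_nonneg (by linarith [Int.fract_lt_one q] : (0 : ℝ) ≤ 1 - Int.fract q)
        (by linarith : (0 : ℝ) ≤ (u : ℝ) * (⌊q⌋ : ℝ) - p)]
    rw [min_eq_left (le_min hpq hpg)]

/-- **Claim 3.1, second part.** For a fixed `q ∈ ℝ≥0`, the function `p ↦ f(p, q)` is
concave on `ℤ≥0`: for every integer `p ≥ 1`, `2·f(p,q) ≥ f(p−1,q) + f(p+1,q)`. -/
theorem stmt4 (u : ℕ) (hu : 1 ≤ u) (q : ℝ) (hq : 0 ≤ q) (p : ℕ) (hp : 1 ≤ p) :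
    f u (p - 1) q + f u (p + 1) q ≤ 2 * f u p q := by
  have hcast : ((p - 1 : ℕ) : ℝ) = (p : ℝ) - 1 := by
    rw [Nat.cast_sub hp, Nat.cast_one]
  rw [f_eq_min u hu (p - 1) q, f_eq_min u hu (p + 1) q, f_eq_min u hu p q, hcast]
  push_cast
  set a : ℝ := (p : ℝ)
  set Q : ℝ := q * u
  set m : ℝ := (⌊q⌋ : ℝ)
  set φ : ℝ := Int.fract q
  rcases min_cases a (min Q ((u : ℝ) * m + φ * (a - (u : ℝ) * m))) with ⟨hv, _⟩ | ⟨hv, _⟩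
  · rw [hv]
    have h₁ := min_le_left (a - 1) (min Q ((u : ℝ) * m + φ * (a - 1 - (u : ℝ) * m)))
    have h₂ := min_le_left (a + 1) (min Q ((u : ℝ) * m + φ * (a + 1 - (u : ℝ) * m)))
    linarith
  · rw [hv]
    rcases min_cases Q ((u : ℝ) * m + φ * (a - (u : ℝ) * m)) with ⟨hv2, _⟩ | ⟨hv2, _⟩
    · rw [hv2]
      have h₁ : min (a - 1) (min Q ((u : ℝ) * m + φ * (a - 1 - (u : ℝ) * m))) ≤ Q :=
        le_trans (min_le_right _ _) (min_le_left _ _)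
      have h₂ : min (a + 1) (min Q ((u : ℝ) * m + φ * (a + 1 - (u : ℝ) * m))) ≤ Q :=
        le_trans (min_le_right _ _) (min_le_left _ _)
      linarith
    · rw [hv2]
      have h₁ : min (a - 1) (min Q ((u : ℝ) * m + φ * (a - 1 - (u : ℝ) * m))) ≤
          (u : ℝ) * m + φ * (a - 1 - (u : ℝ) * m) :=
        le_trans (min_le_right _ _) (min_le_right _ _)
      have h₂ : min (a + 1) (min Q ((u : ℝ) * m + φ * (a + 1 - (u : ℝ) * m))) ≤
          (u : ℝ) * m + φ * (a + 1 - (u : ℝ) * m) :=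
        le_trans (min_le_right _ _) (min_le_right _ _)
      have hsum : φ * (a - 1 - (u : ℝ) * m) + φ * (a + 1 - (u : ℝ) * m)
          = 2 * (φ * (a - (u : ℝ) * m)) := by ring
      linarith
end

section
/- Let C be a finite set of points in a metric space (X, d), let d_av : C → ℝ≥0 be an arbitrary function, and let ℓ be a positive integer. Then there exists a subset C* ⊆ C such that: (C1) for all distinct v, v' ∈ C*, d(v, v') > 2ℓ·max{d_av(v), d_av(v')}; and (C2) for every j ∈ C there exists v ∈ C* such that d_av(v) ≤ d_av(j) and d(v, j) ≤ 2ℓ·d_av(j). -/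
private lemma greedy_aux (X : Type) [PseudoMetricSpace X]
    (dav : X → ℝ) (ℓ : ℕ) :
    ∀ n : ℕ, ∀ C : Finset X, C.card ≤ n → (∀ j ∈ C, 0 ≤ dav j) →
    ∃ Cs : Finset X, Cs ⊆ C ∧
      (∀ v ∈ Cs, ∀ v' ∈ Cs, v ≠ v' →
        2 * (ℓ : ℝ) * max (dav v) (dav v') < dist v v') ∧
      (∀ j ∈ C, ∃ v ∈ Cs, dav v ≤ dav j ∧ dist v j ≤ 2 * (ℓ : ℝ) * dav j) := by
  classical
  intro n
  induction n with
  | zero =>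
    intro C hcard _
    have : C = ∅ := Finset.card_eq_zero.mp (Nat.le_zero.mp hcard)
    subst this
    exact ⟨∅, by simp, by simp, by simp⟩
  | succ n ih =>
    intro C hcard hdav
    rcases eq_or_ne C ∅ with rfl | hne
    · exact ⟨∅, by simp, by simp, by simp⟩
    · obtain ⟨v, hv, hvmin⟩ := C.exists_min_image dav (Finset.nonempty_iff_ne_empty.mpr hne)
      set C' : Finset X := C.filter (fun j => ¬ dist j v ≤ 2 * (ℓ : ℝ) * dav j) with hC'
      have hC'sub : C' ⊆ C := Finset.filter_subset _ _
      have hvnot : v ∉ C' := by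
        simp only [hC', Finset.mem_filter, not_and, not_not]
        intro _
        simp only [dist_self]
        have := hdav v hv
        positivity
      have hssub : C' ⊂ C := Finset.ssubset_iff_of_subset hC'sub |>.mpr ⟨v, hv, hvnot⟩
      have hcard' : C'.card ≤ n := by
        have := Finset.card_lt_card hssub
        omega
      obtain ⟨Cs', hsub', hC1', hC2'⟩ := ih C' hcard' (fun j hj => hdav j (hC'sub hj))
      refine ⟨insert v Cs', ?_, ?_, ?_⟩
      · exact Finset.insert_subset hv (hsub'.trans hC'sub)
      · intro a ha b hb hab
        rcases Finset.mem_insert.mp ha with rfl | ha' <;>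
          rcases Finset.mem_insert.mp hb with rfl | hb'
        · exact absurd rfl hab
        · have hbC' : b ∈ C' := hsub' hb'
          have hd : ¬ dist b a ≤ 2 * (ℓ : ℝ) * dav b := (Finset.mem_filter.mp hbC').2
          push_neg at hd
          have hmin : dav a ≤ dav b := hvmin b (hC'sub hbC')
          have : max (dav a) (dav b) = dav b := max_eq_right hmin
          rw [this, dist_comm]
          exact hd
        · have haC' : a ∈ C' := hsub' ha'
          have hd : ¬ dist a b ≤ 2 * (ℓ : ℝ) * dav a := (Finset.mem_filter.mp haC').2
          push_neg at hd
          have hmin : dav b ≤ dav a := hvmin a (hC'sub haC')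
          have : max (dav a) (dav b) = dav a := max_eq_left hmin
          rw [this]
          exact hd
        · exact hC1' a ha' b hb' hab
      · intro j hj
        by_cases hjd : dist j v ≤ 2 * (ℓ : ℝ) * dav j
        · exact ⟨v, Finset.mem_insert_self _ _, hvmin j hj, by rwa [dist_comm]⟩
        · have hjC' : j ∈ C' := Finset.mem_filter.mpr ⟨hj, hjd⟩
          obtain ⟨w, hw, h1, h2⟩ := hC2' j hjC'
          exact ⟨w, Finset.mem_insert_of_mem hw, h1, h2⟩

/-- **Claim 4.1, Properties (C1) and (C2).** For any finite set `C` of points of a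
(pseudo)metric space, any nonnegative function `dav` on `C` and any positive integer `ℓ`,
there is a subset `Cs ⊆ C` of representatives such that distinct representatives are far
apart (C1) and every client has a nearby representative with no larger `dav`-value (C2). -/
theorem stmt6 (X : Type) [PseudoMetricSpace X] (C : Finset X)
    (dav : X → ℝ) (hdav : ∀ j ∈ C, 0 ≤ dav j) (ℓ : ℕ) (hℓ : 0 < ℓ) :
    ∃ Cs : Finset X, Cs ⊆ C ∧
      (∀ v ∈ Cs, ∀ v' ∈ Cs, v ≠ v' →
        2 * (ℓ : ℝ) * max (dav v) (dav v') < dist v v') ∧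
      (∀ j ∈ C, ∃ v ∈ Cs, dav v ≤ dav j ∧ dist v j ≤ 2 * (ℓ : ℝ) * dav j) := by
  exact greedy_aux X dav ℓ C.card C le_rfl hdav
end

section
/- Fix an integer capacity u ≥ 1. Let n be a positive integer, let x_1, …, x_n ∈ [0, 1], let y ∈ ℝ≥0, and set y' = (Σ_{j=1}^n x_j)/u. Suppose that y' ≥ ⌊y⌋ and that for every subset J ⊆ {1, …, n}, Σ_{j∈J} x_j ≤ f(|J|, y). Then Σ_{j=1}^n x_j·(1 − x_j) ≥ u·{y'}·(⌈y⌉ − y), where {y'} = y' − ⌊y'⌋ denotes the fractional part of y'. -/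
/-! Put `t = {y}` and let `J` be the set of clients with `x_j > t`. Since `f(p, ·)` is piecewise
linear with breakpoints at the integers, `f(p, y) ≤ (1 - t)·u⌊y⌋ + t·p`, so the rectangle constraint
for `J` gives `Σ_j (x_j - t)⁺ ≤ (1 - t)·u⌊y⌋`. On the other hand `x(1 - x) ≥ (1 - t)x - (x - t)⁺`
for `x ∈ [0, 1]`; summing, `Σ_j x_j(1 - x_j) ≥ (1 - t)(u y' - u⌊y⌋) ≥ u{y'}(⌈y⌉ - y)`. -/

section

variable {u : ℕ}

lemma f_le_mul (hu : 0 < u) (p : ℕ) (q : ℝ) : f u p q ≤ q * u := by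
  have hu' : (0 : ℝ) < u := by exact_mod_cast hu
  unfold f
  split_ifs with h₁ h₂
  · exact le_rfl
  · have hq : 0 ≤ q - ⌊(p : ℝ) / u⌋ := by linarith [not_le.mp h₁]
    have := mul_le_of_le_one_left hq (Int.fract_lt_one ((p : ℝ) / u)).le
    linarith [mul_le_mul_of_nonneg_left this hu'.le]
  · have : (p : ℝ) / u ≤ q := (Int.le_ceil _).trans (not_lt.mp h₂)
    rwa [div_le_iff₀ hu'] at this

lemma f_le_card (hu : 0 < u) (p : ℕ) (q : ℝ) : f u p q ≤ p := by
  have hu' : (0 : ℝ) < u := by exact_mod_cast hu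
  have hp : (u : ℝ) * (⌊(p : ℝ) / u⌋ + Int.fract ((p : ℝ) / u)) = p := by
    rw [Int.floor_add_fract]; field_simp
  unfold f
  split_ifs with h₁ h₂
  · nlinarith [Int.fract_nonneg ((p : ℝ) / u)]
  · have hceil : (⌈(p : ℝ) / u⌉ : ℝ) ≤ ⌊(p : ℝ) / u⌋ + 1 := by
      exact_mod_cast Int.ceil_le_floor_add_one _
    have := mul_le_of_le_one_right (Int.fract_nonneg ((p : ℝ) / u))
      (by linarith : q - ⌊(p : ℝ) / u⌋ ≤ 1)
    linarith [mul_le_mul_of_nonneg_left this hu'.le]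
  · exact le_rfl

lemma f_eq_interpolate_of_mem_Ioo (hu : 0 < u) {p : ℕ} {q : ℝ}
    (hp : (p : ℝ) ∈ Set.Ioo (u * ⌊q⌋ : ℝ) (u * (⌊q⌋ + 1))) :
    f u p q = (1 - Int.fract q) * (u * ⌊q⌋) + Int.fract q * p := by
  have hu' : (0 : ℝ) < u := by exact_mod_cast hu
  obtain ⟨hlow, hhigh⟩ := hp
  have hfloor : ⌊(p : ℝ) / u⌋ = ⌊q⌋ := by
    rw [Int.floor_eq_iff, le_div_iff₀ hu', div_lt_iff₀ hu']
    constructor <;> linarith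
  have hceil : ⌈(p : ℝ) / u⌉ = ⌊q⌋ + 1 := by
    rw [Int.ceil_eq_iff, lt_div_iff₀ hu', div_le_iff₀ hu']
    push_cast
    constructor <;> linarith
  have hfract : Int.fract ((p : ℝ) / u) = p / u - ⌊q⌋ := by
    rw [← Int.self_sub_floor, hfloor]
  have hq := Int.floor_add_fract q
  unfold f
  rw [hfloor, hceil, hfract]
  split_ifs with h₁ h₂
  · have hint : q = ⌊q⌋ := le_antisymm h₁ (Int.floor_le q)
    rw [show Int.fract q = 0 by linarith]
    linear_combination (u : ℝ) * hint
  · rw [Int.self_sub_floor]; field_simp; ring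
  · push_cast at h₂; linarith [Int.lt_floor_add_one q]

lemma f_le_interpolate (hu : 0 < u) (p : ℕ) (q : ℝ) :
    f u p q ≤ (1 - Int.fract q) * (u * ⌊q⌋) + Int.fract q * p := by
  have ht₀ := Int.fract_nonneg q
  have ht₁ := Int.fract_lt_one q
  have hq := Int.floor_add_fract q
  rcases le_or_gt (p : ℝ) (u * ⌊q⌋) with hlow | hlow
  · nlinarith [f_le_card hu p q]
  rcases lt_or_ge (p : ℝ) (u * (⌊q⌋ + 1)) with hhigh | hhigh
  · exact (f_eq_interpolate_of_mem_Ioo hu ⟨hlow, hhigh⟩).le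
  · nlinarith [f_le_mul hu p q]

end

lemma sub_sub_max_le_mul_one_sub {x : ℝ} (hx : x ∈ Set.Icc (0 : ℝ) 1) (t : ℝ) :
    (1 - t) * x - max (x - t) 0 ≤ x * (1 - x) := by
  obtain ⟨hx₀, hx₁⟩ := hx
  rcases le_total x t with h | h
  · rw [max_eq_right (by linarith)]; nlinarith
  · rw [max_eq_left (by linarith)]; nlinarith

lemma sum_max_sub_fract_le {ι : Type*} [Fintype ι] {u : ℕ} (hu : 0 < u) (x : ι → ℝ) (y : ℝ)
    (hrect : ∀ J : Finset ι, ∑ j ∈ J, x j ≤ f u J.card y) :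
    ∑ j, max (x j - Int.fract y) 0 ≤ (1 - Int.fract y) * (u * ⌊y⌋) := by
  classical
  set J := Finset.univ.filter fun j => Int.fract y < x j
  have hsum : ∑ j, max (x j - Int.fract y) 0 = ∑ j ∈ J, x j - J.card * Int.fract y := by
    rw [← nsmul_eq_mul, ← Finset.sum_const, ← Finset.sum_sub_distrib, Finset.sum_filter]
    refine Finset.sum_congr rfl fun j _ => ?_
    split_ifs with h
    · exact max_eq_left (by linarith)
    · exact max_eq_right (by linarith [not_lt.mp h])
  rw [hsum]
  linarith [hrect J, f_le_interpolate hu J.card y]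

lemma ceil_sub_le_one_sub_fract (y : ℝ) : (⌈y⌉ : ℝ) - y ≤ 1 - Int.fract y := by
  have : (⌈y⌉ : ℝ) ≤ ⌊y⌋ + 1 := by exact_mod_cast Int.ceil_le_floor_add_one y
  rw [Int.fract]; linarith

theorem stmt10_general (u : ℕ) (hu : 1 ≤ u) (n : ℕ)
    (x : Fin n → ℝ) (hx : ∀ j, x j ∈ Set.Icc (0 : ℝ) 1)
    (y : ℝ)
    (y' : ℝ) (hy' : y' = (∑ j, x j) / u)
    (hfloor : (⌊y⌋ : ℝ) ≤ y')
    (hrect : ∀ J : Finset (Fin n), ∑ j ∈ J, x j ≤ f u J.card y) :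
    (u : ℝ) * Int.fract y' * ((⌈y⌉ : ℝ) - y) ≤ ∑ j, x j * (1 - x j) := by
  have hu' : (0 : ℝ) < u := by exact_mod_cast hu
  have hfract : Int.fract y' ≤ y' - ⌊y⌋ := by
    have : ⌊y⌋ ≤ ⌊y'⌋ := Int.le_floor.mpr hfloor
    rw [Int.fract]; linarith [(Int.cast_le (R := ℝ)).mpr this]
  have hsum : u * y' = ∑ j, x j := by rw [hy']; field_simp
  calc (u : ℝ) * Int.fract y' * ((⌈y⌉ : ℝ) - y)
      ≤ u * (y' - ⌊y⌋) * (1 - Int.fract y) :=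
        mul_le_mul (mul_le_mul_of_nonneg_left hfract hu'.le) (ceil_sub_le_one_sub_fract y)
          (sub_nonneg.mpr (Int.le_ceil y)) (mul_nonneg hu'.le (by linarith [Int.fract_nonneg y']))
    _ = (1 - Int.fract y) * ∑ j, x j - (1 - Int.fract y) * (u * ⌊y⌋) := by rw [← hsum]; ring
    _ ≤ (1 - Int.fract y) * ∑ j, x j - ∑ j, max (x j - Int.fract y) 0 := by
        gcongr; exact sum_max_sub_fract_le hu x y hrect
    _ = ∑ j, ((1 - Int.fract y) * x j - max (x j - Int.fract y) 0) := by
        rw [Finset.mul_sum, Finset.sum_sub_distrib]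
    _ ≤ ∑ j, x j * (1 - x j) :=
        Finset.sum_le_sum fun j _ => sub_sub_max_le_mul_one_sub (hx j) _

/-- **Lemma 4.3.** If `x_1, …, x_n ∈ [0,1]`, `y' = (Σ_j x_j)/u ≥ ⌊y⌋` and the rectangle
constraint `Σ_{j∈J} x_j ≤ f(|J|, y)` holds for every `J ⊆ [n]`, then
`Σ_j x_j(1 − x_j) ≥ u·{y'}·(⌈y⌉ − y)`. -/
theorem stmt10 (u : ℕ) (hu : 1 ≤ u) (n : ℕ) (hn : 0 < n)
    (x : Fin n → ℝ) (hx : ∀ j, x j ∈ Set.Icc (0 : ℝ) 1)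
    (y : ℝ) (hy : 0 ≤ y)
    (y' : ℝ) (hy' : y' = (∑ j, x j) / u)
    (hfloor : (⌊y⌋ : ℝ) ≤ y')
    (hrect : ∀ J : Finset (Fin n), ∑ j ∈ J, x j ≤ f u J.card y) :
    (u : ℝ) * Int.fract y' * ((⌈y⌉ : ℝ) - y) ≤ ∑ j, x j * (1 - x j) :=
  stmt10_general u hu n x hx y y' hy' hfloor hrect
end

section
/- Fix an integer capacity u ≥ 1 and a positive integer ℓ. Let F and C be finite sets of points in a metric space (X, d), let x : F × C → ℝ≥0 satisfy Σ_{i∈F} x_{i,j} = 1 for every j ∈ C, let y : F → ℝ≥0, and set d_av(j) = Σ_{i∈F} x_{i,j}·d(i,j). Let C* be a finite set of points and {U_v}_{v∈C*} a partition of F such that: (i) for every v ∈ C* and i ∈ U_v, d(i, v) = min_{w∈C*} d(i, w); and (ii) for every v ∈ C*, i ∈ U_v and j ∈ C, d(i, v) ≤ d(i, j) + 2ℓ·d_av(j). Let ∅ ⊊ A ⊊ C*, set S = ∪_{v∈A} U_v, and define y_S = Σ_{i∈S} y_i, y'_S = (Σ_{i∈S} Σ_{j∈C} x_{i,j})/u,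 D_S = Σ_{i∈S} Σ_{j∈C} x_{i,j}·d(i,j), and D'_S = Σ_{i∈S} Σ_{j∈C} x_{i,j}·d_av(j). Suppose y'_S ≥ ⌊y_S⌋ and, for every J ⊆ C, Σ_{j∈J} Σ_{i∈S} x_{i,j} ≤ f(|J|, y_S). Then {y'_S}·(⌈y_S⌉ − y_S)·d(A, C*∖A) ≤ (4/u)·D_S + ((4ℓ+2)/u)·D'_S, where d(A, C*∖A) = min_{v∈A, v'∈C*∖A} d(v, v') and {y'_S} = y'_S − ⌊y'_S⌋. -/
open Finset

lemma f_le_floor_mul_add_fract_mul {u : ℕ} (hu : 0 < u) (p : ℕ) (q : ℝ) :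
    f u p q ≤ ⌊q⌋ * u + Int.fract q * (p - ⌊q⌋ * u) := by
  have hu' : (0 : ℝ) < u := by exact_mod_cast hu
  have hk : (⌊(p : ℝ) / u⌋ : ℝ) * u ≤ p := (le_div_iff₀ hu').1 (Int.floor_le _)
  have hs := Int.fract_nonneg q
  have hs1 := Int.fract_lt_one q
  have hq : ⌊q⌋ + Int.fract q = q := Int.floor_add_fract q
  unfold f
  split_ifs with h₁ h₂
  · rcases hs.eq_or_lt with h0 | h0
    · rw [← h0] at hq ⊢
      rw [← hq]
      simp
    · have hlt : (⌊q⌋ : ℝ) < ⌊(p : ℝ) / u⌋ := by linarith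
      have : ((⌊q⌋ : ℝ) + 1) * u ≤ p :=
        le_trans (by gcongr; exact_mod_cast Int.add_one_le_of_lt (Int.cast_lt.1 hlt)) hk
      nlinarith
  · have hfl : ⌊q⌋ = ⌊(p : ℝ) / u⌋ := by
      refine Int.floor_eq_iff.2 ⟨(not_le.1 h₁).le, h₂.trans_le ?_⟩
      exact_mod_cast Int.ceil_le_floor_add_one _
    have hup : (u : ℝ) * Int.fract ((p : ℝ) / u) = p - ⌊(p : ℝ) / u⌋ * u := by
      rw [← Int.self_sub_floor]
      field_simp
    rw [← Int.self_sub_floor q, hfl, hup]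
    nlinarith
  · have hp : (p : ℝ) ≤ ⌊q⌋ * u := by
      refine (div_le_iff₀ hu').1 ((Int.le_ceil _).trans ?_)
      exact_mod_cast Int.le_floor.2 (not_lt.1 h₂)
    nlinarith

lemma sum_filter_lt_le_sum_mul_one_sub {ι : Type*} (C : Finset ι) (a : ι → ℝ)
    (ha0 : ∀ j ∈ C, 0 ≤ a j) (ha1 : ∀ j ∈ C, a j ≤ 1) (s : ℝ) :
    s * #(C.filter (s < a ·)) + (1 - s) * ∑ j ∈ C, a j - ∑ j ∈ C.filter (s < a ·), a j ≤
      ∑ j ∈ C, a j * (1 - a j) := by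
  have hhigh : ∑ j ∈ C.filter (s < a ·), s * (1 - a j) ≤
      ∑ j ∈ C.filter (s < a ·), a j * (1 - a j) := by
    refine sum_le_sum fun j hj => ?_
    obtain ⟨hjC, hsj⟩ := mem_filter.1 hj
    exact mul_le_mul_of_nonneg_right hsj.le (sub_nonneg.2 (ha1 j hjC))
  have hlow : ∑ j ∈ C.filter (¬ s < a ·), (1 - s) * a j ≤
      ∑ j ∈ C.filter (¬ s < a ·), a j * (1 - a j) := by
    refine sum_le_sum fun j hj => ?_
    obtain ⟨hjC, hsj⟩ := mem_filter.1 hj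
    nlinarith [ha0 j hjC]
  have hcard : ∑ j ∈ C.filter (s < a ·), s * (1 - a j) =
      s * #(C.filter (s < a ·)) - s * ∑ j ∈ C.filter (s < a ·), a j := by
    rw [← mul_sum, sum_sub_distrib, sum_const, nsmul_one, mul_sub]
  rw [← mul_sum] at hlow
  rw [← sum_filter_add_sum_filter_not C (s < a ·) a,
    ← sum_filter_add_sum_filter_not C (s < a ·) (fun j => a j * (1 - a j))]
  linear_combination hhigh + hlow - hcard

lemma fract_le_sub_of_le {m : ℤ} {y : ℝ} (h : m ≤ y) : Int.fract y ≤ y - m := by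
  rw [← Int.self_sub_floor]
  exact sub_le_sub_left (Int.cast_le.2 (Int.le_floor.2 h)) y

lemma ceil_sub_self_le_one_sub_fract (q : ℝ) : ⌈q⌉ - q ≤ 1 - Int.fract q := by
  rw [← Int.self_sub_floor]
  have : (⌈q⌉ : ℝ) ≤ ⌊q⌋ + 1 := by exact_mod_cast Int.ceil_le_floor_add_one q
  linarith

lemma mul_fract_mul_ceil_sub_le {ι : Type*} (C : Finset ι) (a : ι → ℝ)
    (ha0 : ∀ j ∈ C, 0 ≤ a j) (ha1 : ∀ j ∈ C, a j ≤ 1) {u : ℕ} (hu : 0 < u) (q : ℝ)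
    (hq : ⌊q⌋ ≤ (∑ j ∈ C, a j) / u) (hrect : ∀ J ⊆ C, ∑ j ∈ J, a j ≤ f u #J q) :
    u * (Int.fract ((∑ j ∈ C, a j) / u) * (⌈q⌉ - q)) ≤ ∑ j ∈ C, a j * (1 - a j) := by
  have hu' : (0 : ℝ) < u := by exact_mod_cast hu
  have hJ := (hrect _ (filter_subset (Int.fract q < a ·) C)).trans
    (f_le_floor_mul_add_fract_mul hu _ q)
  have hthreshold := sum_filter_lt_le_sum_mul_one_sub C a ha0 ha1 (Int.fract q)
  have hprod : Int.fract ((∑ j ∈ C, a j) / u) * (⌈q⌉ - q) ≤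
      ((∑ j ∈ C, a j) / u - ⌊q⌋) * (1 - Int.fract q) :=
    mul_le_mul (fract_le_sub_of_le hq) (ceil_sub_self_le_one_sub_fract q)
      (sub_nonneg.2 (Int.le_ceil q)) (sub_nonneg.2 hq)
  have hscale : (u : ℝ) * (((∑ j ∈ C, a j) / u - ⌊q⌋) * (1 - Int.fract q)) =
      (1 - Int.fract q) * (∑ j ∈ C, a j - ⌊q⌋ * u) := by
    field_simp
  calc _ ≤ (u : ℝ) * (((∑ j ∈ C, a j) / u - ⌊q⌋) * (1 - Int.fract q)) :=
        mul_le_mul_of_nonneg_left hprod hu'.le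
    _ ≤ _ := by rw [hscale]; linarith

lemma sum_mul_sum_mul_le_of_le_add {ι : Type*} (P Q : Finset ι) (w α β : ι → ℝ) (D : ℝ)
    (hP : ∀ i ∈ P, 0 ≤ w i) (hQ : ∀ i ∈ Q, 0 ≤ w i) (h : ∀ i ∈ P, ∀ i' ∈ Q, D ≤ α i + β i') :
    (∑ i ∈ P, w i) * (∑ i ∈ Q, w i) * D ≤
      (∑ i ∈ Q, w i) * ∑ i ∈ P, w i * α i + (∑ i ∈ P, w i) * ∑ i ∈ Q, w i * β i := by
  calc _ = ∑ i ∈ P, ∑ i' ∈ Q, w i * w i' * D := by rw [sum_mul_sum, sum_mul]; simp_rw [sum_mul]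
    _ ≤ ∑ i ∈ P, ∑ i' ∈ Q, w i * w i' * (α i + β i') :=
        sum_le_sum fun i hi => sum_le_sum fun i' hi' =>
          mul_le_mul_of_nonneg_left (h i hi i' hi') (mul_nonneg (hP i hi) (hQ i' hi'))
    _ = _ := by
        simp_rw [mul_add, sum_add_distrib, mul_sum, sum_mul]
        rw [sum_comm (s := Q)]
        congr 1 <;> exact sum_congr rfl fun _ _ => sum_congr rfl fun _ _ => by ring

lemma mul_one_sub_mul_le_of_forall_le {ι : Type*} [DecidableEq ι] {F S : Finset ι} (hSF : S ⊆ F)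
    (w δ : ι → ℝ) (hw : ∀ i ∈ F, 0 ≤ w i) (hw1 : ∑ i ∈ F, w i = 1) (hδ : ∀ i ∈ F, 0 ≤ δ i)
    {dav : ℝ} (hdav : dav = ∑ i ∈ F, w i * δ i) {ℓ : ℝ} (hℓ : 0 ≤ ℓ) {D : ℝ}
    (h : ∀ i ∈ S, ∀ i' ∈ F \ S, D ≤ 4 * δ i + 4 * ℓ * dav + 2 * δ i') :
    (∑ i ∈ S, w i) * (1 - ∑ i ∈ S, w i) * D ≤
      4 * ∑ i ∈ S, w i * δ i + (4 * ℓ + 2) * ((∑ i ∈ S, w i) * dav) := by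
  set a := ∑ i ∈ S, w i
  have hwS : ∀ i ∈ S, 0 ≤ w i := fun i hi => hw i (hSF hi)
  have hwc : ∀ i ∈ F \ S, 0 ≤ w i := fun i hi => hw i (mem_sdiff.1 hi).1
  have hcompl : ∑ i ∈ F \ S, w i = 1 - a := by
    rw [← hw1, ← sum_sdiff hSF, add_sub_cancel_right]
  have ha0 : 0 ≤ a := sum_nonneg hwS
  have ha1 : a ≤ 1 := sub_nonneg.1 (hcompl ▸ sum_nonneg hwc)
  have hc0 : 0 ≤ ∑ i ∈ S, w i * δ i := sum_nonneg fun i hi => mul_nonneg (hwS i hi) (hδ i (hSF hi))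
  have he : ∑ i ∈ F \ S, w i * δ i ≤ dav := hdav ▸ sum_le_sum_of_subset_of_nonneg sdiff_subset
    fun i hi _ => mul_nonneg (hw i hi) (hδ i hi)
  have hdav0 : 0 ≤ dav := hdav ▸ sum_nonneg fun i hi => mul_nonneg (hw i hi) (hδ i hi)
  have hcut := sum_mul_sum_mul_le_of_le_add S (F \ S) w (fun i => 4 * δ i + 4 * ℓ * dav)
    (fun i => 2 * δ i) D hwS hwc h
  simp only [hcompl, mul_add, sum_add_distrib, ← sum_mul, mul_left_comm _ (2 : ℝ),
    mul_left_comm _ (4 : ℝ), ← mul_sum] at hcut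
  nlinarith [mul_nonneg ha0 hc0, mul_nonneg (mul_nonneg hℓ hdav0) (mul_nonneg ha0 ha0),
    mul_le_mul_of_nonneg_left he ha0]

lemma dist_le_of_dist_le_dist {X : Type*} [PseudoMetricSpace X] {v v' i' : X}
    (h : dist i' v' ≤ dist i' v) (i j : X) :
    dist v v' ≤ 2 * dist i v + 2 * dist i j + 2 * dist i' j := by
  have h₁ := dist_triangle4 v i j v'
  have h₂ := dist_triangle j i' v'
  have h₃ := dist_triangle4 i' j i v
  rw [dist_comm v i, dist_comm j i'] at *
  rw [dist_comm j i] at h₃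
  linarith

lemma le_dist_add_of_mem_biUnion {X : Type*} [PseudoMetricSpace X] [DecidableEq X]
    {F C Cs A : Finset X} {U : X → Finset X} {dav : X → ℝ} {ℓ dA : ℝ}
    (hcover : ∀ i ∈ F, ∃ v ∈ Cs, i ∈ U v)
    (hnear : ∀ v ∈ Cs, ∀ i ∈ U v, ∀ w ∈ Cs, dist i v ≤ dist i w)
    (hC4 : ∀ v ∈ Cs, ∀ i ∈ U v, ∀ j ∈ C, dist i v ≤ dist i j + 2 * ℓ * dav j)
    (hAsub : A ⊆ Cs) (hdA : dA ∈ lowerBounds {t | ∃ v ∈ A, ∃ v' ∈ Cs \ A, t = dist v v'})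
    {i i' j : X} (hi : i ∈ A.biUnion U) (hi' : i' ∈ F \ A.biUnion U) (hj : j ∈ C) :
    dA ≤ 4 * dist i j + 4 * ℓ * dav j + 2 * dist i' j := by
  obtain ⟨v, hvA, hiv⟩ := mem_biUnion.1 hi
  obtain ⟨hi'F, hi'S⟩ := mem_sdiff.1 hi'
  obtain ⟨v', hv', hi'v'⟩ := hcover i' hi'F
  have hv'A : v' ∉ A := fun h => hi'S (mem_biUnion.2 ⟨v', h, hi'v'⟩)
  have hsep : dA ≤ dist v v' := hdA ⟨v, hvA, v', mem_sdiff.2 ⟨hv', hv'A⟩, rfl⟩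
  have hvv' := dist_le_of_dist_le_dist (hnear v' hv' i' hi'v' v (hAsub hvA)) i j
  linarith [hC4 v (hAsub hvA) i hiv j hj]

theorem stmt12_general (X : Type) [PseudoMetricSpace X] [DecidableEq X]
    (u : ℕ) (hu : 1 ≤ u) (ℓ : ℕ)
    (F C : Finset X) (x : X → X → ℝ)
    (hx0 : ∀ i ∈ F, ∀ j ∈ C, 0 ≤ x i j)
    (hsum : ∀ j ∈ C, ∑ i ∈ F, x i j = 1)
    (dav : X → ℝ) (hdav : ∀ j ∈ C, dav j = ∑ i ∈ F, x i j * dist i j)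
    (Cs : Finset X) (U : X → Finset X)
    (hUsub : ∀ v ∈ Cs, U v ⊆ F)
    (hcover : ∀ i ∈ F, ∃ v ∈ Cs, i ∈ U v)
    (hnear : ∀ v ∈ Cs, ∀ i ∈ U v, ∀ w ∈ Cs, dist i v ≤ dist i w)
    (hC4 : ∀ v ∈ Cs, ∀ i ∈ U v, ∀ j ∈ C, dist i v ≤ dist i j + 2 * (ℓ : ℝ) * dav j)
    (A : Finset X) (hAsub : A ⊆ Cs)
    (S : Finset X) (hS : S = A.biUnion U)
    (yS y'S DS D'S : ℝ)
    (hy'S : y'S = (∑ i ∈ S, ∑ j ∈ C, x i j) / u)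
    (hDS : DS = ∑ i ∈ S, ∑ j ∈ C, x i j * dist i j)
    (hD'S : D'S = ∑ i ∈ S, ∑ j ∈ C, x i j * dav j)
    (hfloor : (⌊yS⌋ : ℝ) ≤ y'S)
    (hrect : ∀ J : Finset X, J ⊆ C → ∑ j ∈ J, ∑ i ∈ S, x i j ≤ f u J.card yS)
    (dA : ℝ)
    (hdA : IsLeast { t : ℝ | ∃ v ∈ A, ∃ v' ∈ Cs \ A, t = dist v v' } dA) :
    Int.fract y'S * ((⌈yS⌉ : ℝ) - yS) * dA ≤
      4 / (u : ℝ) * DS + (4 * (ℓ : ℝ) + 2) / (u : ℝ) * D'S := by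
  have hu' : (0 : ℝ) < u := by exact_mod_cast hu
  have hSF : S ⊆ F := hS ▸ biUnion_subset.2 fun v hv => hUsub v (hAsub hv)
  have hclient : ∀ j ∈ C, (∑ i ∈ S, x i j) * (1 - ∑ i ∈ S, x i j) * dA ≤
      4 * ∑ i ∈ S, x i j * dist i j + (4 * ℓ + 2) * ((∑ i ∈ S, x i j) * dav j) := by
    intro j hj
    exact mul_one_sub_mul_le_of_forall_le hSF (x · j) (dist · j) (fun i hi => hx0 i hi j hj)
      (hsum j hj) (fun _ _ => dist_nonneg) (hdav j hj) ℓ.cast_nonneg fun i hi i' hi' =>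
        le_dist_add_of_mem_biUnion hcover hnear hC4 hAsub hdA.2 (hS ▸ hi) (hS ▸ hi') hj
  have hcost := sum_le_sum hclient
  have hcount := mul_fract_mul_ceil_sub_le C (fun j => ∑ i ∈ S, x i j)
    (fun j hj => sum_nonneg fun i hi => hx0 i (hSF hi) j hj)
    (fun j hj => hsum j hj ▸ sum_le_sum_of_subset_of_nonneg hSF fun i hi _ => hx0 i hi j hj)
    hu yS (by rwa [sum_comm, ← hy'S]) hrect
  have hDS' : DS = ∑ j ∈ C, ∑ i ∈ S, x i j * dist i j := by rw [hDS, sum_comm]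
  have hD'S' : D'S = ∑ j ∈ C, (∑ i ∈ S, x i j) * dav j := by
    simp only [hD'S, sum_mul]
    exact sum_comm
  rw [← sum_mul, sum_add_distrib, ← mul_sum, ← mul_sum, ← hDS', ← hD'S'] at hcost
  rw [sum_comm, ← hy'S] at hcount
  have hdA0 : 0 ≤ dA := by
    obtain ⟨v, -, v', -, rfl⟩ := hdA.1
    exact dist_nonneg
  rw [div_mul_eq_mul_div, div_mul_eq_mul_div, ← add_div, le_div_iff₀ hu']
  linarith [mul_le_mul_of_nonneg_right hcount hdA0]

/-- **Lemma 4.2.** With the Voronoi partition `{U v}_{v∈Cs}` of `F` with centers the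
representatives `Cs`, for a set `∅ ⊊ A ⊊ Cs` with `S = ∪_{v∈A} U v`, if `y'_S ≥ ⌊y_S⌋`
and the rectangle constraint holds for `B = S` and every `J ⊆ C`, then
`{y'_S}·(⌈y_S⌉ − y_S)·d(A, Cs∖A) ≤ (4/u)·D_S + ((4ℓ+2)/u)·D'_S`. -/
theorem stmt12 (X : Type) [PseudoMetricSpace X] [DecidableEq X]
    (u : ℕ) (hu : 1 ≤ u) (ℓ : ℕ) (hℓ : 0 < ℓ)
    (F C : Finset X) (x : X → X → ℝ) (y : X → ℝ)
    (hx0 : ∀ i ∈ F, ∀ j ∈ C, 0 ≤ x i j)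
    (hy0 : ∀ i ∈ F, 0 ≤ y i)
    (hsum : ∀ j ∈ C, ∑ i ∈ F, x i j = 1)
    (dav : X → ℝ) (hdav : ∀ j ∈ C, dav j = ∑ i ∈ F, x i j * dist i j)
    (Cs : Finset X) (U : X → Finset X)
    (hUsub : ∀ v ∈ Cs, U v ⊆ F)
    (hdisj : ∀ v ∈ Cs, ∀ v' ∈ Cs, v ≠ v' → ∀ i, i ∈ U v → i ∉ U v')
    (hcover : ∀ i ∈ F, ∃ v ∈ Cs, i ∈ U v)
    (hnear : ∀ v ∈ Cs, ∀ i ∈ U v, ∀ w ∈ Cs, dist i v ≤ dist i w)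
    (hC4 : ∀ v ∈ Cs, ∀ i ∈ U v, ∀ j ∈ C, dist i v ≤ dist i j + 2 * (ℓ : ℝ) * dav j)
    (A : Finset X) (hA : A.Nonempty) (hAsub : A ⊆ Cs) (hAne : A ≠ Cs)
    (S : Finset X) (hS : S = A.biUnion U)
    (yS y'S DS D'S : ℝ)
    (hyS : yS = ∑ i ∈ S, y i)
    (hy'S : y'S = (∑ i ∈ S, ∑ j ∈ C, x i j) / u)
    (hDS : DS = ∑ i ∈ S, ∑ j ∈ C, x i j * dist i j)
    (hD'S : D'S = ∑ i ∈ S, ∑ j ∈ C, x i j * dav j)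
    (hfloor : (⌊yS⌋ : ℝ) ≤ y'S)
    (hrect : ∀ J : Finset X, J ⊆ C → ∑ j ∈ J, ∑ i ∈ S, x i j ≤ f u J.card yS)
    (dA : ℝ)
    (hdA : IsLeast { t : ℝ | ∃ v ∈ A, ∃ v' ∈ Cs \ A, t = dist v v' } dA) :
    Int.fract y'S * ((⌈yS⌉ : ℝ) - yS) * dA ≤
      4 / (u : ℝ) * DS + (4 * (ℓ : ℝ) + 2) / (u : ℝ) * D'S :=
  stmt12_general X u hu ℓ F C x hx0 hsum dav hdav Cs U hUsub hcover hnear hC4 A hAsub S hS yS y'S DS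
    D'S hy'S hDS hD'S hfloor hrect dA hdA
end

section
/- Let C* be a finite set of points in a metric space (X, d) and let ℓ be a positive integer with |C*| ≥ ℓ. Then there exists a finite set 𝕋 of neighborhood trees with respect to C* such that: (T1) every tree (V, E, r) ∈ 𝕋 satisfies ℓ ≤ |V| ≤ ℓ²; (T2) the union of the vertex sets of the trees in 𝕋 equals C*; and (T3) for any two distinct trees (V, E, r), (V', E', r') ∈ 𝕋, the sets V ∖ {r} and V' ∖ {r'} are disjoint. -/
namespace CKM

/-- A rooted tree on a finite vertex set `V` of points of `X`, encoded by its parent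
function: every vertex reaches the root by iterating `parent`, and the root is a fixed
point of `parent`. The edges of the tree are the pairs `(v, parent v)` for `v ∈ V`,
`v ≠ root`. -/
structure RootedTree (X : Type) where
  V : Finset X
  root : X
  root_mem : root ∈ V
  parent : X → X
  parent_mem : ∀ v ∈ V, parent v ∈ V
  parent_root : parent root = root
  reaches_root : ∀ v ∈ V, ∃ n : ℕ, parent^[n] v = root

/-- `Λ_T(v)`: the set of vertices in the subtree of `T` rooted at `v`. -/
def RootedTree.subtree {X : Type} (T : RootedTree X) (v : X) : Set X :=
  { w | w ∈ T.V ∧ ∃ n : ℕ, T.parent^[n] w = v }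

/-- A rooted tree `T` with vertices among `Cs` is a *neighborhood tree* with respect to
`Cs` if for every non-root vertex `v`, `d(v, Cs ∖ Λ_T(v)) = d(v, ρ_T(v))`, i.e. the
parent of `v` is a nearest point to `v` among all points of `Cs` outside the subtree
of `v`. -/
def IsNeighborhoodTree {X : Type} [PseudoMetricSpace X] (Cs : Finset X)
    (T : RootedTree X) : Prop :=
  (∀ v ∈ T.V, v ∈ Cs) ∧
  ∀ v ∈ T.V, v ≠ T.root →
    ∀ w ∈ Cs, w ∉ T.subtree v → dist v (T.parent v) ≤ dist v w

end CKM

open CKM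

/-!
The points of `Cs` are first organised into a forest, given by a parent map `p` whose roots are
its fixed points, in which every vertex `v` carries a guard `S v`: at most `ℓ` descendants of
`v` such that `p v` is a nearest point to `v` in `Cs ∖ S v`, roots having guards of exactly `ℓ`
points. It is grown by nearest-neighbour chains: from a fresh point, keep stepping to the
nearest point outside the chain; after `ℓ` points the chain is a new tree with the chain as
guard of its root, and if it runs into an older tree first it is hung below that tree. A tree
that contains all descendants of each of its non-root vertices is then a neighborhood tree.

The forest is then cut up. Call a vertex unguarded if it lies in no other vertex's guard; roots
are. Among the unguarded vertices with at least `ℓ` descendants pick `e` with the fewest. If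
`e` has at most `ℓ²` descendants its subtree is a piece. Otherwise the subtree of `e` is `S e`
together with subtrees of unguarded vertices hanging off `S e`, each of fewer than `ℓ` points
by minimality; as `|S e| ≤ ℓ`, some `w ∈ S e` carries at least `ℓ` such points, and `w` together
with a subfamily of its hanging subtrees of total size in `[ℓ, 2ℓ - 2]` is a piece. No guard
meets the subtree of an unguarded vertex, so removing the piece, except possibly its root `w`,
leaves a guarded forest, and the cutting goes on.
-/

open Finset Function

theorem Finset.exists_subset_le_sum_le {α : Type*} {s : Finset α} {f : α → ℕ} {k : ℕ}
    (hf : ∀ a ∈ s, f a < k) (hs : k ≤ ∑ a ∈ s, f a) :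
    ∃ t ⊆ s, k ≤ ∑ a ∈ t, f a ∧ ∑ a ∈ t, f a ≤ 2 * k - 2 := by
  classical
  induction s using Finset.strongInduction with
  | H s ih =>
  by_cases hsmall : ∑ a ∈ s, f a ≤ 2 * k - 2
  · exact ⟨s, subset_rfl, hs, hsmall⟩
  obtain ⟨a, ha⟩ : s.Nonempty := nonempty_of_sum_ne_zero (f := f) (by omega)
  have hsplit := add_sum_erase s f ha
  have hfa := hf a ha
  obtain ⟨t, hts, ht⟩ := ih (s.erase a) (erase_ssubset ha)
    (fun b hb => hf b (mem_of_mem_erase hb)) (by omega)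
  exact ⟨t, hts.trans (erase_subset a s), ht⟩

namespace CKM

variable {X : Type}

def Reaches (f : X → X) (x y : X) : Prop := ∃ n, f^[n] x = y

theorem iterate_eq_of_forall_ne {f g : X → X} {x w : X} (hfg : ∀ z, z ≠ w → g z = f z) :
    ∀ n, (∀ m < n, f^[m] x ≠ w) → g^[n] x = f^[n] x
  | 0, _ => rfl
  | n + 1, h => by
    rw [iterate_succ_apply', iterate_succ_apply',
      iterate_eq_of_forall_ne hfg n fun m hm => h m (by omega), hfg _ (h n (by omega))]

namespace Reaches

variable {f : X → X} {x y z w : X}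

theorem refl (f : X → X) (x : X) : Reaches f x x := ⟨0, rfl⟩

theorem trans (h₁ : Reaches f x y) (h₂ : Reaches f y z) : Reaches f x z := by
  obtain ⟨n, rfl⟩ := h₁
  obtain ⟨m, rfl⟩ := h₂
  exact ⟨m + n, iterate_add_apply f m n x⟩

theorem of_apply (h : Reaches f (f x) y) : Reaches f x y :=
  Reaches.trans ⟨1, rfl⟩ h

theorem apply_of_ne (h : Reaches f x y) (hne : x ≠ y) : Reaches f (f x) y := by
  obtain ⟨_ | n, hn⟩ := h
  · exact absurd hn hne
  · exact ⟨n, hn⟩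

theorem eq_of_isFixedPt (hx : f x = x) (h : Reaches f x y) : y = x := by
  obtain ⟨n, rfl⟩ := h
  exact iterate_fixed hx n

theorem total (hy : Reaches f x y) (hz : Reaches f x z) : Reaches f y z ∨ Reaches f z y := by
  obtain ⟨n, rfl⟩ := hy
  obtain ⟨m, rfl⟩ := hz
  rcases le_total n m with h | h
  · exact Or.inl ⟨m - n, by rw [← iterate_add_apply, Nat.sub_add_cancel h]⟩
  · exact Or.inr ⟨n - m, by rw [← iterate_add_apply, Nat.sub_add_cancel h]⟩

theorem antisymm (hz : f z = z) (hxz : Reaches f x z) (hxy : Reaches f x y)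
    (hyx : Reaches f y x) : x = y := by
  obtain ⟨a, rfl⟩ := hxy
  obtain ⟨b, hb⟩ := hyx
  obtain ⟨n, hn⟩ := hxz
  rcases Nat.eq_zero_or_pos (b + a) with h0 | hpos
  · rw [show a = 0 by omega, iterate_zero_apply]
  have hper : IsPeriodicPt f ((b + a) * n) x :=
    IsPeriodicPt.mul_const (by rw [IsPeriodicPt, IsFixedPt, iterate_add_apply, hb]) n
  have hxz : x = z := by
    rw [← hper.eq, ← Nat.sub_add_cancel (Nat.le_mul_of_pos_left n hpos), iterate_add_apply, hn,
      iterate_fixed hz]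
  rw [hxz, iterate_fixed hz]

theorem exists_first (h : Reaches f x y) : ∃ n, f^[n] x = y ∧ ∀ m < n, f^[m] x ≠ y := by
  classical
  exact ⟨Nat.find h, Nat.find_spec h, fun m hm => Nat.find_min h hm⟩

variable [DecidableEq X]

theorem update (h : Reaches f x y) (hw : Reaches f w y → w = y) (t : X) :
    Reaches (update f w t) x y := by
  obtain ⟨n, hn, hfirst⟩ := h.exists_first
  refine ⟨n, ?_⟩
  rw [iterate_eq_of_forall_ne (fun _ hz => update_of_ne hz _ _) n
    fun m hm hmw => hfirst m hm ?_, hn]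
  rw [← hw ⟨n - m, by rw [← hmw, ← iterate_add_apply, Nat.sub_add_cancel hm.le, hn]⟩, hmw]

theorem update_of_isFixedPt (hw : f w = w) (h : Reaches f x y) (t : X) :
    Reaches (Function.update f w t) x y :=
  h.update (fun hwy => (hwy.eq_of_isFixedPt hw).symm) t

theorem of_update {t : X} (h : Reaches (Function.update f w t) x y) :
    Reaches f x y ∨ Reaches f x w := by
  obtain ⟨n, hn⟩ := h
  by_cases hw : ∀ m < n, (Function.update f w t)^[m] x ≠ w
  · refine Or.inl ⟨n, ?_⟩
    rw [← hn, iterate_eq_of_forall_ne (fun _ hz => (update_of_ne hz _ _).symm) n hw]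
  · push Not at hw
    obtain ⟨m, -, hm⟩ := hw
    obtain ⟨k, hk, hfirst⟩ := Reaches.exists_first ⟨m, hm⟩
    refine Or.inr ⟨k, ?_⟩
    rw [← hk, iterate_eq_of_forall_ne (fun _ hz => (update_of_ne hz _ _).symm) k hfirst]

end Reaches

def RootedTree.ofReaches [DecidableEq X] (p : X → X) (V : Finset X) (z : X) (hz : z ∈ V)
    (hmap : ∀ v ∈ V, v ≠ z → p v ∈ V) (hreach : ∀ v ∈ V, Reaches p v z) : RootedTree X where
  V := V
  root := z
  root_mem := hz
  parent := update p z z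
  parent_mem v hv := by
    by_cases hvz : v = z
    · rwa [hvz, update_self]
    · rw [update_of_ne hvz]
      exact hmap v hv hvz
  parent_root := update_self ..
  reaches_root v hv := (hreach v hv).update (fun _ => rfl) z

open scoped Classical

noncomputable def descendants (F : Finset X) (p : X → X) (v : X) : Finset X :=
  F.filter (Reaches p · v)

theorem mem_descendants {F : Finset X} {p : X → X} {v x : X} :
    x ∈ descendants F p v ↔ x ∈ F ∧ Reaches p x v :=
  mem_filter

noncomputable def star (F : Finset X) (p : X → X) (z : X) (C : Finset X) : Finset X :=
  insert z (C.biUnion (descendants F p))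

theorem reaches_of_mem_star {F C : Finset X} {p : X → X} {z : X} (hC : ∀ c ∈ C, c = z ∨ p c = z) :
    ∀ v ∈ star F p z C, Reaches p v z := by
  intro v hv
  rcases mem_insert.1 hv with rfl | hv
  · exact Reaches.refl p v
  obtain ⟨c, hc, hvc⟩ := mem_biUnion.1 hv
  refine (mem_descendants.1 hvc).2.trans ?_
  rcases hC c hc with rfl | hcz
  · exact Reaches.refl p c
  · exact ⟨1, hcz⟩

noncomputable def guardChildren (F : Finset X) (p : X → X) (S : X → Finset X) (e : X) :
    Finset X :=
  F.filter fun c => c ∉ S e ∧ p c ∈ S e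

theorem mem_guardChildren {F : Finset X} {p : X → X} {S : X → Finset X} {c e : X} :
    c ∈ guardChildren F p S e ↔ c ∈ F ∧ c ∉ S e ∧ p c ∈ S e :=
  mem_filter

def IsUnguarded (F : Finset X) (S : X → Finset X) (c : X) : Prop :=
  ∀ a ∈ F, c ∈ S a → a = c

def NonrootDisjoint (𝕋 : Finset (RootedTree X)) : Prop :=
  ∀ T ∈ 𝕋, ∀ T' ∈ 𝕋, T ≠ T' → ∀ v ∈ T.V, v ≠ T.root → v ∈ T'.V → v = T'.root

theorem NonrootDisjoint.insert {𝕋 : Finset (RootedTree X)} {Q : RootedTree X}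
    (h𝕋 : NonrootDisjoint 𝕋) (hQ : ∀ T ∈ 𝕋, ∀ v ∈ Q.V, v ≠ Q.root → v ∉ T.V) :
    NonrootDisjoint (insert Q 𝕋) := by
  intro T hT T' hT' hne v hvT hv hvT'
  rcases mem_insert.1 hT with rfl | hT𝕋 <;> rcases mem_insert.1 hT' with rfl | hT'𝕋
  · exact absurd rfl hne
  · exact absurd hvT' (hQ T' hT'𝕋 v hvT hv)
  · by_contra hv'
    exact hQ T hT𝕋 v hvT' hv' hvT
  · exact h𝕋 T hT𝕋 T' hT'𝕋 hne v hvT hv hvT'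

def FullRoots (ℓ : ℕ) (F : Finset X) (p : X → X) (S : X → Finset X) : Prop :=
  ∀ r ∈ F, p r = r → #(S r) = ℓ

structure IsChainTip (ℓ : ℕ) (F : Finset X) (p : X → X) (S : X → Finset X) (w : X) : Prop where
  mem : w ∈ F
  isFixedPt : p w = w
  mem_guard_of_reaches : ∀ v ∈ F, Reaches p v w → v ∈ S w
  card_guard_eq : ∀ r ∈ F, p r = r → r ≠ w → #(S r) = ℓ

namespace IsChainTip

variable {ℓ : ℕ} {F : Finset X} {p : X → X} {S : X → Finset X} {w x : X}

theorem fullRoots_of_card_eq (ht : IsChainTip ℓ F p S w) (hw : #(S w) = ℓ) :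
    FullRoots ℓ F p S :=
  fun r hr hpr => if hrw : r = w then hrw ▸ hw else ht.card_guard_eq r hr hpr hrw

theorem fullRoots_link (ht : IsChainTip ℓ F p S w) (hxw : x ≠ w) :
    FullRoots ℓ F (update p w x) S := by
  intro r hr hpr
  have hrw : r ≠ w := by
    rintro rfl
    exact hxw (by rwa [update_self] at hpr)
  rw [update_of_ne hrw] at hpr
  exact ht.card_guard_eq r hr hpr hrw

end IsChainTip

structure GuardedForest [PseudoMetricSpace X] (Cs : Finset X) (ℓ : ℕ) (F : Finset X)
    (p : X → X) (S : X → Finset X) : Prop where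
  subset : F ⊆ Cs
  map_mem : ∀ v ∈ F, p v ∈ F
  exists_isFixedPt : ∀ v ∈ F, ∃ r, p r = r ∧ Reaches p v r
  self_mem_guard : ∀ v ∈ F, v ∈ S v
  guard_subset : ∀ v ∈ F, S v ⊆ F
  card_guard_le : ∀ v ∈ F, #(S v) ≤ ℓ
  reaches_of_mem_guard : ∀ v ∈ F, ∀ y ∈ S v, Reaches p y v
  map_mem_guard : ∀ v ∈ F, ∀ y ∈ S v, y ≠ v → p y ∈ S v
  guard_subset_guard : ∀ v ∈ F, ∀ y ∈ S v, S y ⊆ S v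
  dist_map_le : ∀ v ∈ F, p v ≠ v → ∀ u ∈ Cs, u ∉ S v → dist v (p v) ≤ dist v u

namespace GuardedForest

variable [PseudoMetricSpace X] {Cs F C G V : Finset X} {ℓ : ℕ} {p : X → X} {S : X → Finset X}
  {c c' e r u v w x y z : X}

theorem iterate_mem (hG : GuardedForest Cs ℓ F p S) (hv : v ∈ F) : ∀ n, p^[n] v ∈ F
  | 0 => hv
  | n + 1 => by
    rw [iterate_succ_apply']
    exact hG.map_mem _ (hG.iterate_mem hv n)

theorem mem_of_reaches (hG : GuardedForest Cs ℓ F p S) (hv : v ∈ F) (h : Reaches p v y) :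
    y ∈ F := by
  obtain ⟨n, rfl⟩ := h
  exact hG.iterate_mem hv n

theorem eq_of_reaches (hG : GuardedForest Cs ℓ F p S) (hv : v ∈ F) (hvu : Reaches p v u)
    (huv : Reaches p u v) : v = u := by
  obtain ⟨r, hr, hvr⟩ := hG.exists_isFixedPt v hv
  exact Reaches.antisymm hr hvr hvu huv

theorem isUnguarded_of_isFixedPt (hG : GuardedForest Cs ℓ F p S) (hr : p r = r) :
    IsUnguarded F S r := fun a ha hra =>
  (hG.reaches_of_mem_guard a ha r hra).eq_of_isFixedPt hr

theorem guard_subset_descendants (hG : GuardedForest Cs ℓ F p S) (hv : v ∈ F) :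
    S v ⊆ descendants F p v := fun y hy =>
  mem_descendants.2 ⟨hG.guard_subset v hv hy, hG.reaches_of_mem_guard v hv y hy⟩

theorem mem_guard_or_reaches (hG : GuardedForest Cs ℓ F p S) (hv : v ∈ F) (hy : y ∈ S v)
    (hyu : Reaches p y u) : u ∈ S v ∨ Reaches p v u := by
  obtain ⟨n, rfl⟩ := hyu
  induction n with
  | zero => exact Or.inl hy
  | succ n ih =>
    rw [iterate_succ_apply']
    rcases ih with h | h
    · by_cases hnv : p^[n] y = v
      · exact Or.inr ⟨1, by rw [hnv]; rfl⟩
      · exact Or.inl (hG.map_mem_guard v hv _ h hnv)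
    · exact Or.inr (h.trans ⟨1, rfl⟩)

theorem iterate_update_of_not_mem (hG : GuardedForest Cs ℓ F p S) (hv : v ∈ F)
    (hw : w ∉ F) (t : X) (n : ℕ) : (update p w t)^[n] v = p^[n] v :=
  iterate_eq_of_forall_ne (fun _ hz => update_of_ne hz _ _) n
    fun m _ hmw => hw (hmw ▸ hG.iterate_mem hv m)

theorem reaches_update_iff_of_not_mem (hG : GuardedForest Cs ℓ F p S)
    (hv : v ∈ F) (hw : w ∉ F) (t : X) : Reaches (update p w t) v y ↔ Reaches p v y := by
  simp only [Reaches, hG.iterate_update_of_not_mem hv hw t]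

theorem empty : GuardedForest Cs ℓ ∅ p S := by
  constructor <;> simp

theorem insert_root (hG : GuardedForest Cs ℓ F p S) (hℓ : 0 < ℓ) (hwC : w ∈ Cs) (hwF : w ∉ F) :
    GuardedForest Cs ℓ (insert w F) (update p w w) (update S w {w}) := by
  have hne : ∀ v ∈ F, v ≠ w := fun v hv hvw => hwF (hvw ▸ hv)
  have hp : ∀ v ∈ F, update p w w v = p v := fun v hv => update_of_ne (hne v hv) _ _
  have hS : ∀ v ∈ F, update S w {w} v = S v := fun v hv => update_of_ne (hne v hv) _ _
  have hy : ∀ v ∈ F, ∀ y ∈ S v, y ∈ F := fun v hv y hy => hG.guard_subset v hv hy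
  refine
    { subset := insert_subset hwC hG.subset
      map_mem := (forall_mem_insert ..).2 ⟨by simp, fun v hv => ?_⟩
      exists_isFixedPt := (forall_mem_insert ..).2
        ⟨⟨w, update_self .., Reaches.refl _ w⟩, fun v hv => ?_⟩
      self_mem_guard := (forall_mem_insert ..).2
        ⟨by simp, fun v hv => hS v hv ▸ hG.self_mem_guard v hv⟩
      guard_subset := (forall_mem_insert ..).2 ⟨by simp,
        fun v hv => hS v hv ▸ (hG.guard_subset v hv).trans (subset_insert w F)⟩
      card_guard_le := (forall_mem_insert ..).2
        ⟨by rwa [update_self, card_singleton], fun v hv => hS v hv ▸ hG.card_guard_le v hv⟩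
      reaches_of_mem_guard := (forall_mem_insert ..).2 ⟨by simpa using Reaches.refl _ w,
        fun v hv => hS v hv ▸ fun y hy' =>
          (hG.reaches_update_iff_of_not_mem (hy v hv y hy') hwF w).2
            (hG.reaches_of_mem_guard v hv y hy')⟩
      map_mem_guard := (forall_mem_insert ..).2 ⟨by simp, fun v hv => hS v hv ▸
        fun y hy' hyv => hp y (hy v hv y hy') ▸ hG.map_mem_guard v hv y hy' hyv⟩
      guard_subset_guard := (forall_mem_insert ..).2 ⟨by simp, fun v hv => hS v hv ▸
        fun y hy' => hS y (hy v hv y hy') ▸ hG.guard_subset_guard v hv y hy'⟩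
      dist_map_le := (forall_mem_insert ..).2
        ⟨by simp, fun v hv => hp v hv ▸ hS v hv ▸ hG.dist_map_le v hv⟩ }
  · rw [hp v hv]
    exact mem_insert_of_mem (hG.map_mem v hv)
  · obtain ⟨r, hr, hvr⟩ := hG.exists_isFixedPt v hv
    exact ⟨r, (hp r (hG.mem_of_reaches hv hvr)).trans hr,
      (hG.reaches_update_iff_of_not_mem hv hwF w).2 hvr⟩

theorem link (hG : GuardedForest Cs ℓ F p S) (hpw : p w = w) (hx : x ∈ F)
    (hxw : ¬Reaches p x w) (hdist : ∀ u ∈ Cs, u ∉ S w → dist w x ≤ dist w u) :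
    GuardedForest Cs ℓ F (update p w x) S := by
  have hreach : ∀ {v y}, Reaches p v y → Reaches (update p w x) v y := fun h =>
    h.update_of_isFixedPt hpw x
  have hp : ∀ v, v ≠ w → update p w x v = p v := fun v hv => update_of_ne hv _ _
  refine
    { hG with
      map_mem := fun v hv => ?_
      exists_isFixedPt := fun v hv => ?_
      reaches_of_mem_guard := fun v hv y hy => hreach (hG.reaches_of_mem_guard v hv y hy)
      map_mem_guard := fun v hv y hy hyv => ?_
      dist_map_le := fun v hv => ?_ }
  · by_cases hvw : v = w
    · rw [hvw, update_self]; exact hx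
    · rw [hp v hvw]; exact hG.map_mem v hv
  · obtain ⟨r, hr, hvr⟩ := hG.exists_isFixedPt v hv
    by_cases hrw : r = w
    · obtain ⟨r', hr', hxr'⟩ := hG.exists_isFixedPt x hx
      have hr'w : r' ≠ w := fun h => hxw (h ▸ hxr')
      refine ⟨r', (hp r' hr'w).trans hr', (hreach (hrw ▸ hvr)).trans ?_⟩
      exact Reaches.trans ⟨1, by rw [iterate_one, update_self]⟩ (hreach hxr')
    · exact ⟨r, (hp r hrw).trans hr, hreach hvr⟩
  · have hyw : y ≠ w := fun h =>
      hyv (h.trans ((h ▸ hG.reaches_of_mem_guard v hv y hy).eq_of_isFixedPt hpw).symm)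
    rw [hp y hyw]
    exact hG.map_mem_guard v hv y hy hyv
  · by_cases hvw : v = w
    · subst hvw
      rw [update_self]
      exact fun _ => hdist
    · rw [hp v hvw]
      exact hG.dist_map_le v hv

theorem update_guard (hG : GuardedForest Cs ℓ F p S) (hpx : p x = x)
    (hxG : x ∈ G) (hGF : G ⊆ F) (hcard : #G ≤ ℓ) (hreach : ∀ y ∈ G, Reaches p y x)
    (hmap : ∀ y ∈ G, y ≠ x → p y ∈ G) (hsub : ∀ y ∈ G, y ≠ x → S y ⊆ G) :
    GuardedForest Cs ℓ F p (update S x G) := by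
  have hS : ∀ v, v ≠ x → update S x G v = S v := fun v hv => update_of_ne hv _ _
  refine
    { hG with
      self_mem_guard := fun v hv => ?_
      guard_subset := fun v hv => ?_
      card_guard_le := fun v hv => ?_
      reaches_of_mem_guard := fun v hv => ?_
      map_mem_guard := fun v hv => ?_
      guard_subset_guard := fun v hv y hy => ?_
      dist_map_le := fun v hv hpv => ?_ } <;> obtain rfl | hvx := eq_or_ne v x
  · rwa [update_self]
  · rw [hS v hvx]; exact hG.self_mem_guard v hv
  · rwa [update_self]
  · rw [hS v hvx]; exact hG.guard_subset v hv
  · rwa [update_self]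
  · rw [hS v hvx]; exact hG.card_guard_le v hv
  · rwa [update_self]
  · rw [hS v hvx]; exact hG.reaches_of_mem_guard v hv
  · rwa [update_self]
  · rw [hS v hvx]; exact hG.map_mem_guard v hv
  · rw [update_self] at hy ⊢
    obtain rfl | hyv := eq_or_ne y v
    · rw [update_self]
    · rw [hS y hyv]
      exact hsub y hy hyv
  · rw [hS v hvx] at hy ⊢
    have hyx : y ≠ x := fun h =>
      hvx ((h ▸ hG.reaches_of_mem_guard v hv y hy).eq_of_isFixedPt hpx)
    rw [hS y hyx]
    exact hG.guard_subset_guard v hv y hy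
  · exact absurd hpx hpv
  · rw [hS v hvx]; exact hG.dist_map_le v hv hpv

theorem extend (hG : GuardedForest Cs ℓ F p S) (hw : w ∈ F) (hpw : p w = w)
    (hlt : #(S w) < ℓ) (hxC : x ∈ Cs) (hxF : x ∉ F)
    (hdist : ∀ u ∈ Cs, u ∉ S w → dist w x ≤ dist w u) :
    GuardedForest Cs ℓ (insert x F) (update (update p x x) w x)
      (update S x (insert x (S w))) := by
  have hwx : w ≠ x := fun h => hxF (h ▸ hw)
  have hG₁ := hG.insert_root (Nat.zero_lt_of_lt hlt) hxC hxF
  have hS₁ : update S x {x} w = S w := update_of_ne hwx _ _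
  have hG₂ := hG₁.link (by rw [update_of_ne hwx]; exact hpw) (mem_insert_self x F)
    (fun h => hwx (h.eq_of_isFixedPt (update_self ..))) (hS₁ ▸ hdist)
  have hw₂ : w ∈ insert x F := mem_insert_of_mem hw
  rw [← update_idem (a := x) ({x} : Finset X) _ S]
  refine hG₂.update_guard (by rw [update_of_ne hwx.symm, update_self]) (mem_insert_self x _)
    (insert_subset_insert x (hG.guard_subset w hw)) ((card_insert_le _ _).trans hlt)
    ?_ ?_ ?_
  · refine (forall_mem_insert ..).2 ⟨Reaches.refl _ x, fun y hy => ?_⟩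
    exact (hG₂.reaches_of_mem_guard w hw₂ y (hS₁ ▸ hy)).trans
      ⟨1, by rw [iterate_one, update_self]⟩
  · refine (forall_mem_insert ..).2 ⟨fun h => absurd rfl h, fun y hy _ => ?_⟩
    by_cases hyw : y = w
    · rw [hyw, update_self]
      exact mem_insert_self x _
    · exact mem_insert_of_mem (hS₁ ▸ hG₂.map_mem_guard w hw₂ y (hS₁ ▸ hy) hyw)
  · refine (forall_mem_insert ..).2 ⟨fun h => absurd rfl h, fun y hy _ => ?_⟩
    exact (hG₁.guard_subset_guard w hw₂ y (hS₁ ▸ hy)).trans (hS₁ ▸ subset_insert x _)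

theorem isChainTip_insert_root (hG : GuardedForest Cs ℓ F p S) (hroots : FullRoots ℓ F p S)
    (hwF : w ∉ F) : IsChainTip ℓ (insert w F) (update p w w) (update S w {w}) w where
  mem := mem_insert_self w F
  isFixedPt := update_self ..
  mem_guard_of_reaches v hv hvw := by
    rw [update_self]
    rcases mem_insert.1 hv with rfl | hvF
    · exact mem_singleton_self v
    · rw [hG.reaches_update_iff_of_not_mem hvF hwF] at hvw
      exact absurd (hG.mem_of_reaches hvF hvw) hwF
  card_guard_eq r hr hpr hrw := by
    rw [update_of_ne hrw] at hpr ⊢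
    exact hroots r ((mem_insert.1 hr).resolve_left hrw) hpr

theorem isChainTip_extend (hG : GuardedForest Cs ℓ F p S) (ht : IsChainTip ℓ F p S w)
    (hxF : x ∉ F) (hxw : x ≠ w) :
    IsChainTip ℓ (insert x F) (update (update p x x) w x) (update S x (insert x (S w))) x where
  mem := mem_insert_self x F
  isFixedPt := by rw [update_of_ne hxw, update_self]
  mem_guard_of_reaches v hv hvx := by
    rw [update_self]
    rcases mem_insert.1 hv with rfl | hvF
    · exact mem_insert_self v _
    rcases hvx.of_update with h | h <;> rw [hG.reaches_update_iff_of_not_mem hvF hxF] at h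
    · exact absurd (hG.mem_of_reaches hvF h) hxF
    · exact mem_insert_of_mem (ht.mem_guard_of_reaches v hvF h)
  card_guard_eq r hr hpr hrx := by
    have hrw : r ≠ w := by
      rintro rfl
      exact hxw (by rwa [update_self] at hpr)
    rw [update_of_ne hrw, update_of_ne hrx] at hpr
    rw [update_of_ne hrx]
    exact ht.card_guard_eq r ((mem_insert.1 hr).resolve_left hrx) hpr hrw

theorem exists_superset_of_isChainTip (hG : GuardedForest Cs ℓ F p S) (hCs : ℓ ≤ #Cs)
    (ht : IsChainTip ℓ F p S w) :
    ∃ F' p' S', F ⊆ F' ∧ GuardedForest Cs ℓ F' p' S' ∧ FullRoots ℓ F' p' S' := by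
  obtain ⟨n, hn⟩ : ∃ n, ℓ - #(S w) = n := ⟨_, rfl⟩
  induction n using Nat.strong_induction_on generalizing F p S w with
  | _ n ih =>
  by_cases hfull : #(S w) = ℓ
  · exact ⟨F, p, S, subset_rfl, hG, ht.fullRoots_of_card_eq hfull⟩
  have hlt : #(S w) < ℓ := lt_of_le_of_ne (hG.card_guard_le w ht.mem) hfull
  have hne : (Cs \ S w).Nonempty := by
    rw [← card_pos, card_sdiff_of_subset ((hG.guard_subset w ht.mem).trans hG.subset)]
    omega
  obtain ⟨x, hx, hmin⟩ := exists_min_image (Cs \ S w) (dist w) hne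
  obtain ⟨hxC, hxS⟩ := mem_sdiff.1 hx
  have hdist : ∀ u ∈ Cs, u ∉ S w → dist w x ≤ dist w u := fun u hu huS =>
    hmin u (mem_sdiff.2 ⟨hu, huS⟩)
  have hxw : x ≠ w := fun h => hxS (h ▸ hG.self_mem_guard w ht.mem)
  by_cases hxF : x ∈ F
  · exact ⟨F, _, S, subset_rfl,
      hG.link ht.isFixedPt hxF (fun h => hxS (ht.mem_guard_of_reaches x hxF h)) hdist,
      ht.fullRoots_link hxw⟩
  obtain ⟨F', p', S', hF', hG', hroots'⟩ :=
    ih _ (by rw [update_self, card_insert_of_notMem hxS]; omega)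
      (hG.extend ht.mem ht.isFixedPt hlt hxC hxF hdist) (hG.isChainTip_extend ht hxF hxw) rfl
  exact ⟨F', p', S', (subset_insert x F).trans hF', hG', hroots'⟩

theorem exists_spanning (hG : GuardedForest Cs ℓ F p S) (hℓ : 0 < ℓ) (hCs : ℓ ≤ #Cs)
    (hroots : FullRoots ℓ F p S) :
    ∃ p' S', GuardedForest Cs ℓ Cs p' S' ∧ FullRoots ℓ Cs p' S' := by
  obtain ⟨n, hn⟩ : ∃ n, #(Cs \ F) = n := ⟨_, rfl⟩
  induction n using Nat.strong_induction_on generalizing F p S with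
  | _ n ih =>
  rcases (Cs \ F).eq_empty_or_nonempty with hCF | ⟨w, hw⟩
  · obtain rfl : F = Cs := hG.subset.antisymm (sdiff_eq_empty_iff_subset.1 hCF)
    exact ⟨p, S, hG, hroots⟩
  obtain ⟨hwC, hwF⟩ := mem_sdiff.1 hw
  obtain ⟨F', p', S', hF', hG', hroots'⟩ :=
    (hG.insert_root hℓ hwC hwF).exists_superset_of_isChainTip hCs
      (hG.isChainTip_insert_root hroots hwF)
  have hlt : #(Cs \ F') < #(Cs \ F) := by
    refine card_lt_card (ssubset_iff_of_subset ?_ |>.2 ⟨w, hw, fun h => ?_⟩)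
    · exact sdiff_subset_sdiff subset_rfl ((subset_insert w F).trans hF')
    · exact (mem_sdiff.1 h).2 (hF' (mem_insert_self w F))
  exact ih _ (hn ▸ hlt) hG' hroots' rfl

theorem isNeighborhoodTree_ofReaches (hG : GuardedForest Cs ℓ F p S)
    (hz : z ∈ V) (hmap : ∀ v ∈ V, v ≠ z → p v ∈ V) (hreach : ∀ v ∈ V, Reaches p v z)
    (hVF : V ⊆ F) (hdesc : ∀ v ∈ V, v ≠ z → descendants F p v ⊆ V) :
    IsNeighborhoodTree Cs (RootedTree.ofReaches p V z hz hmap hreach) := by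
  refine ⟨fun v hv => hG.subset (hVF hv), fun v hv hvz u hu hsub => ?_⟩
  change dist v (update p z z v) ≤ dist v u
  rw [update_of_ne (show v ≠ z from hvz)]
  have hpv : p v ≠ v := fun h => hvz ((hreach v hv).eq_of_isFixedPt h).symm
  refine hG.dist_map_le v (hVF hv) hpv u hu fun huS => hsub ⟨?_, ?_⟩
  · exact hdesc v hv hvz (hG.guard_subset_descendants (hVF hv) huS)
  · exact (hG.reaches_of_mem_guard v (hVF hv) u huS).update
      (fun hzv => hG.eq_of_reaches (hVF hz) hzv (hreach v hv)) z

theorem map_mem_star (hG : GuardedForest Cs ℓ F p S)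
    (hC : ∀ c ∈ C, c = z ∨ p c = z) : ∀ v ∈ star F p z C, v ≠ z → p v ∈ star F p z C := by
  intro v hv hvz
  obtain ⟨c, hc, hvc⟩ := mem_biUnion.1 ((mem_insert.1 hv).resolve_left hvz)
  obtain ⟨hvF, hvc⟩ := mem_descendants.1 hvc
  by_cases hv : v = c
  · rcases hC c hc with hcz | hcz
    · exact absurd (hv.trans hcz) hvz
    · rw [hv, hcz]
      exact mem_insert_self z _
  · exact mem_insert_of_mem
      (mem_biUnion.2 ⟨c, hc, mem_descendants.2 ⟨hG.map_mem v hvF, hvc.apply_of_ne hv⟩⟩)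

noncomputable def starTree (hG : GuardedForest Cs ℓ F p S)
    (hC : ∀ c ∈ C, c = z ∨ p c = z) : RootedTree X :=
  RootedTree.ofReaches p (star F p z C) z (mem_insert_self z _) (hG.map_mem_star hC)
    (reaches_of_mem_star hC)

theorem isNeighborhoodTree_starTree (hG : GuardedForest Cs ℓ F p S)
    (hz : z ∈ F) (hC : ∀ c ∈ C, c = z ∨ p c = z) :
    IsNeighborhoodTree Cs (hG.starTree hC) := by
  refine hG.isNeighborhoodTree_ofReaches _ _ _ ?_ ?_
  · exact insert_subset hz (biUnion_subset.2 fun c _ => filter_subset _ _)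
  · intro v hv hvz y hy
    obtain ⟨c, hc, hvc⟩ := mem_biUnion.1 ((mem_insert.1 hv).resolve_left hvz)
    obtain ⟨hyF, hyv⟩ := mem_descendants.1 hy
    exact mem_insert_of_mem
      (mem_biUnion.2 ⟨c, hc, mem_descendants.2 ⟨hyF, hyv.trans (mem_descendants.1 hvc).2⟩⟩)

theorem mem_descendants_of_mem_guard (hG : GuardedForest Cs ℓ F p S)
    (hc : IsUnguarded F S c) (hv : v ∈ F) (hy : y ∈ S v) (hyc : y ∈ descendants F p c) :
    v ∈ descendants F p c := by
  rcases hG.mem_guard_or_reaches hv hy (mem_descendants.1 hyc).2 with hcv | hvc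
  · exact mem_descendants.2 ⟨hv, hc v hv hcv ▸ Reaches.refl p v⟩
  · exact mem_descendants.2 ⟨hv, hvc⟩

theorem sdiff (hG : GuardedForest Cs ℓ F p S)
    (hC : ∀ c ∈ C, IsUnguarded F S c) :
    GuardedForest Cs ℓ (F \ C.biUnion (descendants F p)) p S := by
  have hF : ∀ v ∈ F \ C.biUnion (descendants F p), v ∈ F := fun v hv => (mem_sdiff.1 hv).1
  refine
    { subset := sdiff_subset.trans hG.subset
      map_mem := fun v hv => mem_sdiff.2 ⟨hG.map_mem v (hF v hv), fun hpv => ?_⟩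
      exists_isFixedPt := fun v hv => hG.exists_isFixedPt v (hF v hv)
      self_mem_guard := fun v hv => hG.self_mem_guard v (hF v hv)
      guard_subset := fun v hv y hy => mem_sdiff.2 ⟨hG.guard_subset v (hF v hv) hy, fun hyD => ?_⟩
      card_guard_le := fun v hv => hG.card_guard_le v (hF v hv)
      reaches_of_mem_guard := fun v hv => hG.reaches_of_mem_guard v (hF v hv)
      map_mem_guard := fun v hv => hG.map_mem_guard v (hF v hv)
      guard_subset_guard := fun v hv => hG.guard_subset_guard v (hF v hv)
      dist_map_le := fun v hv => hG.dist_map_le v (hF v hv) }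
  · obtain ⟨c, hc, hpvc⟩ := mem_biUnion.1 hpv
    refine (mem_sdiff.1 hv).2 (mem_biUnion.2 ⟨c, hc, mem_descendants.2 ⟨hF v hv, ?_⟩⟩)
    exact (mem_descendants.1 hpvc).2.of_apply
  · obtain ⟨c, hc, hyc⟩ := mem_biUnion.1 hyD
    exact (mem_sdiff.1 hv).2
      (mem_biUnion.2 ⟨c, hc, hG.mem_descendants_of_mem_guard (hC c hc) (hF v hv) hy hyc⟩)

theorem reaches_of_mem_guardChildren (hG : GuardedForest Cs ℓ F p S) (he : e ∈ F)
    (hc : c ∈ guardChildren F p S e) : Reaches p c e :=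
  (hG.reaches_of_mem_guard e he _ (mem_guardChildren.1 hc).2.2).of_apply

theorem ne_of_mem_guardChildren (hG : GuardedForest Cs ℓ F p S) (he : e ∈ F)
    (hc : c ∈ guardChildren F p S e) : c ≠ e := by
  rintro rfl
  exact (mem_guardChildren.1 hc).2.1 (hG.self_mem_guard c he)

/-- The orbit of `p c` runs inside `S e` up to `e`; a guard `S a ∋ c` with `a ≠ c` also
contains `p c`, and laminarity of the guards forces `a = e`, contradicting `c ∉ S e`. -/
theorem isUnguarded_of_mem_guardChildren (hG : GuardedForest Cs ℓ F p S)
    (he : e ∈ F) (heu : IsUnguarded F S e) (hc : c ∈ guardChildren F p S e) :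
    IsUnguarded F S c := by
  obtain ⟨-, hcS, hpc⟩ := mem_guardChildren.1 hc
  intro a ha hca
  by_contra hac
  have hpca : p c ∈ S a := hG.map_mem_guard a ha c hca (Ne.symm hac)
  rcases hG.mem_guard_or_reaches he hpc (hG.reaches_of_mem_guard a ha _ hpca) with hae | hea
  · exact hcS (hG.guard_subset_guard e he a hae hca)
  rcases hG.mem_guard_or_reaches ha hpca (hG.reaches_of_mem_guard e he _ hpc) with hea' | hae
  · exact hcS (heu a ha hea' ▸ hca)
  · exact hcS (hG.eq_of_reaches ha hae hea ▸ hca)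

theorem descendants_ssubset_of_mem_guardChildren (hG : GuardedForest Cs ℓ F p S)
    (he : e ∈ F) (hc : c ∈ guardChildren F p S e) :
    descendants F p c ⊂ descendants F p e := by
  have hce := hG.reaches_of_mem_guardChildren he hc
  refine ssubset_iff_of_subset (fun x hx => ?_) |>.2 ⟨e, ?_, fun hec => ?_⟩
  · exact mem_descendants.2 ⟨(mem_descendants.1 hx).1, (mem_descendants.1 hx).2.trans hce⟩
  · exact mem_descendants.2 ⟨he, Reaches.refl p e⟩
  · exact hG.ne_of_mem_guardChildren he hc
      (hG.eq_of_reaches he (mem_descendants.1 hec).2 hce).symm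

theorem descendants_subset_guard_union (hG : GuardedForest Cs ℓ F p S) (he : e ∈ F) :
    descendants F p e ⊆ S e ∪ (guardChildren F p S e).biUnion (descendants F p) := by
  intro x hx
  obtain ⟨hxF, n, hn⟩ := mem_descendants.1 hx
  by_cases hxS : x ∈ S e
  · exact mem_union_left _ hxS
  have hex : ∃ k, p^[k] x ∈ S e := ⟨n, hn ▸ hG.self_mem_guard e he⟩
  have hpos : 0 < Nat.find hex :=
    Nat.pos_of_ne_zero fun h => hxS (by simpa [h] using Nat.find_spec hex)
  have hc : p^[Nat.find hex - 1] x ∈ guardChildren F p S e := by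
    refine mem_guardChildren.2 ⟨hG.iterate_mem hxF _, Nat.find_min hex (by omega), ?_⟩
    rw [← iterate_succ_apply' p, Nat.succ_eq_add_one, Nat.sub_add_cancel hpos]
    exact Nat.find_spec hex
  exact mem_union_right _ (mem_biUnion.2 ⟨_, hc, mem_descendants.2 ⟨hxF, _, rfl⟩⟩)

theorem card_descendants_le (hG : GuardedForest Cs ℓ F p S) (he : e ∈ F) :
    #(descendants F p e) ≤
      ∑ w ∈ S e, (1 + ∑ c ∈ guardChildren F p S e with p c = w, #(descendants F p c)) := by
  calc #(descendants F p e)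
      ≤ #(S e ∪ (guardChildren F p S e).biUnion (descendants F p)) :=
        card_le_card (hG.descendants_subset_guard_union he)
    _ ≤ #(S e) + ∑ c ∈ guardChildren F p S e, #(descendants F p c) :=
        (card_union_le _ _).trans (Nat.add_le_add_left card_biUnion_le _)
    _ = _ := by
        rw [sum_add_distrib, card_eq_sum_ones,
          sum_fiberwise_of_maps_to (fun c hc => (mem_guardChildren.1 hc).2.2)
            fun c => #(descendants F p c)]

theorem exists_le_sum_of_sq_lt (hG : GuardedForest Cs ℓ F p S) (he : e ∈ F)
    (hlarge : ℓ ^ 2 < #(descendants F p e)) :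
    ∃ w ∈ S e, ℓ ≤ ∑ c ∈ guardChildren F p S e with p c = w, #(descendants F p c) := by
  by_contra! hlt
  refine hlarge.not_ge ((hG.card_descendants_le he).trans ?_)
  calc ∑ w ∈ S e, (1 + ∑ c ∈ guardChildren F p S e with p c = w, #(descendants F p c))
      ≤ ∑ _w ∈ S e, ℓ := sum_le_sum fun w hw => Nat.one_add_le_iff.2 (hlt w hw)
    _ ≤ ℓ ^ 2 := by
      rw [sum_const, smul_eq_mul, sq]
      exact Nat.mul_le_mul_right ℓ (hG.card_guard_le e he)

theorem eq_of_reaches_of_map_eq (hG : GuardedForest Cs ℓ F p S) (hc : c ∈ F)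
    (hpc : p c = p c') (hc' : p c' ≠ c') (h : Reaches p c c') : c = c' := by
  by_contra hne
  have hcc' : Reaches p (p c) c' := h.apply_of_ne hne
  have hc'c : Reaches p c' (p c) := ⟨1, hpc.symm⟩
  exact hc' (hpc.symm.trans (hG.eq_of_reaches (hG.map_mem c hc) hcc' hc'c))

theorem pairwiseDisjoint_descendants (hG : GuardedForest Cs ℓ F p S)
    (hC : ∀ c ∈ C, p c = w ∧ c ≠ w) : (C : Set X).PairwiseDisjoint (descendants F p) := by
  intro c hc c' hc' hne
  refine disjoint_left.2 fun x hxc hxc' => hne ?_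
  obtain ⟨hxF, hxc⟩ := mem_descendants.1 hxc
  have hpc : p c = p c' := (hC c hc).1.trans (hC c' hc').1.symm
  have hxc' := (mem_descendants.1 hxc').2
  rcases hxc.total hxc' with h | h
  · exact hG.eq_of_reaches_of_map_eq (hG.mem_of_reaches hxF hxc) hpc
      ((hC c' hc').1 ▸ (hC c' hc').2.symm) h
  · exact (hG.eq_of_reaches_of_map_eq (hG.mem_of_reaches hxF hxc') hpc.symm
      ((hC c hc).1 ▸ (hC c hc).2.symm) h).symm

theorem exists_heavy_with_light_children (hG : GuardedForest Cs ℓ F p S)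
    (hroots : FullRoots ℓ F p S) (hF : F.Nonempty) :
    ∃ e ∈ F, IsUnguarded F S e ∧ ℓ ≤ #(descendants F p e) ∧
      ∀ c ∈ guardChildren F p S e, #(descendants F p c) < ℓ := by
  obtain ⟨v, hv⟩ := hF
  obtain ⟨r, hr, hvr⟩ := hG.exists_isFixedPt v hv
  have hrF := hG.mem_of_reaches hv hvr
  set H := F.filter fun v => IsUnguarded F S v ∧ ℓ ≤ #(descendants F p v)
  have hrH : r ∈ H := mem_filter.2 ⟨hrF, hG.isUnguarded_of_isFixedPt hr,
    hroots r hrF hr ▸ card_le_card (hG.guard_subset_descendants hrF)⟩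
  obtain ⟨e, heH, hmin⟩ := exists_min_image H (fun v => #(descendants F p v)) ⟨r, hrH⟩
  obtain ⟨he, heu, hheavy⟩ := mem_filter.1 heH
  refine ⟨e, he, heu, hheavy, fun c hc => ?_⟩
  by_contra! hcheavy
  have hce := hmin c (mem_filter.2 ⟨(mem_guardChildren.1 hc).1,
    hG.isUnguarded_of_mem_guardChildren he heu hc, hcheavy⟩)
  exact (card_lt_card (hG.descendants_ssubset_of_mem_guardChildren he hc)).not_ge hce

theorem exists_cut (hG : GuardedForest Cs ℓ F p S) (hroots : FullRoots ℓ F p S)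
    (hF : F.Nonempty) :
    ∃ z ∈ F, ∃ C : Finset X, C.Nonempty ∧
      (∀ c ∈ C, c ∈ F ∧ IsUnguarded F S c ∧ (c = z ∨ p c = z)) ∧
      ℓ ≤ #(star F p z C) ∧ #(star F p z C) ≤ ℓ ^ 2 := by
  obtain ⟨e, he, heu, hheavy, hlight⟩ := hG.exists_heavy_with_light_children hroots hF
  by_cases hsmall : #(descendants F p e) ≤ ℓ ^ 2
  · have hstar : star F p e {e} = descendants F p e := by
      rw [star, singleton_biUnion, insert_eq_of_mem (mem_descendants.2 ⟨he, Reaches.refl p e⟩)]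
    exact ⟨e, he, {e}, singleton_nonempty e, by simpa using ⟨he, heu⟩, hstar ▸ hheavy,
      hstar ▸ hsmall⟩
  have hℓ : 0 < ℓ := (card_pos.2 ⟨e, hG.self_mem_guard e he⟩).trans_le (hG.card_guard_le e he)
  obtain ⟨w, hw, hwsum⟩ := hG.exists_le_sum_of_sq_lt he (not_le.1 hsmall)
  obtain ⟨C, hCw, hlow, hhigh⟩ :=
    exists_subset_le_sum_le (fun c hc => hlight c (mem_filter.1 hc).1) hwsum
  have hC : ∀ c ∈ C, c ∈ guardChildren F p S e ∧ p c = w := fun c hc => mem_filter.1 (hCw hc)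
  have hcw : ∀ c ∈ C, c ≠ w := fun c hc hcw =>
    (mem_guardChildren.1 (hC c hc).1).2.1 (hcw ▸ hw)
  have hcard : #(C.biUnion (descendants F p)) = ∑ c ∈ C, #(descendants F p c) :=
    card_biUnion (hG.pairwiseDisjoint_descendants fun c hc => ⟨(hC c hc).2, hcw c hc⟩)
  refine ⟨w, hG.guard_subset e he hw, C, ?_, fun c hc => ⟨(mem_guardChildren.1 (hC c hc).1).1,
    hG.isUnguarded_of_mem_guardChildren he heu (hC c hc).1, Or.inr (hC c hc).2⟩, ?_, ?_⟩
  · exact nonempty_of_sum_ne_zero (f := fun c => #(descendants F p c)) (by omega)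
  · exact (hlow.trans_eq hcard.symm).trans (card_le_card (subset_insert _ _))
  · calc #(star F p w C) ≤ #(C.biUnion (descendants F p)) + 1 := card_insert_le _ _
      _ ≤ 2 * ℓ - 2 + 1 := by omega
      _ ≤ ℓ ^ 2 := by
        have : 2 * ℓ ≤ ℓ ^ 2 + 1 := by zify; nlinarith [sq_nonneg ((ℓ : ℤ) - 1)]
        omega

theorem exists_partition (hG : GuardedForest Cs ℓ F p S)
    (hroots : FullRoots ℓ F p S) :
    ∃ 𝕋 : Finset (RootedTree X),
      (∀ T ∈ 𝕋, IsNeighborhoodTree Cs T ∧ ℓ ≤ #T.V ∧ #T.V ≤ ℓ ^ 2 ∧ T.V ⊆ F) ∧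
      (∀ v ∈ F, ∃ T ∈ 𝕋, v ∈ T.V) ∧ NonrootDisjoint 𝕋 := by
  induction F using Finset.strongInduction with
  | H F ih =>
  rcases F.eq_empty_or_nonempty with rfl | hF
  · exact ⟨∅, by simp, by simp, by simp [NonrootDisjoint]⟩
  obtain ⟨z, hz, C, ⟨c, hc⟩, hC, hlow, hhigh⟩ := hG.exists_cut hroots hF
  set D := C.biUnion (descendants F p)
  have hDF : D ⊆ F := biUnion_subset.2 fun c _ => filter_subset _ _
  have hcD : c ∈ D := mem_biUnion.2 ⟨c, hc, mem_descendants.2 ⟨(hC c hc).1, Reaches.refl p c⟩⟩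
  obtain ⟨𝕋, h𝕋, hcover, hdisj⟩ := ih (F \ D) (sdiff_ssubset hDF ⟨c, hcD⟩)
    (hG.sdiff fun c hc => (hC c hc).2.1) fun r hr => hroots r (mem_sdiff.1 hr).1
  have hCz : ∀ c ∈ C, c = z ∨ p c = z := fun c hc => (hC c hc).2.2
  have hQV : (hG.starTree hCz).V = insert z D := rfl
  refine ⟨insert (hG.starTree hCz) 𝕋, ?_, fun v hv => ?_, hdisj.insert ?_⟩
  · intro T hT
    rcases mem_insert.1 hT with rfl | hT
    · exact ⟨hG.isNeighborhoodTree_starTree hz hCz, hlow, hhigh, insert_subset hz hDF⟩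
    · obtain ⟨h1, h2, h3, h4⟩ := h𝕋 T hT
      exact ⟨h1, h2, h3, h4.trans sdiff_subset⟩
  · by_cases hvD : v ∈ D
    · exact ⟨_, mem_insert_self _ _, hQV ▸ mem_insert_of_mem hvD⟩
    · obtain ⟨T, hT, hvT⟩ := hcover v (mem_sdiff.2 ⟨hv, hvD⟩)
      exact ⟨T, mem_insert_of_mem hT, hvT⟩
  · intro T hT v hv hvz hvT
    exact (mem_sdiff.1 ((h𝕋 T hT).2.2.2 hvT)).2 ((mem_insert.1 hv).resolve_left hvz)

end GuardedForest

end CKM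

/-- **Lemma 4.4.** For any finite set `Cs` of points with `|Cs| ≥ ℓ`, there is a finite
family `𝕋` of neighborhood trees such that (T1) every tree has between `ℓ` and `ℓ²`
vertices, (T2) the vertex sets of the trees cover `Cs`, and (T3) the non-root vertex
sets of distinct trees are disjoint. -/
theorem stmt13 (X : Type) [PseudoMetricSpace X] (Cs : Finset X)
    (ℓ : ℕ) (hℓ : 0 < ℓ) (hCs : ℓ ≤ Cs.card) :
    ∃ 𝕋 : Finset (CKM.RootedTree X),
      (∀ T ∈ 𝕋, IsNeighborhoodTree Cs T ∧ ℓ ≤ T.V.card ∧ T.V.card ≤ ℓ ^ 2) ∧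
      (∀ v ∈ Cs, ∃ T ∈ 𝕋, v ∈ T.V) ∧
      (∀ T ∈ 𝕋, ∀ T' ∈ 𝕋, T ≠ T' →
        ∀ v ∈ T.V, v ≠ T.root → v ∈ T'.V → v = T'.root) := by
  obtain ⟨p, S, hG, hroots⟩ :=
    (GuardedForest.empty (p := id) (S := fun _ => ∅)).exists_spanning hℓ hCs (by simp [FullRoots])
  obtain ⟨𝕋, h𝕋, hcover, hdisj⟩ := hG.exists_partition hroots
  exact ⟨𝕋, fun T hT => ⟨(h𝕋 T hT).1, (h𝕋 T hT).2.1, (h𝕋 T hT).2.2.1⟩, hcover, hdisj⟩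
end

section
/- Let C* be a finite set of points in a metric space (X, d). Let T = (V, E, r) and T' = (V', E', r') be neighborhood trees with respect to C* with V ∩ V' = ∅, and suppose v* ∈ V' satisfies d(r, v*) = min_{w ∈ C* ∖ V} d(r, w). Then the rooted tree T'' = (V ∪ V', E ∪ E' ∪ {(r, v*)}, r'), in which v* becomes the parent of r, is a neighborhood tree with respect to C*. -/
open CKM

/-- **Merge step in the proof of Lemma 4.4.** If `T = (V, E, r)` and `T' = (V', E', r')`
are neighborhood trees with respect to `Cs` with disjoint vertex sets, and `v* ∈ V'`
is a nearest point of `Cs ∖ V` to `r`, then the tree `T''` on `V ∪ V'` rooted at `r'`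
obtained by adding the edge `(r, v*)` (making `v*` the parent of `r`, keeping all other
parent relations) is again a neighborhood tree with respect to `Cs`. -/
theorem stmt14 (X : Type) [PseudoMetricSpace X] [DecidableEq X] (Cs : Finset X)
    (T T' : CKM.RootedTree X)
    (hT : IsNeighborhoodTree Cs T) (hT' : IsNeighborhoodTree Cs T')
    (hdisj : ∀ v ∈ T.V, v ∉ T'.V)
    (vstar : X) (hvstar : vstar ∈ T'.V)
    (hmin : ∀ w ∈ Cs, w ∉ T.V → dist T.root vstar ≤ dist T.root w) :
    ∃ T'' : CKM.RootedTree X,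
      T''.V = T.V ∪ T'.V ∧
      T''.root = T'.root ∧
      T''.parent T.root = vstar ∧
      (∀ v ∈ T.V, v ≠ T.root → T''.parent v = T.parent v) ∧
      (∀ v ∈ T'.V, T''.parent v = T'.parent v) ∧
      IsNeighborhoodTree Cs T'' := by
  classical
  have hdisj' : ∀ v ∈ T'.V, v ∉ T.V := fun v hv hv' => hdisj v hv' hv
  set p : X → X := fun v =>
    if v ∈ T.V then (if v = T.root then vstar else T.parent v) else T'.parent v with hp
  have hproot : p T.root = vstar := by simp [hp, T.root_mem]
  have hpT : ∀ v ∈ T.V, v ≠ T.root → p v = T.parent v := by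
    intro v hv hvr; simp [hp, hv, hvr]
  have hpT' : ∀ v ∈ T'.V, p v = T'.parent v := by
    intro v hv; simp [hp, hdisj' v hv]
  -- p iterates agree with T'.parent iterates on T'.V
  have hiter' : ∀ n : ℕ, ∀ v ∈ T'.V, p^[n] v = T'.parent^[n] v := by
    intro n
    induction n with
    | zero => intro v hv; simp
    | succ n ih =>
      intro v hv
      rw [Function.iterate_succ_apply, Function.iterate_succ_apply, hpT' v hv]
      exact ih _ (T'.parent_mem v hv)
  -- p iterates agree with T.parent iterates along paths to a non-root target
  have hiterT : ∀ n : ℕ, ∀ v ∈ T.V, ∀ u, u ≠ T.root → T.parent^[n] v = u → p^[n] v = u := by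
    intro n
    induction n with
    | zero => intro v _ u _ h; simpa using h
    | succ n ih =>
      intro v hv u hu h
      have hvr : v ≠ T.root := by
        rintro rfl
        rw [Function.iterate_fixed T.parent_root] at h
        exact hu h.symm
      rw [Function.iterate_succ_apply] at h
      rw [Function.iterate_succ_apply, hpT v hv hvr]
      exact ih _ (T.parent_mem v hv) u hu h
  -- every vertex of T.V reaches T.root via p
  have hreach : ∀ n : ℕ, ∀ v ∈ T.V, T.parent^[n] v = T.root → ∃ m, p^[m] v = T.root := by
    intro n
    induction n with
    | zero => intro v _ h; exact ⟨0, h⟩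
    | succ n ih =>
      intro v hv h
      by_cases hvr : v = T.root
      · exact ⟨0, hvr⟩
      · rw [Function.iterate_succ_apply] at h
        obtain ⟨m, hm⟩ := ih (T.parent v) (T.parent_mem v hv) h
        exact ⟨m + 1, by rw [Function.iterate_succ_apply, hpT v hv hvr, hm]⟩
  have hreachT : ∀ v ∈ T.V, ∃ m, p^[m] v = T.root := by
    intro v hv
    obtain ⟨n, hn⟩ := T.reaches_root v hv
    exact hreach n v hv hn
  -- construct T''
  refine ⟨⟨T.V ∪ T'.V, T'.root, Finset.mem_union_right _ T'.root_mem, p, ?_, ?_, ?_⟩,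
    rfl, rfl, hproot, hpT, hpT', ?_, ?_⟩
  · intro v hv
    rcases Finset.mem_union.1 hv with hv | hv
    · by_cases hvr : v = T.root
      · rw [hvr, hproot]; exact Finset.mem_union_right _ hvstar
      · rw [hpT v hv hvr]; exact Finset.mem_union_left _ (T.parent_mem v hv)
    · rw [hpT' v hv]; exact Finset.mem_union_right _ (T'.parent_mem v hv)
  · rw [hpT' T'.root T'.root_mem, T'.parent_root]
  · intro v hv
    rcases Finset.mem_union.1 hv with hv | hv
    · obtain ⟨m, hm⟩ := hreachT v hv
      obtain ⟨k, hk⟩ := T'.reaches_root vstar hvstar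
      refine ⟨k + (m + 1), ?_⟩
      rw [Function.iterate_add_apply, Function.iterate_succ_apply', hm, hproot,
        hiter' k vstar hvstar, hk]
    · obtain ⟨k, hk⟩ := T'.reaches_root v hv
      exact ⟨k, by rw [hiter' k v hv, hk]⟩
  · intro v hv
    rcases Finset.mem_union.1 hv with hv | hv
    · exact hT.1 v hv
    · exact hT'.1 v hv
  · intro v hv hvr' w hw hws
    rcases Finset.mem_union.1 hv with hv | hv
    · by_cases hvr : v = T.root
      · subst hvr
        show dist T.root (p T.root) ≤ dist T.root w
        rw [hproot]
        refine hmin w hw ?_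
        intro hwV
        obtain ⟨m, hm⟩ := hreachT w hwV
        exact hws ⟨Finset.mem_union_left _ hwV, m, hm⟩
      · show dist v (p v) ≤ dist v w
        rw [hpT v hv hvr]
        refine hT.2 v hv hvr w hw ?_
        rintro ⟨hwV, n, hn⟩
        exact hws ⟨Finset.mem_union_left _ hwV, n, hiterT n w hwV v hvr hn⟩
    · have hvr : v ≠ T'.root := hvr'
      show dist v (p v) ≤ dist v w
      rw [hpT' v hv]
      refine hT'.2 v hv hvr w hw ?_
      rintro ⟨hwV, n, hn⟩
      exact hws ⟨Finset.mem_union_right _ hwV, n, by rw [hiter' n w hwV, hn]⟩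
end

section
/- Let L_1 ≤ L_2 ≤ ⋯ ≤ L_m be positive real numbers. Define the rank of each index by: rank(1) = 1, and for t ≥ 2, rank(t) = rank(t−1) if L_t ≤ 2·Σ_{s=1}^{t−1} L_s, and rank(t) = rank(t−1) + 1 otherwise. Then for any two indices t, t' ∈ {1, …, m} with rank(t) = rank(t'), L_t / L_{t'} ≤ 3^m. -/
/-!
Ranks never decrease, so between two indices `t' < t` of the same rank no new rank starts:
every `L s` with `t' < s ≤ t` is at most twice the sum of its predecessors. Hence the partial
sums grow by a factor of at most `3` per step from `t'` on, while the partial sum up to `t'` is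
at most `t' · L t' ≤ 3 ^ t' · L t' / 2` by sortedness.
-/

open Finset

lemma le_pow_mul_of_le_mul_succ {S : ℕ → ℝ} {c : ℝ} (hc : 0 ≤ c) {a b : ℕ} (hab : a ≤ b)
    (h : ∀ n, a ≤ n → n < b → S (n + 1) ≤ c * S n) : S b ≤ c ^ (b - a) * S a := by
  induction b, hab using Nat.le_induction with
  | base => simp
  | succ b hab ih =>
    calc S (b + 1) ≤ c * S b := h b hab (by omega)
      _ ≤ c * (c ^ (b - a) * S a) := by gcongr; exact ih fun n hn hnb ↦ h n hn (by omega)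
      _ = c ^ (b + 1 - a) * S a := by rw [Nat.sub_add_comm hab, pow_succ]; ring

lemma two_mul_sum_Icc_le_three_pow_mul {L : ℕ → ℝ} {n : ℕ} (hL : 0 ≤ L n)
    (hmono : ∀ s ∈ Icc 1 n, L s ≤ L n) : 2 * ∑ s ∈ Icc 1 n, L s ≤ 3 ^ n * L n := by
  have hsum : ∑ s ∈ Icc 1 n, L s ≤ n * L n := by
    simpa using sum_le_card_nsmul (Icc 1 n) L (L n) hmono
  have hpow : 2 * (n : ℝ) ≤ 3 ^ n := by
    have h := one_add_mul_le_pow (by norm_num : (-2 : ℝ) ≤ 2) n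
    norm_num at h
    linarith
  nlinarith

section Rank

variable {m : ℕ} {L : ℕ → ℝ} {rank : ℕ → ℕ}
  (hrank : ∀ t, 2 ≤ t → t ≤ m →
    rank t = if L t ≤ 2 * ∑ s ∈ Icc 1 (t - 1), L s then rank (t - 1) else rank (t - 1) + 1)
include hrank

lemma rank_monotoneOn : MonotoneOn rank (Set.Icc 1 m) := by
  refine monotoneOn_of_le_succ Set.ordConnected_Icc fun a _ ha ha' ↦ ?_
  simp only [Order.succ_eq_add_one, Set.mem_Icc] at ha ha' ⊢
  have h := hrank (a + 1) (by omega) ha'.2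
  simp only [Nat.add_sub_cancel] at h
  split at h <;> omega

lemma le_two_mul_sum_of_rank_eq {t' t s : ℕ} (ht' : 1 ≤ t') (hs : t' < s) (hst : s ≤ t)
    (htm : t ≤ m) (heq : rank t = rank t') : L s ≤ 2 * ∑ r ∈ Icc 1 (s - 1), L r := by
  have hmono := rank_monotoneOn hrank
  have h₁ : rank t' ≤ rank (s - 1) := hmono ⟨ht', by omega⟩ ⟨by omega, by omega⟩ (by omega)
  have h₂ : rank s ≤ rank t := hmono ⟨by omega, by omega⟩ ⟨by omega, htm⟩ hst
  have h := hrank s (by omega) (by omega)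
  split at h
  · assumption
  · omega

end Rank

theorem stmt15_general (m : ℕ) (L : ℕ → ℝ)
    (hpos : ∀ t, 1 ≤ t → t ≤ m → 0 < L t)
    (hsort : ∀ t, 1 ≤ t → t + 1 ≤ m → L t ≤ L (t + 1))
    (rank : ℕ → ℕ)
    (hrank : ∀ t, 2 ≤ t → t ≤ m →
      rank t = if L t ≤ 2 * ∑ s ∈ Finset.Icc 1 (t - 1), L s
        then rank (t - 1) else rank (t - 1) + 1)
    (t t' : ℕ) (ht1 : 1 ≤ t) (htm : t ≤ m) (ht'1 : 1 ≤ t') (ht'm : t' ≤ m)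
    (heq : rank t = rank t') :
    L t / L t' ≤ 3 ^ m := by
  have hL : MonotoneOn L (Set.Icc 1 m) :=
    monotoneOn_of_le_succ Set.ordConnected_Icc fun a _ ha ha' ↦ hsort a ha.1 ha'.2
  have hLt' : 0 < L t' := hpos t' ht'1 ht'm
  rw [div_le_iff₀ hLt']
  rcases le_or_gt t t' with hle | hlt
  · calc L t ≤ L t' := hL ⟨ht1, htm⟩ ⟨ht'1, ht'm⟩ hle
      _ ≤ 3 ^ m * L t' := le_mul_of_one_le_left hLt'.le (one_le_pow₀ (by norm_num))
  set S : ℕ → ℝ := fun n ↦ ∑ s ∈ Icc 1 n, L s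
  have hgrowth : S (t - 1) ≤ 3 ^ (t - 1 - t') * S t' := by
    refine le_pow_mul_of_le_mul_succ (by norm_num) (by omega) fun n hn hnt ↦ ?_
    have hstep := le_two_mul_sum_of_rank_eq hrank ht'1 (by omega : t' < n + 1) (by omega) htm heq
    simp only [S, sum_Icc_succ_top (by omega : 1 ≤ n + 1), Nat.add_sub_cancel] at hstep ⊢
    linarith
  have hbase : 2 * S t' ≤ 3 ^ t' * L t' :=
    two_mul_sum_Icc_le_three_pow_mul hLt'.le fun s hs ↦
      hL ⟨(mem_Icc.1 hs).1, (mem_Icc.1 hs).2.trans ht'm⟩ ⟨ht'1, ht'm⟩ (mem_Icc.1 hs).2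
  calc L t ≤ 2 * S (t - 1) := le_two_mul_sum_of_rank_eq hrank ht'1 hlt le_rfl htm heq
    _ ≤ 3 ^ (t - 1 - t') * (2 * S t') := by linarith
    _ ≤ 3 ^ (t - 1 - t') * (3 ^ t' * L t') := by gcongr
    _ = 3 ^ (t - 1) * L t' := by rw [← mul_assoc, ← pow_add, Nat.sub_add_cancel (by omega)]
    _ ≤ 3 ^ m * L t' := by gcongr <;> [norm_num; omega]

/-- **Claim 4.5.** Let `L 1 ≤ L 2 ≤ ⋯ ≤ L m` be positive reals, and define ranks by
`rank 1 = 1` and, for `t ≥ 2`, `rank t = rank (t−1)` if `L t ≤ 2·Σ_{s=1}^{t−1} L s`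
and `rank t = rank (t−1) + 1` otherwise. Then any two indices of the same rank have
lengths within a factor `3^m` of each other. -/
theorem stmt15 (m : ℕ) (hm : 0 < m) (L : ℕ → ℝ)
    (hpos : ∀ t, 1 ≤ t → t ≤ m → 0 < L t)
    (hsort : ∀ t, 1 ≤ t → t + 1 ≤ m → L t ≤ L (t + 1))
    (rank : ℕ → ℕ) (hrank1 : rank 1 = 1)
    (hrank : ∀ t, 2 ≤ t → t ≤ m →
      rank t = if L t ≤ 2 * ∑ s ∈ Finset.Icc 1 (t - 1), L s
        then rank (t - 1) else rank (t - 1) + 1)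
    (t t' : ℕ) (ht1 : 1 ≤ t) (htm : t ≤ m) (ht'1 : 1 ≤ t') (ht'm : t' ≤ m)
    (heq : rank t = rank t') :
    L t / L t' ≤ 3 ^ m :=
  stmt15_general m L hpos hsort rank hrank t t' ht1 htm ht'1 ht'm heq
end

section
/- Let C* be a finite set of points in a metric space (X, d) and let T = (V, E, r) be a neighborhood tree with respect to C*. Let E₀ ⊆ E, let L = Σ_{e∈E₀} L_e be the total length of the edges in E₀ (where the length of an edge e = (v, v') is L_e = d(v, v')), and let L' > 0 be a real number with L' ≥ 2L such that every edge in E ∖ E₀ has length at least L'. Let A ⊆ V be the vertex set of a connected component of the graph (V, E₀) with r ∉ A. Then d(A, C* ∖ A) ≥ L'/2. -/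
/-!
Let `t` be the first ancestor of `a` outside `W`. The path from `a` up to `t` uses only edges
of `E₀`, each at most once, so `d(a, t) ≤ L`; it also shows `t ∈ A`, so `t` is not the root and
its parent edge has length at least `L'`. If `b` lies outside the subtree of `t`, the
neighborhood property at `t` gives `d(t, b) ≥ L'`. Otherwise let `s` be the first ancestor of `b`
outside `W`: it differs from `t` since `b ∉ A`, so it is a proper descendant of `t`, `a` lies
outside its subtree, and the same argument runs at `s` with `a` and `b` exchanged. Either way
`d(a, b) ≥ L' - L ≥ L'/2`.
-/

open CKM

theorem Function.iterate_sub_apply_of_forall_lt_mem {α : Type*} {f : α → α} {s : Set α}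
    {x : α} {n j : ℕ} (hmem : ∀ i < n, f^[i] x ∈ s) (hj : f^[j] x ∉ s) :
    f^[j - n] (f^[n] x) = f^[j] x := by
  have hnj : n ≤ j := by
    by_contra! h
    exact hj (hmem j h)
  rw [← Function.iterate_add_apply, Nat.sub_add_cancel hnj]

namespace CKM.RootedTree

variable {X : Type} (T : RootedTree X)

-- `Relation.SymmGen (T.EdgeIn W)` unfolds to the adjacency relation of `(V, E₀)` in `stmt16`.
def EdgeIn (W : Finset X) (v w : X) : Prop :=
  v ∈ W ∧ T.parent v = w

variable {T}

theorem iterate_parent_mem {x : X} (hx : x ∈ T.V) (n : ℕ) : T.parent^[n] x ∈ T.V := by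
  induction n with
  | zero => exact hx
  | succ n ih => rw [Function.iterate_succ_apply']; exact T.parent_mem _ ih

theorem iterate_parent_root (n : ℕ) : T.parent^[n] T.root = T.root :=
  Function.iterate_fixed T.parent_root n

theorem eq_root_of_iterate_parent_eq {x : X} (hx : x ∈ T.V) {m : ℕ} (hm : 0 < m)
    (h : T.parent^[m] x = x) : x = T.root := by
  obtain ⟨N, hN⟩ := T.reaches_root x hx
  have hperiodic : T.parent^[N * m] x = x := (Function.IsPeriodicPt.const_mul h N).eq
  rw [← hperiodic, ← Nat.sub_add_cancel (Nat.le_mul_of_pos_right N hm),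
    Function.iterate_add_apply, hN, iterate_parent_root]

theorem eq_of_iterate_parent_eq {u v : X} (hv : v ∈ T.V) (hvr : v ≠ T.root) {m k : ℕ}
    (huv : T.parent^[m] u = v) (hvu : T.parent^[k] v = u) : u = v := by
  rcases Nat.eq_zero_or_pos (m + k) with h | h
  · simpa [show m = 0 by omega] using huv
  · refine absurd (eq_root_of_iterate_parent_eq hv h ?_) hvr
    rw [Function.iterate_add_apply, hvu, huv]

theorem exists_first_iterate_parent_not_mem {x : X} (hx : x ∈ T.V) {W : Finset X}
    (hW : T.root ∉ W) : ∃ n, T.parent^[n] x ∉ W ∧ ∀ j < n, T.parent^[j] x ∈ W := by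
  classical
  have h : ∃ n, T.parent^[n] x ∉ W := by
    obtain ⟨N, hN⟩ := T.reaches_root x hx
    exact ⟨N, hN ▸ hW⟩
  exact ⟨Nat.find h, Nat.find_spec h, fun j hj => not_not.mp (Nat.find_min h hj)⟩

theorem injOn_iterate_parent {x : X} (hx : x ∈ T.V) {n : ℕ}
    (hn : ∀ j < n, T.parent^[j] x ≠ T.root) :
    Set.InjOn (fun j => T.parent^[j] x) (Set.Iio n) := by
  intro i hi j hj hij
  wlog hle : i ≤ j generalizing i j
  · exact (this hj hi hij.symm (by omega)).symm
  obtain rfl | hlt := hle.eq_or_lt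
  · rfl
  have hcycle : T.parent^[j - i] (T.parent^[i] x) = T.parent^[i] x := by
    rw [← Function.iterate_add_apply, Nat.sub_add_cancel hlt.le]
    exact hij.symm
  exact absurd (eq_root_of_iterate_parent_eq (iterate_parent_mem hx i) (by omega) hcycle)
    (hn i hi)

theorem reflTransGen_iterate_parent {W : Finset X} {x : X} {n : ℕ}
    (hn : ∀ j < n, T.parent^[j] x ∈ W) :
    Relation.ReflTransGen (Relation.SymmGen (T.EdgeIn W)) x (T.parent^[n] x) := by
  induction n with
  | zero => exact .refl
  | succ n ih =>
    refine (ih fun j hj => hn j (by omega)).tail (.of_rel ⟨hn n (by omega), ?_⟩)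
    exact (Function.iterate_succ_apply' _ _ _).symm

theorem dist_iterate_parent_le_sum [PseudoMetricSpace X] {W : Finset X} (hW : T.root ∉ W)
    {x : X} (hx : x ∈ T.V) {n : ℕ} (hn : ∀ j < n, T.parent^[j] x ∈ W) :
    dist x (T.parent^[n] x) ≤ ∑ v ∈ W, dist v (T.parent v) := by
  classical
  have hinj : Set.InjOn (fun j => T.parent^[j] x) (Finset.range n) := by
    simpa only [Finset.coe_range] using
      injOn_iterate_parent hx fun j hj h => hW (h ▸ hn j hj)
  calc dist x (T.parent^[n] x)
      ≤ ∑ j ∈ Finset.range n, dist (T.parent^[j] x) (T.parent^[j + 1] x) :=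
        dist_le_range_sum_dist (fun j => T.parent^[j] x) n
    _ = ∑ v ∈ (Finset.range n).image (fun j => T.parent^[j] x), dist v (T.parent v) := by
        rw [Finset.sum_image hinj]
        simp only [Function.iterate_succ_apply']
    _ ≤ ∑ v ∈ W, dist v (T.parent v) := by
        refine Finset.sum_le_sum_of_subset_of_nonneg ?_ fun _ _ _ => dist_nonneg
        intro v hv
        obtain ⟨j, hj, rfl⟩ := Finset.mem_image.mp hv
        exact hn j (Finset.mem_range.mp hj)

theorem notMem_subtree_of_descendant_of_exit {W : Finset X} {a s : X} {n m : ℕ}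
    (ha : a ∈ T.V) (hn : ∀ j < n, T.parent^[j] a ∈ W) (hs : s ∉ W)
    (hst : T.parent^[m] s = T.parent^[n] a) (hne : s ≠ T.parent^[n] a)
    (hr : T.parent^[n] a ≠ T.root) : a ∉ T.subtree s := by
  rintro ⟨-, j, hj⟩
  have hts : T.parent^[j - n] (T.parent^[n] a) = s :=
    (Function.iterate_sub_apply_of_forall_lt_mem hn (hj ▸ hs)).trans hj
  exact hne (eq_of_iterate_parent_eq (iterate_parent_mem ha n) hr hst hts)

end CKM.RootedTree

theorem CKM.IsNeighborhoodTree.dist_parent_le_dist_add {X : Type} [PseudoMetricSpace X]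
    {Cs : Finset X} {T : RootedTree X} (hT : IsNeighborhoodTree Cs T) {u y : X} (x : X)
    (hu : u ∈ T.V) (hur : u ≠ T.root) (hy : y ∈ Cs) (huy : y ∉ T.subtree u) :
    dist u (T.parent u) ≤ dist x u + dist x y :=
  (hT.2 u hu hur y hy huy).trans (dist_triangle_left u y x)

open RootedTree in
theorem stmt16_general (X : Type) [PseudoMetricSpace X] (Cs : Finset X)
    (T : CKM.RootedTree X) (hT : IsNeighborhoodTree Cs T)
    (W : Finset X) (hW : ∀ v ∈ W, v ∈ T.V ∧ v ≠ T.root)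
    (L : ℝ) (hL : L = ∑ v ∈ W, dist v (T.parent v))
    (L' : ℝ) (hL'L : 2 * L ≤ L')
    (hlong : ∀ v ∈ T.V, v ≠ T.root → v ∉ W → L' ≤ dist v (T.parent v))
    (A : Finset X) (hAV : ∀ a ∈ A, a ∈ T.V)
    (hroot : T.root ∉ A)
    -- `A` is the vertex set of a connected component of the graph `(V, E₀)`:
    -- a point is in `A` iff it is reachable from a point of `A` by edges of `E₀`.
    (hcomp : ∀ a ∈ A, ∀ b : X,
      Relation.ReflTransGen
        (fun p q : X => (p ∈ W ∧ T.parent p = q) ∨ (q ∈ W ∧ T.parent q = p)) a b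
      ↔ b ∈ A) :
    ∀ a ∈ A, ∀ b ∈ Cs, b ∉ A → L' / 2 ≤ dist a b := by
  intro a ha b hb hbA
  have hWr : T.root ∉ W := fun h => (hW _ h).2 rfl
  have haV := hAV a ha
  obtain ⟨n, hnW, hn⟩ := exists_first_iterate_parent_not_mem haV hWr
  have hat := reflTransGen_iterate_parent hn
  set t := T.parent^[n] a
  have htr : t ≠ T.root := fun h => hroot (h ▸ (hcomp a ha t).mp hat)
  have hdat : dist a t ≤ L := hL ▸ dist_iterate_parent_le_sum hWr haV hn
  have htlong := hlong t (iterate_parent_mem haV n) htr hnW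
  by_cases hbt : b ∈ T.subtree t
  · obtain ⟨hbV, m, hm⟩ := hbt
    obtain ⟨k, hkW, hk⟩ := exists_first_iterate_parent_not_mem hbV hWr
    have hbs := reflTransGen_iterate_parent hk
    set s := T.parent^[k] b
    have hst : s ≠ t := by
      intro h
      rw [h] at hbs
      exact hbA ((hcomp a ha b).mp (hat.trans (Std.Symm.symm _ _ hbs)))
    have hts : T.parent^[m - k] s = t :=
      (Function.iterate_sub_apply_of_forall_lt_mem hk (by rwa [hm])).trans hm
    have hsr : s ≠ T.root := fun h => htr (by rw [← hts, h, iterate_parent_root])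
    have has := notMem_subtree_of_descendant_of_exit haV hn hkW hts hst htr
    have hdbs : dist b s ≤ L := hL ▸ dist_iterate_parent_le_sum hWr hbV hk
    have hsa := hT.dist_parent_le_dist_add b (iterate_parent_mem hbV k) hsr (hT.1 a haV) has
    have hslong := hlong s (iterate_parent_mem hbV k) hsr hkW
    linarith [dist_comm a b]
  · have htb := hT.dist_parent_le_dist_add a (iterate_parent_mem haV n) htr hb hbt
    linarith

/-- **Claim 4.6.** Let `T = (V, E, r)` be a neighborhood tree with respect to `Cs`.
Identify each edge of `T` with its lower endpoint, so that a subset `E₀ ⊆ E` is a set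
`W` of non-root vertices (the edge associated with `v` being `(v, ρ_T(v))`, of length
`d(v, ρ_T(v))`). Let `L` be the total length of the edges in `E₀`, and let `L' > 0`
satisfy `L' ≥ 2L` with every edge of `E ∖ E₀` of length at least `L'`. If `A` is the
vertex set of a connected component of `(V, E₀)` with `r ∉ A`, then
`d(A, Cs ∖ A) ≥ L'/2`. -/
theorem stmt16 (X : Type) [PseudoMetricSpace X] (Cs : Finset X)
    (T : CKM.RootedTree X) (hT : IsNeighborhoodTree Cs T)
    (W : Finset X) (hW : ∀ v ∈ W, v ∈ T.V ∧ v ≠ T.root)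
    (L : ℝ) (hL : L = ∑ v ∈ W, dist v (T.parent v))
    (L' : ℝ) (hL'pos : 0 < L') (hL'L : 2 * L ≤ L')
    (hlong : ∀ v ∈ T.V, v ≠ T.root → v ∉ W → L' ≤ dist v (T.parent v))
    (A : Finset X) (hAne : A.Nonempty) (hAV : ∀ a ∈ A, a ∈ T.V)
    (hroot : T.root ∉ A)
    -- `A` is the vertex set of a connected component of the graph `(V, E₀)`:
    -- a point is in `A` iff it is reachable from a point of `A` by edges of `E₀`.
    (hcomp : ∀ a ∈ A, ∀ b : X,
      Relation.ReflTransGen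
        (fun p q : X => (p ∈ W ∧ T.parent p = q) ∨ (q ∈ W ∧ T.parent q = p)) a b
      ↔ b ∈ A) :
    ∀ a ∈ A, ∀ b ∈ Cs, b ∉ A → L' / 2 ≤ dist a b :=
  stmt16_general X Cs T hT W hW L hL L' hL'L hlong A hAV hroot hcomp
end

section
/- Let ℓ ≥ 2 be an integer, let V be a finite set with |V| ≥ ℓ, let r ∈ V, and let α, β : V → ℝ≥0 satisfy: α_r ≤ β_r; β_v ≥ ⌈α_v⌉ − 1/ℓ for every v ∈ V ∖ {r}; and Σ_{v∈V} β_v ≥ (|V| − 1)·(1 − 1/ℓ). Then Σ_{v∈V} ⌈α_v⌉ ≤ (1 + (2ℓ−1)/(ℓ−1)²)·Σ_{v∈V} β_v. -/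
/-!
Every non-root ceiling exceeds its supply by at most `1/ℓ` and the root ceiling by less than `1`,
so `Σ ⌈α_v⌉ ≤ Σ β_v + (|V| - 1)/ℓ + 1`. The excess `(|V| - 1)/ℓ + 1` is absorbed into
`(2ℓ - 1)/(ℓ - 1)² · Σ β_v` using `Σ β_v ≥ (|V| - 1)(1 - 1/ℓ)` and `|V| - 1 ≥ ℓ - 1`.
-/

open Finset

theorem Finset.sum_ceil_le_sum_add_of_root {ι : Type*} {s : Finset ι} {r : ι} (hr : r ∈ s)
    {a b : ι → ℝ} {δ : ℝ} (har : a r ≤ b r) (hab : ∀ v ∈ s, v ≠ r → (⌈a v⌉ : ℝ) - δ ≤ b v) :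
    ∑ v ∈ s, (⌈a v⌉ : ℝ) ≤ ∑ v ∈ s, b v + ((#s : ℝ) - 1) * δ + 1 := by
  classical
  have hroot : (⌈a r⌉ : ℝ) ≤ b r + 1 := by linarith [Int.ceil_lt_add_one (a r)]
  have hrest : ∑ v ∈ s.erase r, (⌈a v⌉ : ℝ) ≤ ∑ v ∈ s.erase r, (b v + δ) :=
    sum_le_sum fun v hv ↦ by
      linarith [hab v (mem_of_mem_erase hv) (ne_of_mem_erase hv)]
  have hcard : ((#(s.erase r) : ℕ) : ℝ) = #s - 1 := by
    rw [← card_erase_add_one hr]; push_cast; ring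
  rw [sum_add_distrib, sum_const, nsmul_eq_mul, hcard] at hrest
  rw [← add_sum_erase s _ hr, ← add_sum_erase s _ hr]
  linarith

theorem add_div_add_one_le_mul_of_le {ℓ m S : ℝ} (hℓ : 1 < ℓ) (hm : ℓ - 1 ≤ m)
    (hS : m * (1 - 1 / ℓ) ≤ S) :
    S + m / ℓ + 1 ≤ (1 + (2 * ℓ - 1) / (ℓ - 1) ^ 2) * S := by
  have hℓ1 : 0 < ℓ - 1 := by linarith
  have hc : 0 ≤ (2 * ℓ - 1) / (ℓ - 1) ^ 2 :=
    div_nonneg (by linarith) (by positivity)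
  have hexcess : m / ℓ + 1 ≤ (2 * ℓ - 1) / (ℓ - 1) ^ 2 * (m * (1 - 1 / ℓ)) := by
    have hm1 : 1 ≤ m / (ℓ - 1) := (one_le_div hℓ1).2 hm
    have hsplit : (2 * ℓ - 1) / (ℓ - 1) ^ 2 * (m * (1 - 1 / ℓ)) = m / ℓ + m / (ℓ - 1) := by
      field_simp; ring
    linarith
  linarith [mul_le_mul_of_nonneg_left hS hc]

theorem stmt17_general (α : Type) (ℓ : ℕ) (hℓ : 2 ≤ ℓ)
    (V : Finset α) (hV : ℓ ≤ V.card) (r : α) (hr : r ∈ V)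
    (a b : α → ℝ)
    (har : a r ≤ b r)
    (hab : ∀ v ∈ V, v ≠ r → (⌈a v⌉ : ℝ) - 1 / (ℓ : ℝ) ≤ b v)
    (hsum : ((V.card : ℝ) - 1) * (1 - 1 / (ℓ : ℝ)) ≤ ∑ v ∈ V, b v) :
    ∑ v ∈ V, (⌈a v⌉ : ℝ) ≤
      (1 + (2 * (ℓ : ℝ) - 1) / ((ℓ : ℝ) - 1) ^ 2) * ∑ v ∈ V, b v := by
  have hℓR : (1 : ℝ) < ℓ := by exact_mod_cast hℓ
  have hVR : (ℓ : ℝ) - 1 ≤ (V.card : ℝ) - 1 := by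
    have : (ℓ : ℝ) ≤ V.card := by exact_mod_cast hV
    linarith
  calc ∑ v ∈ V, (⌈a v⌉ : ℝ)
      ≤ ∑ v ∈ V, b v + ((V.card : ℝ) - 1) * (1 / ℓ) + 1 := sum_ceil_le_sum_add_of_root hr har hab
    _ = ∑ v ∈ V, b v + ((V.card : ℝ) - 1) / ℓ + 1 := by rw [mul_one_div]
    _ ≤ _ := add_div_add_one_le_mul_of_le hℓR hVR hsum

/-- **Facility-counting inequality at the end of Section 4.4 (case `|C*| ≥ ℓ`).**
If `a r ≤ b r`, `b v ≥ ⌈a v⌉ − 1/ℓ` for every non-root `v`, and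
`Σ_v b v ≥ (|V|−1)(1−1/ℓ)` with `|V| ≥ ℓ`, then
`Σ_v ⌈a v⌉ ≤ (1 + (2ℓ−1)/(ℓ−1)²)·Σ_v b v`. -/
theorem stmt17 (α : Type) (ℓ : ℕ) (hℓ : 2 ≤ ℓ)
    (V : Finset α) (hV : ℓ ≤ V.card) (r : α) (hr : r ∈ V)
    (a b : α → ℝ)
    (ha0 : ∀ v ∈ V, 0 ≤ a v) (hb0 : ∀ v ∈ V, 0 ≤ b v)
    (har : a r ≤ b r)
    (hab : ∀ v ∈ V, v ≠ r → (⌈a v⌉ : ℝ) - 1 / (ℓ : ℝ) ≤ b v)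
    (hsum : ((V.card : ℝ) - 1) * (1 - 1 / (ℓ : ℝ)) ≤ ∑ v ∈ V, b v) :
    ∑ v ∈ V, (⌈a v⌉ : ℝ) ≤
      (1 + (2 * (ℓ : ℝ) - 1) / ((ℓ : ℝ) - 1) ^ 2) * ∑ v ∈ V, b v :=
  stmt17_general α ℓ hℓ V hV r hr a b har hab hsum
end

section
/- Let ℓ ≥ 2 be an integer, let V be a finite nonempty set with |V| ≤ ℓ − 1, let r ∈ V, let k be a nonnegative integer, and let α, β : V → ℝ≥0 satisfy: α_r ≤ β_r; β_v ≥ ⌈α_v⌉ − 1/ℓ for every v ∈ V ∖ {r}; and Σ_{v∈V} β_v ≤ k. Then Σ_{v∈V} ⌈α_v⌉ ≤ k + 1. -/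
/-!
Rounding up costs less than `1` at the root and at most `1/ℓ` at each of the fewer than `ℓ`
other vertices, so `∑ ⌈a v⌉ < ∑ b v + 2 ≤ k + 2`, an integer bound.
-/

open Finset

theorem sum_ceil_lt_sum_add_one_add_card_mul {ι : Type*} [DecidableEq ι] {s : Finset ι}
    {r : ι} (hr : r ∈ s) {a b : ι → ℝ} {ε : ℝ} (har : a r ≤ b r)
    (hab : ∀ v ∈ s, v ≠ r → (⌈a v⌉ : ℝ) - ε ≤ b v) :
    ∑ v ∈ s, (⌈a v⌉ : ℝ) < ∑ v ∈ s, b v + 1 + (s.erase r).card * ε := by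
  rw [← add_sum_erase s _ hr, ← add_sum_erase s _ hr]
  have hroot : (⌈a r⌉ : ℝ) < b r + 1 := (Int.ceil_lt_add_one _).trans_le (by linarith)
  have hrest : ∑ v ∈ s.erase r, (⌈a v⌉ : ℝ) ≤ ∑ v ∈ s.erase r, (b v + ε) :=
    sum_le_sum fun v hv => by
      linarith [hab v (mem_of_mem_erase hv) (ne_of_mem_erase hv)]
  rw [sum_add_distrib, sum_const, nsmul_eq_mul] at hrest
  linarith

theorem stmt18_general (α : Type) (ℓ : ℕ)
    (V : Finset α) (hV : V.card ≤ ℓ - 1)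
    (r : α) (hr : r ∈ V) (k : ℕ)
    (a b : α → ℝ)
    (har : a r ≤ b r)
    (hab : ∀ v ∈ V, v ≠ r → (⌈a v⌉ : ℝ) - 1 / (ℓ : ℝ) ≤ b v)
    (hsum : ∑ v ∈ V, b v ≤ (k : ℝ)) :
    ∑ v ∈ V, ⌈a v⌉ ≤ (k : ℤ) + 1 := by
  classical
  have hcard : (V.erase r).card < ℓ := by
    have := card_erase_add_one hr
    omega
  have hℓ : (0 : ℝ) < ℓ := by exact_mod_cast (Nat.zero_le _).trans_lt hcard
  have hslack : ((V.erase r).card : ℝ) * (1 / ℓ) < 1 := by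
    rw [mul_one_div, div_lt_one hℓ]
    exact_mod_cast hcard
  have hlt : ((∑ v ∈ V, ⌈a v⌉ : ℤ) : ℝ) < (k : ℤ) + 2 := by
    push_cast
    linarith [sum_ceil_lt_sum_add_one_add_card_mul hr har hab]
  have hlt_int : ∑ v ∈ V, ⌈a v⌉ < (k : ℤ) + 2 := by exact_mod_cast hlt
  omega

/-- **Facility-counting inequality at the end of Section 4.4 (case `|C*| < ℓ`).**
If `|V| ≤ ℓ − 1`, `a r ≤ b r`, `b v ≥ ⌈a v⌉ − 1/ℓ` for every non-root `v`, and
`Σ_v b v ≤ k`, then `Σ_v ⌈a v⌉ ≤ k + 1`. -/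
theorem stmt18 (α : Type) (ℓ : ℕ) (hℓ : 2 ≤ ℓ)
    (V : Finset α) (hVne : V.Nonempty) (hV : V.card ≤ ℓ - 1)
    (r : α) (hr : r ∈ V) (k : ℕ)
    (a b : α → ℝ)
    (ha0 : ∀ v ∈ V, 0 ≤ a v) (hb0 : ∀ v ∈ V, 0 ≤ b v)
    (har : a r ≤ b r)
    (hab : ∀ v ∈ V, v ≠ r → (⌈a v⌉ : ℝ) - 1 / (ℓ : ℝ) ≤ b v)
    (hsum : ∑ v ∈ V, b v ≤ (k : ℝ)) :
    ∑ v ∈ V, ⌈a v⌉ ≤ (k : ℤ) + 1 :=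
  stmt18_general α ℓ V hV r hr k a b har hab hsum
end

section
/- Let u ≥ 2 be an integer. Consider u(u+1) points partitioned into u groups of u+1 points each, with the pseudometric d in which two points at distance 0 if they lie in the same group and at distance 1 otherwise; every point is both a client and a potential facility location. Let m ≤ 2u − 1, let loc : {1, …, m} → {1, …, u} assign each of m open facilities to a group, and let σ be an assignment of the u(u+1) clients to the m facilities such that each facility serves at most u clients. Then the total connection cost is at least 1; equivalently, some client is assigned to a facility in a different group. -/
/-- **The integrality gap instance of Section 2.** There are `u` groups of `u + 1`
co-located clients each (client `(g, i)` lies in group `g`), with distance `0` inside a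
group and `1` between groups. If at most `2u − 1` facilities are opened (facility `i`
lying in group `loc i`) and each facility serves at most `u` clients, then the total
connection cost is at least `1`; equivalently, some client is assigned to a facility in
a different group. -/
theorem stmt19 (u : ℕ) (hu : 2 ≤ u) (m : ℕ) (hm : m ≤ 2 * u - 1)
    (loc : Fin m → Fin u)
    (σ : Fin u × Fin (u + 1) → Fin m)
    (hcap : ∀ i : Fin m,
      (Finset.univ.filter (fun j : Fin u × Fin (u + 1) => σ j = i)).card ≤ u) :
    (1 : ℝ) ≤ (∑ j : Fin u × Fin (u + 1), if loc (σ j) = j.1 then (0 : ℝ) else 1) ∧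
      ∃ j : Fin u × Fin (u + 1), loc (σ j) ≠ j.1 := by
  have hex : ∃ j : Fin u × Fin (u + 1), loc (σ j) ≠ j.1 := by
    by_contra h
    push_neg at h
    -- every group has at least 2 facilities
    have hgrp : ∀ g : Fin u,
        2 ≤ (Finset.univ.filter (fun i : Fin m => loc i = g)).card := by
      intro g
      by_contra hlt
      push_neg at hlt
      -- clients of group g
      set C : Finset (Fin u × Fin (u + 1)) :=
        Finset.univ.filter (fun j => j.1 = g) with hC
      have hCcard : C.card = u + 1 := by
        have : C = {g} ×ˢ (Finset.univ : Finset (Fin (u + 1))) := by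
          ext j
          simp only [hC, Finset.mem_filter, Finset.mem_univ, true_and,
            Finset.mem_product, Finset.mem_singleton]
          constructor
          · intro hj; exact ⟨hj, trivial⟩
          · intro hj; exact hj.1
        rw [this]
        simp
      have himg : C.image σ ⊆ Finset.univ.filter (fun i : Fin m => loc i = g) := by
        intro i hi
        simp only [Finset.mem_image] at hi
        obtain ⟨j, hj, rfl⟩ := hi
        simp only [hC, Finset.mem_filter] at hj
        simp [h j, hj.2]
      have hcount : C.card ≤ u * (C.image σ).card := by
        apply Finset.card_le_mul_card_image
        intro a _
        calc (C.filter fun j => σ j = a).card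
            ≤ (Finset.univ.filter (fun j : Fin u × Fin (u + 1) => σ j = a)).card := by
              apply Finset.card_le_card
              intro j hj
              simp only [Finset.mem_filter] at hj ⊢
              exact ⟨Finset.mem_univ _, hj.2⟩
          _ ≤ u := hcap a
      have h1 : (C.image σ).card ≤ 1 := by
        have := Finset.card_le_card himg
        omega
      have : u + 1 ≤ u * 1 := by
        calc u + 1 = C.card := hCcard.symm
          _ ≤ u * (C.image σ).card := hcount
          _ ≤ u * 1 := Nat.mul_le_mul_left u h1
      omega
    have hsum : m = ∑ g : Fin u, (Finset.univ.filter (fun i : Fin m => loc i = g)).card := by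
      have := Finset.card_eq_sum_card_fiberwise
        (f := loc) (s := Finset.univ) (t := Finset.univ) (fun x _ => Finset.mem_univ _)
      simpa using this
    have : 2 * u ≤ m := by
      rw [hsum]
      calc 2 * u = ∑ _g : Fin u, 2 := by simp [mul_comm]
        _ ≤ _ := Finset.sum_le_sum (fun g _ => hgrp g)
    omega
  refine ⟨?_, hex⟩
  obtain ⟨j, hj⟩ := hex
  calc (1 : ℝ) = if loc (σ j) = j.1 then (0 : ℝ) else 1 := by simp [hj]
    _ ≤ _ := by
        apply Finset.single_le_sum (f := fun j : Fin u × Fin (u + 1) =>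
          if loc (σ j) = j.1 then (0 : ℝ) else 1) (fun k _ => by positivity) (Finset.mem_univ j)
end
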